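/- arXiv:1712.03593 — 8 statements merged into one kernel-verified Lean document; each statement's English description precedes it below -/
import Mathlib

section
/- Let U ⊆ ℝ³ be an open set and φ : U → ℂ a smooth biharmonic function (i.e. both the real and imaginary parts of φ are biharmonic). Then f ∘ φ is biharmonic on φ^{-1}(V) for every open V ⊆ ℂ and every holomorphic function f : V → ℂ if and only if φ satisfies Σ_{i=1}^{3} (∂φ/∂x_i)² = 0 on U and the function φ² : U → ℂ is biharmonic. -/
open scoped BigOperators RealInnerProductSpace

noncomputable section

/-- `m`-dimensional Euclidean space. -/
abbrev E (m : ℕ) := EuclideanSpace ℝ (Fin m)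

/-- The Euclidean Laplacian of a real-valued function: the sum of the second
partial derivatives in the coordinate directions. -/
noncomputable def lap {m : ℕ} (f : E m → ℝ) (x : E m) : ℝ :=
  ∑ i : Fin m,
    fderiv ℝ (fun y => fderiv ℝ f y (EuclideanSpace.single i 1)) x (EuclideanSpace.single i 1)

/-- The Euclidean Laplacian of a complex-valued function (applied componentwise). -/
noncomputable def lapC {m : ℕ} (f : E m → ℂ) (x : E m) : ℂ :=
  ∑ i : Fin m,
    fderiv ℝ (fun y => fderiv ℝ f y (EuclideanSpace.single i 1)) x (EuclideanSpace.single i 1)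

/-- A (smooth) harmonic function on a set: `Δ f = 0` there. -/
def HarmonicOn {m : ℕ} (f : E m → ℝ) (s : Set (E m)) : Prop :=
  ContDiffOn ℝ (⊤ : ℕ∞) f s ∧ ∀ x ∈ s, lap f x = 0

/-- A (smooth) biharmonic function on a set: `Δ (Δ f) = 0` there. -/
def BiharmonicOn {m : ℕ} (f : E m → ℝ) (s : Set (E m)) : Prop :=
  ContDiffOn ℝ (⊤ : ℕ∞) f s ∧ ∀ x ∈ s, lap (lap f) x = 0

/-- A generalized harmonic morphism on `U`: it pulls back every harmonic function on an
open set `V` of the target to a biharmonic function on `U ∩ φ ⁻¹' V`. -/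
def IsGHM {m n : ℕ} (φ : E m → E n) (U : Set (E m)) : Prop :=
  ∀ V : Set (E n), IsOpen V → ∀ f : E n → ℝ, HarmonicOn f V →
    BiharmonicOn (f ∘ φ) (U ∩ φ ⁻¹' V)

/-- A harmonic morphism on `U`: it pulls back harmonic functions to harmonic functions. -/
def IsHM {m n : ℕ} (φ : E m → E n) (U : Set (E m)) : Prop :=
  ∀ V : Set (E n), IsOpen V → ∀ f : E n → ℝ, HarmonicOn f V →
    HarmonicOn (f ∘ φ) (U ∩ φ ⁻¹' V)

/-- A biharmonic morphism on `U`: it pulls back biharmonic functions to biharmonic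
functions. -/
def IsBHM {m n : ℕ} (φ : E m → E n) (U : Set (E m)) : Prop :=
  ∀ V : Set (E n), IsOpen V → ∀ f : E n → ℝ, BiharmonicOn f V →
    BiharmonicOn (f ∘ φ) (U ∩ φ ⁻¹' V)

/-- Horizontally weakly conformal on `U`: there is `λ : U → [0,∞)` with
`⟪∇φ^α, ∇φ^β⟫ = λ² δ_{αβ}` pointwise on `U`. -/
def IsHWC {m n : ℕ} (φ : E m → E n) (U : Set (E m)) : Prop :=
  ∃ lam : E m → ℝ, (∀ x, 0 ≤ lam x) ∧
    ∀ x ∈ U, ∀ α β : Fin n,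
      ⟪gradient (fun y => φ y α) x, gradient (fun y => φ y β) x⟫ =
        (lam x) ^ 2 * (if α = β then 1 else 0)

section Stmt6Aux
open scoped ContDiff

namespace S6

def Di (i : Fin 3) (g : E 3 → ℂ) : E 3 → ℂ :=
  fun x => fderiv ℝ g x (EuclideanSpace.single i 1)

lemma lapC_eq (f : E 3 → ℂ) (x : E 3) : lapC f x = ∑ i, Di i (Di i f) x := rfl

variable {U : Set (E 3)} {g h ψ φ : E 3 → ℂ} {x : E 3} {i : Fin 3} {f : ℂ → ℂ} {V : Set ℂ}

lemma diffAt (hU : IsOpen U) (hg : ContDiffOn ℝ ∞ g U) (hx : x ∈ U) :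
    DifferentiableAt ℝ g x :=
  (hg.differentiableOn (by simp)).differentiableAt (hU.mem_nhds hx)

lemma Di_smooth (hU : IsOpen U) (hg : ContDiffOn ℝ ∞ g U) (i : Fin 3) :
    ContDiffOn ℝ ∞ (Di i g) U := by
  have h : ContDiffOn ℝ ∞ (fderiv ℝ g) U :=
    hg.fderiv_of_isOpen hU (by exact_mod_cast le_refl ∞)
  exact (ContinuousLinearMap.apply ℝ ℂ (EuclideanSpace.single i 1)).contDiff.comp_contDiffOn h

lemma Di_congr (hU : IsOpen U) (hgh : Set.EqOn g h U) (hx : x ∈ U) :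
    Di i g x = Di i h x := by
  have : g =ᶠ[nhds x] h := Filter.eventuallyEq_of_mem (hU.mem_nhds hx) hgh
  simp only [Di, this.fderiv_eq]

lemma lapC_congr (hU : IsOpen U) (hgh : Set.EqOn g h U) (hx : x ∈ U) :
    lapC g x = lapC h x := by
  rw [lapC_eq, lapC_eq]
  refine Finset.sum_congr rfl fun i _ => ?_
  exact Di_congr hU (fun y hy => Di_congr hU hgh hy) hx

lemma Di_mul (hg : DifferentiableAt ℝ g x) (hh : DifferentiableAt ℝ h x) :
    Di i (fun y => g y * h y) x = g x * Di i h x + h x * Di i g x := by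
  simp [Di, fderiv_fun_mul hg hh, smul_eq_mul]

lemma Di_add (hg : DifferentiableAt ℝ g x) (hh : DifferentiableAt ℝ h x) :
    Di i (fun y => g y + h y) x = Di i g x + Di i h x := by
  simp [Di, fderiv_fun_add hg hh]

lemma Di_const_mul (hg : DifferentiableAt ℝ g x) (c : ℂ) :
    Di i (fun y => c * g y) x = c * Di i g x := by
  simp [Di, fderiv_const_mul hg c, smul_eq_mul]

lemma Di_zero : Di i (fun _ => (0:ℂ)) x = 0 := by
  simp [Di]

lemma lapC_zero : lapC (fun _ : E 3 => (0:ℂ)) x = 0 := by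
  rw [lapC_eq]
  refine Finset.sum_eq_zero fun i _ => ?_
  have : Di i (fun _ : E 3 => (0:ℂ)) = fun _ => (0:ℂ) := funext fun y => Di_zero
  rw [this, Di_zero]

lemma lapC_smooth (hU : IsOpen U) (hg : ContDiffOn ℝ ∞ g U) :
    ContDiffOn ℝ ∞ (fun x => lapC g x) U := by
  have : ∀ x, lapC g x = ∑ i, Di i (Di i g) x := lapC_eq g
  simp only [this]
  exact ContDiffOn.sum fun i _ => Di_smooth hU (Di_smooth hU hg i) i

/-- Product rule for the Laplacian on an open set. -/
lemma lapC_mul (hU : IsOpen U) (hg : ContDiffOn ℝ ∞ g U) (hh : ContDiffOn ℝ ∞ h U)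
    (hx : x ∈ U) :
    lapC (fun y => g y * h y) x =
      g x * lapC h x + h x * lapC g x + 2 * ∑ i, Di i g x * Di i h x := by
  rw [lapC_eq]
  have key : ∀ i : Fin 3, Di i (Di i (fun y => g y * h y)) x =
      g x * Di i (Di i h) x + h x * Di i (Di i g) x + 2 * (Di i g x * Di i h x) := by
    intro i
    have e1 : Set.EqOn (Di i (fun y => g y * h y))
        (fun y => g y * Di i h y + h y * Di i g y) U := fun y hy =>
      Di_mul (diffAt hU hg hy) (diffAt hU hh hy)
    rw [Di_congr hU e1 hx]
    have dg := diffAt hU hg hx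
    have dh := diffAt hU hh hx
    have dDg := diffAt hU (Di_smooth hU hg i) hx
    have dDh := diffAt hU (Di_smooth hU hh i) hx
    rw [Di_add (dg.fun_mul dDh) (dh.fun_mul dDg), Di_mul dg dDh, Di_mul dh dDg]
    ring
  simp only [key, lapC_eq]
  rw [Finset.sum_add_distrib, Finset.sum_add_distrib, Finset.mul_sum, Finset.mul_sum,
    Finset.mul_sum]

lemma lapC_add (hU : IsOpen U) (hg : ContDiffOn ℝ ∞ g U) (hh : ContDiffOn ℝ ∞ h U)
    (hx : x ∈ U) :
    lapC (fun y => g y + h y) x = lapC g x + lapC h x := by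
  rw [lapC_eq, lapC_eq, lapC_eq, ← Finset.sum_add_distrib]
  refine Finset.sum_congr rfl fun i _ => ?_
  have e1 : Set.EqOn (Di i (fun y => g y + h y)) (fun y => Di i g y + Di i h y) U :=
    fun y hy => Di_add (diffAt hU hg hy) (diffAt hU hh hy)
  rw [Di_congr hU e1 hx]
  exact Di_add (diffAt hU (Di_smooth hU hg i) hx) (diffAt hU (Di_smooth hU hh i) hx)

lemma lapC_const_mul (hU : IsOpen U) (hg : ContDiffOn ℝ ∞ g U) (hx : x ∈ U) (c : ℂ) :
    lapC (fun y => c * g y) x = c * lapC g x := by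
  rw [lapC_eq, lapC_eq, Finset.mul_sum]
  refine Finset.sum_congr rfl fun i _ => ?_
  have e1 : Set.EqOn (Di i (fun y => c * g y)) (fun y => c * Di i g y) U :=
    fun y hy => Di_const_mul (diffAt hU hg hy) c
  rw [Di_congr hU e1 hx]
  exact Di_const_mul (diffAt hU (Di_smooth hU hg i) hx) c

/-- Chain rule for a directional derivative through a complex-differentiable function. -/
lemma Di_comp (hf : DifferentiableAt ℂ f (ψ x)) (hψ : DifferentiableAt ℝ ψ x) :
    Di i (fun y => f (ψ y)) x = deriv f (ψ x) * Di i ψ x := by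
  have h1 : HasFDerivAt f ((fderiv ℂ f (ψ x)).restrictScalars ℝ) (ψ x) :=
    hf.hasFDerivAt.restrictScalars ℝ
  have h2 := (h1.comp x hψ.hasFDerivAt).fderiv
  simp only [Di]
  rw [show (fun y => f (ψ y)) = f ∘ ψ from rfl, h2]
  simp only [ContinuousLinearMap.coe_comp', Function.comp_apply,
    ContinuousLinearMap.coe_restrictScalars']
  have : ∀ w : ℂ, fderiv ℂ f (ψ x) w = w * deriv f (ψ x) := by
    intro w
    have h3 := (fderiv ℂ f (ψ x)).map_smul w (1:ℂ)
    simp only [smul_eq_mul, mul_one] at h3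
    rw [h3, ← fderiv_apply_one_eq_deriv]
  rw [this]
  ring

/-- Smoothness of `f ∘ ψ` for analytic `f`. -/
lemma comp_smooth (hψ : ContDiffOn ℝ ∞ ψ U) (hf : AnalyticOnNhd ℂ f V)
    (hmaps : Set.MapsTo ψ U V) : ContDiffOn ℝ ∞ (fun y => f (ψ y)) U := by
  have h1 : ContDiffOn ℂ ∞ f V := hf.contDiffOn_of_completeSpace.of_le le_top
  exact (h1.restrict_scalars ℝ).comp hψ hmaps

/-- Chain rule for the Laplacian through an analytic function. -/
lemma lapC_comp (hU : IsOpen U) (hψ : ContDiffOn ℝ ∞ ψ U) (hf : AnalyticOnNhd ℂ f V)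
    (hmaps : Set.MapsTo ψ U V) (hx : x ∈ U) :
    lapC (fun y => f (ψ y)) x =
      deriv f (ψ x) * lapC ψ x + deriv (deriv f) (ψ x) * ∑ i, (Di i ψ x) ^ 2 := by
  rw [lapC_eq]
  have key : ∀ i : Fin 3, Di i (Di i (fun y => f (ψ y))) x =
      deriv f (ψ x) * Di i (Di i ψ) x + deriv (deriv f) (ψ x) * (Di i ψ x) ^ 2 := by
    intro i
    have e1 : Set.EqOn (Di i (fun y => f (ψ y))) (fun y => deriv f (ψ y) * Di i ψ y) U :=
      fun y hy => Di_comp ((hf (ψ y) (hmaps hy)).differentiableAt) (diffAt hU hψ hy)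
    rw [Di_congr hU e1 hx]
    have hd1 : DifferentiableAt ℝ (fun y => deriv f (ψ y)) x :=
      (((hf.deriv (ψ x) (hmaps hx)).differentiableAt).restrictScalars ℝ).comp x
        (diffAt hU hψ hx)
    have hDψ : DifferentiableAt ℝ (Di i ψ) x := diffAt hU (Di_smooth hU hψ i) hx
    rw [Di_mul hd1 hDψ,
      Di_comp ((hf.deriv (ψ x) (hmaps hx)).differentiableAt) (diffAt hU hψ hx)]
    ring
  simp only [key]
  rw [Finset.sum_add_distrib, ← Finset.mul_sum, ← Finset.mul_sum, lapC_eq]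

/-- `Σᵢ (∂φ/∂xᵢ)²`. -/
def Sq (φ : E 3 → ℂ) : E 3 → ℂ := fun x => ∑ i, (Di i φ x) ^ 2

lemma Sq_smooth (hU : IsOpen U) (hφ : ContDiffOn ℝ ∞ φ U) : ContDiffOn ℝ ∞ (Sq φ) U :=
  ContDiffOn.sum fun i _ => (Di_smooth hU hφ i).pow 2

lemma sum_mul_self_eq_Sq : ∑ i, Di i φ x * Di i φ x = Sq φ x :=
  Finset.sum_congr rfl fun i _ => (pow_two _).symm

lemma sum_factor {c : ℂ} {F G H : Fin 3 → ℂ} (h : ∀ i, F i = c * G i) :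
    ∑ i, F i * H i = c * ∑ i, G i * H i := by
  rw [Finset.mul_sum]
  exact Finset.sum_congr rfl fun i _ => by rw [h i]; ring

lemma sum_factor_right {c : ℂ} {F G H : Fin 3 → ℂ} (h : ∀ i, G i = c * H i) :
    ∑ i, F i * G i = c * ∑ i, F i * H i := by
  rw [Finset.mul_sum]
  exact Finset.sum_congr rfl fun i _ => by rw [h i]; ring

lemma Di_sq (hU : IsOpen U) (hφ : ContDiffOn ℝ ∞ φ U) (hx : x ∈ U) :
    Di i (fun y => φ y ^ 2) x = (2 * φ x) * Di i φ x := by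
  have e : (fun y => φ y ^ 2) = fun y => φ y * φ y := funext fun y => by ring
  rw [e, Di_mul (diffAt hU hφ hx) (diffAt hU hφ hx)]
  ring

lemma Di_cube (hU : IsOpen U) (hφ : ContDiffOn ℝ ∞ φ U) (hx : x ∈ U) :
    Di i (fun y => φ y ^ 3) x = (3 * φ x ^ 2) * Di i φ x := by
  have e : (fun y => φ y ^ 3) = fun y => φ y * φ y ^ 2 := funext fun y => by ring
  rw [e, Di_mul (diffAt hU hφ hx) (diffAt hU (hφ.pow 2) hx), Di_sq hU hφ hx]
  ring

lemma lap_sq (hU : IsOpen U) (hφ : ContDiffOn ℝ ∞ φ U) (hx : x ∈ U) :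
    lapC (fun y => φ y ^ 2) x = 2 * (φ x * lapC φ x) + 2 * Sq φ x := by
  have e : (fun y => φ y ^ 2) = fun y => φ y * φ y := funext fun y => by ring
  rw [e, lapC_mul hU hφ hφ hx, sum_mul_self_eq_Sq]
  ring

lemma lap_cube (hU : IsOpen U) (hφ : ContDiffOn ℝ ∞ φ U) (hx : x ∈ U) :
    lapC (fun y => φ y ^ 3) x = 3 * (φ x ^ 2 * lapC φ x) + 6 * (φ x * Sq φ x) := by
  have e : (fun y => φ y ^ 3) = fun y => φ y * φ y ^ 2 := funext fun y => by ring
  rw [e, lapC_mul hU hφ (hφ.pow 2) hx, lap_sq hU hφ hx]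
  have s : ∑ i, Di i φ x * Di i (fun y => φ y ^ 2) x = (2 * φ x) * ∑ i, Di i φ x * Di i φ x :=
    sum_factor_right fun i => Di_sq hU hφ hx
  rw [s, sum_mul_self_eq_Sq]
  ring

lemma lap_quart (hU : IsOpen U) (hφ : ContDiffOn ℝ ∞ φ U) (hx : x ∈ U) :
    lapC (fun y => φ y ^ 4) x = 4 * (φ x ^ 3 * lapC φ x) + 12 * (φ x ^ 2 * Sq φ x) := by
  have e : (fun y => φ y ^ 4) = fun y => φ y ^ 2 * φ y ^ 2 := funext fun y => by ring
  rw [e, lapC_mul hU (hφ.pow 2) (hφ.pow 2) hx, lap_sq hU hφ hx]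
  have s : ∑ i, Di i (fun y => φ y ^ 2) x * Di i (fun y => φ y ^ 2) x
      = (2 * φ x) * ∑ i, Di i (fun y => φ y ^ 2) x * Di i φ x :=
    sum_factor_right fun i => Di_sq hU hφ hx
  have s2 : ∑ i, Di i (fun y => φ y ^ 2) x * Di i φ x = (2 * φ x) * ∑ i, Di i φ x * Di i φ x :=
    sum_factor fun i => Di_sq hU hφ hx
  rw [s, s2, sum_mul_self_eq_Sq]
  ring

lemma lap2_sq (hU : IsOpen U) (hφ : ContDiffOn ℝ ∞ φ U)
    (hbi : ∀ x ∈ U, lapC (lapC φ) x = 0) (hx : x ∈ U) :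
    lapC (lapC (fun y => φ y ^ 2)) x =
      2 * (lapC φ x) ^ 2 + 4 * (∑ i, Di i φ x * Di i (lapC φ) x) + 2 * lapC (Sq φ) x := by
  have hQs : ContDiffOn ℝ ∞ (lapC φ) U := lapC_smooth hU hφ
  have hSqs := Sq_smooth hU hφ
  have e : Set.EqOn (lapC (fun y => φ y ^ 2)) (fun y => 2 * (φ y * lapC φ y) + 2 * Sq φ y) U :=
    fun y hy => lap_sq hU hφ hy
  have s1 : lapC (lapC (fun y => φ y ^ 2)) x
      = lapC (fun y => 2 * (φ y * lapC φ y) + 2 * Sq φ y) x := lapC_congr hU e hx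
  have sm1 : ContDiffOn ℝ ∞ (fun y => 2 * (φ y * lapC φ y)) U :=
    contDiffOn_const.mul (hφ.mul hQs)
  have sm2 : ContDiffOn ℝ ∞ (fun y => 2 * Sq φ y) U := contDiffOn_const.mul hSqs
  have s2 : lapC (fun y => 2 * (φ y * lapC φ y) + 2 * Sq φ y) x
      = lapC (fun y => 2 * (φ y * lapC φ y)) x + lapC (fun y => 2 * Sq φ y) x :=
    lapC_add hU sm1 sm2 hx
  have s3 : lapC (fun y => 2 * (φ y * lapC φ y)) x = 2 * lapC (fun y => φ y * lapC φ y) x :=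
    lapC_const_mul hU (hφ.mul hQs) hx 2
  have s4 : lapC (fun y => 2 * Sq φ y) x = 2 * lapC (Sq φ) x := lapC_const_mul hU hSqs hx 2
  have s5 : lapC (fun y => φ y * lapC φ y) x
      = φ x * lapC (lapC φ) x + lapC φ x * lapC φ x
        + 2 * ∑ i, Di i φ x * Di i (lapC φ) x := lapC_mul hU hφ hQs hx
  have s6 : lapC (lapC φ) x = 0 := hbi x hx
  linear_combination s1 + s2 + s3 + s4 + 2 * s5 + 2 * φ x * s6

lemma lap2_cube (hU : IsOpen U) (hφ : ContDiffOn ℝ ∞ φ U)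
    (hbi : ∀ x ∈ U, lapC (lapC φ) x = 0) (hx : x ∈ U) :
    lapC (lapC (fun y => φ y ^ 3)) x =
      6 * (φ x * (lapC φ x) ^ 2) + 12 * (φ x * ∑ i, Di i φ x * Di i (lapC φ) x)
        + 6 * (φ x * lapC (Sq φ) x) + 12 * (Sq φ x * lapC φ x)
        + 12 * (∑ i, Di i φ x * Di i (Sq φ) x) := by
  have hQs : ContDiffOn ℝ ∞ (lapC φ) U := lapC_smooth hU hφ
  have hSqs := Sq_smooth hU hφ
  have e : Set.EqOn (lapC (fun y => φ y ^ 3))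
      (fun y => 3 * (φ y ^ 2 * lapC φ y) + 6 * (φ y * Sq φ y)) U :=
    fun y hy => lap_cube hU hφ hy
  have s1 : lapC (lapC (fun y => φ y ^ 3)) x
      = lapC (fun y => 3 * (φ y ^ 2 * lapC φ y) + 6 * (φ y * Sq φ y)) x := lapC_congr hU e hx
  have sm1 : ContDiffOn ℝ ∞ (fun y => 3 * (φ y ^ 2 * lapC φ y)) U :=
    contDiffOn_const.mul ((hφ.pow 2).mul hQs)
  have sm2 : ContDiffOn ℝ ∞ (fun y => 6 * (φ y * Sq φ y)) U :=
    contDiffOn_const.mul (hφ.mul hSqs)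
  have s2 : lapC (fun y => 3 * (φ y ^ 2 * lapC φ y) + 6 * (φ y * Sq φ y)) x
      = lapC (fun y => 3 * (φ y ^ 2 * lapC φ y)) x + lapC (fun y => 6 * (φ y * Sq φ y)) x :=
    lapC_add hU sm1 sm2 hx
  have s3 : lapC (fun y => 3 * (φ y ^ 2 * lapC φ y)) x
      = 3 * lapC (fun y => φ y ^ 2 * lapC φ y) x :=
    lapC_const_mul hU ((hφ.pow 2).mul hQs) hx 3
  have s4 : lapC (fun y => 6 * (φ y * Sq φ y)) x = 6 * lapC (fun y => φ y * Sq φ y) x :=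
    lapC_const_mul hU (hφ.mul hSqs) hx 6
  have s5 : lapC (fun y => φ y ^ 2 * lapC φ y) x
      = φ x ^ 2 * lapC (lapC φ) x + lapC φ x * lapC (fun y => φ y ^ 2) x
        + 2 * ∑ i, Di i (fun y => φ y ^ 2) x * Di i (lapC φ) x :=
    lapC_mul hU (hφ.pow 2) hQs hx
  have s6 : lapC (fun y => φ y * Sq φ y) x
      = φ x * lapC (Sq φ) x + Sq φ x * lapC φ x + 2 * ∑ i, Di i φ x * Di i (Sq φ) x :=
    lapC_mul hU hφ hSqs hx
  have s7 : ∑ i, Di i (fun y => φ y ^ 2) x * Di i (lapC φ) x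
      = (2 * φ x) * ∑ i, Di i φ x * Di i (lapC φ) x :=
    sum_factor fun i => Di_sq hU hφ hx
  have s8 : lapC (lapC φ) x = 0 := hbi x hx
  have s9 : lapC (fun y => φ y ^ 2) x = 2 * (φ x * lapC φ x) + 2 * Sq φ x := lap_sq hU hφ hx
  linear_combination s1 + s2 + s3 + s4 + 3 * s5 + 6 * s6 + 6 * s7 + 3 * φ x ^ 2 * s8
    + 3 * lapC φ x * s9

lemma lap2_quart (hU : IsOpen U) (hφ : ContDiffOn ℝ ∞ φ U)
    (hbi : ∀ x ∈ U, lapC (lapC φ) x = 0) (hx : x ∈ U) :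
    lapC (lapC (fun y => φ y ^ 4)) x =
      12 * (φ x ^ 2 * (lapC φ x) ^ 2)
        + 24 * (φ x ^ 2 * ∑ i, Di i φ x * Di i (lapC φ) x)
        + 12 * (φ x ^ 2 * lapC (Sq φ) x) + 48 * (φ x * (Sq φ x * lapC φ x))
        + 48 * (φ x * ∑ i, Di i φ x * Di i (Sq φ) x) + 24 * (Sq φ x) ^ 2 := by
  have hQs : ContDiffOn ℝ ∞ (lapC φ) U := lapC_smooth hU hφ
  have hSqs := Sq_smooth hU hφ
  have e : Set.EqOn (lapC (fun y => φ y ^ 4))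
      (fun y => 4 * (φ y ^ 3 * lapC φ y) + 12 * (φ y ^ 2 * Sq φ y)) U :=
    fun y hy => lap_quart hU hφ hy
  have s1 : lapC (lapC (fun y => φ y ^ 4)) x
      = lapC (fun y => 4 * (φ y ^ 3 * lapC φ y) + 12 * (φ y ^ 2 * Sq φ y)) x :=
    lapC_congr hU e hx
  have sm1 : ContDiffOn ℝ ∞ (fun y => 4 * (φ y ^ 3 * lapC φ y)) U :=
    contDiffOn_const.mul ((hφ.pow 3).mul hQs)
  have sm2 : ContDiffOn ℝ ∞ (fun y => 12 * (φ y ^ 2 * Sq φ y)) U :=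
    contDiffOn_const.mul ((hφ.pow 2).mul hSqs)
  have s2 : lapC (fun y => 4 * (φ y ^ 3 * lapC φ y) + 12 * (φ y ^ 2 * Sq φ y)) x
      = lapC (fun y => 4 * (φ y ^ 3 * lapC φ y)) x
        + lapC (fun y => 12 * (φ y ^ 2 * Sq φ y)) x := lapC_add hU sm1 sm2 hx
  have s3 : lapC (fun y => 4 * (φ y ^ 3 * lapC φ y)) x
      = 4 * lapC (fun y => φ y ^ 3 * lapC φ y) x :=
    lapC_const_mul hU ((hφ.pow 3).mul hQs) hx 4
  have s4 : lapC (fun y => 12 * (φ y ^ 2 * Sq φ y)) x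
      = 12 * lapC (fun y => φ y ^ 2 * Sq φ y) x :=
    lapC_const_mul hU ((hφ.pow 2).mul hSqs) hx 12
  have s5 : lapC (fun y => φ y ^ 3 * lapC φ y) x
      = φ x ^ 3 * lapC (lapC φ) x + lapC φ x * lapC (fun y => φ y ^ 3) x
        + 2 * ∑ i, Di i (fun y => φ y ^ 3) x * Di i (lapC φ) x :=
    lapC_mul hU (hφ.pow 3) hQs hx
  have s6 : lapC (fun y => φ y ^ 2 * Sq φ y) x
      = φ x ^ 2 * lapC (Sq φ) x + Sq φ x * lapC (fun y => φ y ^ 2) x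
        + 2 * ∑ i, Di i (fun y => φ y ^ 2) x * Di i (Sq φ) x :=
    lapC_mul hU (hφ.pow 2) hSqs hx
  have s7 : ∑ i, Di i (fun y => φ y ^ 3) x * Di i (lapC φ) x
      = (3 * φ x ^ 2) * ∑ i, Di i φ x * Di i (lapC φ) x :=
    sum_factor fun i => Di_cube hU hφ hx
  have s7' : ∑ i, Di i (fun y => φ y ^ 2) x * Di i (Sq φ) x
      = (2 * φ x) * ∑ i, Di i φ x * Di i (Sq φ) x :=
    sum_factor fun i => Di_sq hU hφ hx
  have s8 : lapC (lapC φ) x = 0 := hbi x hx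
  have s9 : lapC (fun y => φ y ^ 2) x = 2 * (φ x * lapC φ x) + 2 * Sq φ x := lap_sq hU hφ hx
  have s10 : lapC (fun y => φ y ^ 3) x = 3 * (φ x ^ 2 * lapC φ x) + 6 * (φ x * Sq φ x) :=
    lap_cube hU hφ hx
  linear_combination s1 + s2 + s3 + s4 + 4 * s5 + 12 * s6 + 8 * s7 + 24 * s7'
    + 4 * φ x ^ 3 * s8 + 12 * Sq φ x * s9 + 4 * lapC φ x * s10

end S6

end Stmt6Aux

open S6
open scoped ContDiff

/-- for a smooth biharmonic `φ : U → ℂ` on an open `U ⊆ ℝ³`, `f ∘ φ` is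
biharmonic for every holomorphic `f` if and only if `Σᵢ (∂φ/∂xᵢ)² = 0` on `U` and
`φ²` is biharmonic. -/
theorem stmt_6 (U : Set (E 3)) (hU : IsOpen U)
    (φ : E 3 → ℂ) (hφ : ContDiffOn ℝ (⊤ : ℕ∞) φ U)
    (hbi : ∀ x ∈ U, lapC (lapC φ) x = 0) :
    (∀ V : Set ℂ, IsOpen V → ∀ f : ℂ → ℂ, DifferentiableOn ℂ f V →
        ∀ x ∈ U ∩ φ ⁻¹' V, lapC (lapC (f ∘ φ)) x = 0) ↔
      ((∀ x ∈ U, ∑ i : Fin 3, (fderiv ℝ φ x (EuclideanSpace.single i 1)) ^ 2 = 0) ∧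
        ∀ x ∈ U, lapC (lapC (fun y => (φ y) ^ 2)) x = 0) := by
  have hφ' : ContDiffOn ℝ ∞ φ U := hφ.of_le (by simp)
  constructor
  · intro H
    have hpow : ∀ k : ℕ, ∀ x ∈ U, lapC (lapC (fun y => (φ y) ^ k)) x = 0 := by
      intro k x hx
      have := H Set.univ isOpen_univ (fun z => z ^ k)
        (differentiable_pow k).differentiableOn x ⟨hx, Set.mem_univ _⟩
      rwa [show ((fun z : ℂ => z ^ k) ∘ φ) = (fun y => (φ y) ^ k) from rfl] at this
    refine ⟨?_, hpow 2⟩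
    intro x hx
    have m2 := lap2_sq hU hφ' hbi hx
    have m3 := lap2_cube hU hφ' hbi hx
    have m4 := lap2_quart hU hφ' hbi hx
    have e2 := hpow 2 x hx
    have e3 := hpow 3 x hx
    have e4 := hpow 4 x hx
    have key : 24 * (Sq φ x) ^ 2 = 0 := by
      linear_combination e4 - m4 - 4 * φ x * e3 + 4 * φ x * m3 + 6 * φ x ^ 2 * e2
        - 6 * φ x ^ 2 * m2
    have hsq : (Sq φ x) ^ 2 = 0 := by
      rcases mul_eq_zero.mp key with h | h
      · exact absurd h (by norm_num)
      · exact h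
    have : Sq φ x = 0 := by
      have := sq_eq_zero_iff.mp hsq
      exact this
    exact this
  · rintro ⟨hS0, hb2⟩ V hV f hf x hxW
    obtain ⟨hxU, hxV⟩ := hxW
    have hS0' : ∀ y ∈ U, Sq φ y = 0 := hS0
    have lapSq0 : ∀ y ∈ U, lapC (Sq φ) y = 0 := by
      intro y hy
      have e : Set.EqOn (Sq φ) (fun _ => (0 : ℂ)) U := fun z hz => hS0' z hz
      rw [lapC_congr hU e hy]
      exact lapC_zero
    have hK : ∀ y ∈ U, (lapC φ y) ^ 2 + 2 * (∑ i, Di i φ y * Di i (lapC φ) y) = 0 := by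
      intro y hy
      have m2 := lap2_sq hU hφ' hbi hy
      have hb2' := hb2 y hy
      have l0 := lapSq0 y hy
      linear_combination hb2' / 2 - m2 / 2 - l0
    have hW : IsOpen (U ∩ φ ⁻¹' V) := hφ'.continuousOn.isOpen_inter_preimage hU hV
    have hφW : ContDiffOn ℝ ∞ φ (U ∩ φ ⁻¹' V) := hφ'.mono Set.inter_subset_left
    have hmaps : Set.MapsTo φ (U ∩ φ ⁻¹' V) V := fun y hy => hy.2
    have han : AnalyticOnNhd ℂ f V := hf.analyticOnNhd hV
    have hx' : x ∈ U ∩ φ ⁻¹' V := ⟨hxU, hxV⟩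
    have e : Set.EqOn (lapC (fun y => f (φ y))) (fun y => deriv f (φ y) * lapC φ y)
        (U ∩ φ ⁻¹' V) := by
      intro y hy
      have hc : lapC (fun z => f (φ z)) y
          = deriv f (φ y) * lapC φ y + deriv (deriv f) (φ y) * ∑ i, (Di i φ y) ^ 2 :=
        lapC_comp hW hφW han hmaps hy
      have h0 : (∑ i, (Di i φ y) ^ 2) = 0 := hS0 y hy.1
      show lapC (fun z => f (φ z)) y = deriv f (φ y) * lapC φ y
      rw [hc, h0, mul_zero, add_zero]
    have s1 : lapC (lapC (fun y => f (φ y))) x = lapC (fun y => deriv f (φ y) * lapC φ y) x :=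
      lapC_congr hW e hx'
    have hgs : ContDiffOn ℝ ∞ (fun y => deriv f (φ y)) (U ∩ φ ⁻¹' V) :=
      comp_smooth hφW han.deriv hmaps
    have hQW : ContDiffOn ℝ ∞ (lapC φ) (U ∩ φ ⁻¹' V) :=
      (lapC_smooth hU hφ').mono Set.inter_subset_left
    have s2 : lapC (fun y => deriv f (φ y) * lapC φ y) x
        = deriv f (φ x) * lapC (lapC φ) x + lapC φ x * lapC (fun y => deriv f (φ y)) x
          + 2 * ∑ i, Di i (fun y => deriv f (φ y)) x * Di i (lapC φ) x :=
      lapC_mul hW hgs hQW hx'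
    have s3 : lapC (fun y => deriv f (φ y)) x
        = deriv (deriv f) (φ x) * lapC φ x
          + deriv (deriv (deriv f)) (φ x) * ∑ i, (Di i φ x) ^ 2 :=
      lapC_comp hW hφW han.deriv hmaps hx'
    have s4 : ∑ i, Di i (fun y => deriv f (φ y)) x * Di i (lapC φ) x
        = (deriv (deriv f) (φ x)) * ∑ i, Di i φ x * Di i (lapC φ) x :=
      sum_factor fun i =>
        Di_comp ((han.deriv (φ x) hxV).differentiableAt) (diffAt hW hφW hx')
    have s5 : lapC (lapC φ) x = 0 := hbi x hxU
    have s6 : (∑ i, (Di i φ x) ^ 2) = 0 := hS0 x hxU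
    have s7 := hK x hxU
    show lapC (lapC (f ∘ φ)) x = 0
    rw [show (f ∘ φ) = (fun y => f (φ y)) from rfl]
    linear_combination s1 + s2 + deriv f (φ x) * s5 + lapC φ x * s3
      + (lapC φ x * deriv (deriv (deriv f)) (φ x)) * s6 + 2 * s4
      + deriv (deriv f) (φ x) * s7
end
end

section
/- Let U ⊆ ℝ² be an open set and φ : U → ℝ² a smooth generalized harmonic morphism. Then φ is a harmonic morphism: for every open set V ⊆ ℝ² and every harmonic function f : V → ℝ, the composition f ∘ φ is harmonic on φ^{-1}(V). -/
open scoped BigOperators RealInnerProductSpace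

noncomputable section

set_option linter.unusedSectionVars false
namespace S7
variable {m : ℕ} {F G : Type*} [NormedAddCommGroup F] [NormedSpace ℝ F]
  [NormedAddCommGroup G] [NormedSpace ℝ G]
abbrev ee (j : Fin m) : E m := EuclideanSpace.single j 1
noncomputable def pd (j : Fin m) (f : E m → F) : E m → F :=
  fun y => fderiv ℝ f y (ee j)
noncomputable def lapF (f : E m → F) (x : E m) : F := ∑ j, pd j (pd j f) x
variable {s : Set (E m)} {x : E m} {f g : E m → F}

theorem diffAt (hf : ContDiffOn ℝ (⊤ : ℕ∞) f s) (hs : IsOpen s) (hx : x ∈ s) :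
    DifferentiableAt ℝ f x :=
  (hf.contDiffAt (hs.mem_nhds hx)).differentiableAt (by simp)
theorem pd_smoothOn (hs : IsOpen s) (hf : ContDiffOn ℝ (⊤ : ℕ∞) f s) (j : Fin m) :
    ContDiffOn ℝ (⊤ : ℕ∞) (pd j f) s :=
  (hf.fderiv_of_isOpen hs (by simp)).clm_apply contDiffOn_const
theorem lapF_smoothOn (hs : IsOpen s) (hf : ContDiffOn ℝ (⊤ : ℕ∞) f s) :
    ContDiffOn ℝ (⊤ : ℕ∞) (lapF f) s := by
  have : ContDiffOn ℝ (⊤ : ℕ∞) (fun x => ∑ j : Fin m, pd j (pd j f) x) s :=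
    ContDiffOn.sum fun j _ => pd_smoothOn hs (pd_smoothOn hs hf j) j
  exact this
theorem pd_congr (h : f =ᶠ[nhds x] g) (j : Fin m) : pd j f =ᶠ[nhds x] pd j g :=
  (h.fderiv (𝕜 := ℝ)).mono fun y hy => by simp only [pd, hy]

theorem pd_congr_pt (h : f =ᶠ[nhds x] g) (j : Fin m) : pd j f x = pd j g x := by
  simp only [pd, h.fderiv_eq (𝕜 := ℝ)]
theorem lapF_congr (h : f =ᶠ[nhds x] g) : lapF f x = lapF g x := by
  unfold lapF
  refine Finset.sum_congr rfl fun j _ => ?_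
  have := ((pd_congr h j).fderiv_eq (𝕜 := ℝ))
  simp only [pd, this]

/-- upgrade an on-set identity to an eventual identity -/
theorem evOn (hs : IsOpen s) (hx : x ∈ s) (h : ∀ y ∈ s, f y = g y) :
    f =ᶠ[nhds x] g :=
  Filter.eventually_of_mem (hs.mem_nhds hx) h

theorem pd_add (hs : IsOpen s) (hx : x ∈ s) (hf : ContDiffOn ℝ (⊤ : ℕ∞) f s)
    (hg : ContDiffOn ℝ (⊤ : ℕ∞) g s) (j : Fin m) :
    pd j (fun y => f y + g y) x = pd j f x + pd j g x := by
  simp only [pd, fderiv_fun_add (diffAt hf hs hx) (diffAt hg hs hx),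
    ContinuousLinearMap.add_apply]

theorem lapF_add (hs : IsOpen s) (hx : x ∈ s) (hf : ContDiffOn ℝ (⊤ : ℕ∞) f s)
    (hg : ContDiffOn ℝ (⊤ : ℕ∞) g s) :
    lapF (fun y => f y + g y) x = lapF f x + lapF g x := by
  unfold lapF
  rw [← Finset.sum_add_distrib]
  refine Finset.sum_congr rfl fun j _ => ?_
  have h1 : pd j (fun y => f y + g y) =ᶠ[nhds x]
      fun y => pd j f y + pd j g y :=
    evOn hs hx fun y hy => pd_add hs hy hf hg j
  calc pd j (pd j (fun y => f y + g y)) x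
      = pd j (fun y => pd j f y + pd j g y) x := pd_congr_pt h1 j
    _ = pd j (pd j f) x + pd j (pd j g) x :=
        pd_add hs hx (pd_smoothOn hs hf j) (pd_smoothOn hs hg j) j

theorem pd_const (c : F) (j : Fin m) : pd j (fun _ => c) x = 0 := by
  simp [pd]

theorem lapF_const (c : F) : lapF (fun _ => c) x = 0 := by
  unfold lapF
  refine Finset.sum_eq_zero fun j _ => ?_
  have : pd j (fun _ : E m => c) = fun _ => (0 : F) := funext fun y => pd_const c j
  rw [this, pd_const]

theorem pd_sub_const (c : F) (j : Fin m) :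
    pd j (fun y => f y - c) = pd j f := by
  funext y; simp only [pd, fderiv_sub_const]

theorem lapF_sub_const (c : F) : lapF (fun y => f y - c) x = lapF f x := by
  unfold lapF; simp only [pd_sub_const]

theorem pd_clm (hs : IsOpen s) (hx : x ∈ s) (hf : ContDiffOn ℝ (⊤ : ℕ∞) f s)
    (T : F →L[ℝ] G) (j : Fin m) :
    pd j (fun y => T (f y)) x = T (pd j f x) := by
  simp only [pd]
  rw [show (fun y => T (f y)) = T ∘ f from rfl,
    fderiv_comp x T.differentiableAt (diffAt hf hs hx), T.fderiv]
  simp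

theorem lapF_clm (hs : IsOpen s) (hx : x ∈ s) (hf : ContDiffOn ℝ (⊤ : ℕ∞) f s)
    (T : F →L[ℝ] G) :
    lapF (fun y => T (f y)) x = T (lapF f x) := by
  unfold lapF
  rw [map_sum]
  refine Finset.sum_congr rfl fun j _ => ?_
  have h1 : pd j (fun y => T (f y)) =ᶠ[nhds x] fun y => T (pd j f y) :=
    evOn hs hx fun y hy => pd_clm hs hy hf T j
  calc pd j (pd j (fun y => T (f y))) x
      = pd j (fun y => T (pd j f y)) x := pd_congr_pt h1 j
    _ = T (pd j (pd j f) x) := pd_clm hs hx (pd_smoothOn hs hf j) T j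


section Complex
variable {u v : E m → ℂ}

theorem pd_mul (hs : IsOpen s) (hx : x ∈ s) (hu : ContDiffOn ℝ (⊤ : ℕ∞) u s)
    (hv : ContDiffOn ℝ (⊤ : ℕ∞) v s) (j : Fin m) :
    pd j (fun y => u y * v y) x = u x * pd j v x + v x * pd j u x := by
  simp only [pd, fderiv_fun_mul (diffAt hu hs hx) (diffAt hv hs hx),
    ContinuousLinearMap.add_apply, ContinuousLinearMap.smul_apply, smul_eq_mul]

theorem lapF_mul (hs : IsOpen s) (hx : x ∈ s) (hu : ContDiffOn ℝ (⊤ : ℕ∞) u s)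
    (hv : ContDiffOn ℝ (⊤ : ℕ∞) v s) :
    lapF (fun y => u y * v y) x =
      u x * lapF v x + v x * lapF u x + 2 * ∑ j, pd j u x * pd j v x := by
  have key : ∀ j : Fin m, pd j (pd j (fun y => u y * v y)) x =
      u x * pd j (pd j v) x + v x * pd j (pd j u) x + 2 * (pd j u x * pd j v x) := by
    intro j
    have h1 : pd j (fun y => u y * v y) =ᶠ[nhds x]
        fun y => u y * pd j v y + v y * pd j u y :=
      evOn hs hx fun y hy => pd_mul hs hy hu hv j
    rw [pd_congr_pt h1 j,
      pd_add hs hx (hu.mul (pd_smoothOn hs hv j)) (hv.mul (pd_smoothOn hs hu j)) j,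
      pd_mul hs hx hu (pd_smoothOn hs hv j) j,
      pd_mul hs hx hv (pd_smoothOn hs hu j) j]
    ring
  unfold lapF
  rw [Finset.sum_congr rfl fun j _ => key j]
  rw [Finset.sum_add_distrib, Finset.sum_add_distrib, ← Finset.mul_sum,
    ← Finset.mul_sum, ← Finset.mul_sum]

theorem lapF_const_mul (hs : IsOpen s) (hx : x ∈ s) (hv : ContDiffOn ℝ (⊤ : ℕ∞) v s)
    (c : ℂ) : lapF (fun y => c * v y) x = c * lapF v x := by
  rw [lapF_mul hs hx contDiffOn_const hv]
  have h1 : lapF (fun _ : E m => c) x = 0 := lapF_const c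
  have h2 : ∀ j : Fin m, pd j (fun _ : E m => c) x = 0 := fun j => pd_const c j
  simp [h1, h2]

end Complex

/-- second derivative matrix, with symmetry -/
theorem pd_pd_eq (hs : IsOpen s) (hx : x ∈ s) (hf : ContDiffOn ℝ (⊤ : ℕ∞) f s) (j k : Fin m) :
    pd k (pd j f) x = fderiv ℝ (fderiv ℝ f) x (ee k) (ee j) := by
  have hdf : ContDiffOn ℝ (⊤ : ℕ∞) (fderiv ℝ f) s := hf.fderiv_of_isOpen hs (by simp)
  have h1 : pd j f =ᶠ[nhds x]
      fun y => (ContinuousLinearMap.apply ℝ F (ee j)) (fderiv ℝ f y) :=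
    evOn hs hx fun y hy => rfl
  rw [pd_congr_pt h1 k, pd_clm hs hx hdf (ContinuousLinearMap.apply ℝ F (ee j)) k]
  rfl

theorem pd_comm (hs : IsOpen s) (hx : x ∈ s) (hf : ContDiffOn ℝ (⊤ : ℕ∞) f s) (j k : Fin m) :
    pd k (pd j f) x = pd j (pd k f) x := by
  rw [pd_pd_eq hs hx hf j k, pd_pd_eq hs hx hf k j]
  have hdf : ContDiffOn ℝ (⊤ : ℕ∞) (fderiv ℝ f) s := hf.fderiv_of_isOpen hs (by simp)
  refine second_derivative_symmetric_of_eventually (f := f) (f' := fderiv ℝ f)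
    (x := x) ?_ ?_ (ee k) (ee j)
  · exact Filter.eventually_of_mem (hs.mem_nhds hx) fun y hy =>
      (diffAt hf hs hy).hasFDerivAt
  · exact (diffAt hdf hs hx).hasFDerivAt


section Chain
variable {n : ℕ} {φ : E m → E n} {V : Set (E n)} {h : E n → F}

theorem lapF_comp (hs : IsOpen s) (hV : IsOpen V)
    (hφ : ContDiffOn ℝ (⊤ : ℕ∞) φ s) (hh : ContDiffOn ℝ (⊤ : ℕ∞) h V) (hx : x ∈ s) (hxV : φ x ∈ V) :
    lapF (fun y => h (φ y)) x =
      (∑ j, fderiv ℝ (fderiv ℝ h) (φ x) (pd j φ x) (pd j φ x))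
        + fderiv ℝ h (φ x) (lapF φ x) := by
  have hs'o : IsOpen (s ∩ φ ⁻¹' V) := hφ.continuousOn.isOpen_inter_preimage hs hV
  have hxs' : x ∈ s ∩ φ ⁻¹' V := ⟨hx, hxV⟩
  have hφ' : ContDiffOn ℝ (⊤ : ℕ∞) φ (s ∩ φ ⁻¹' V) := hφ.mono Set.inter_subset_left
  have hDh : ContDiffOn ℝ (⊤ : ℕ∞) (fderiv ℝ h) V := hh.fderiv_of_isOpen hV (by simp)
  have key : ∀ j : Fin m, pd j (pd j (fun y => h (φ y))) x
      = fderiv ℝ (fderiv ℝ h) (φ x) (pd j φ x) (pd j φ x)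
        + fderiv ℝ h (φ x) (pd j (pd j φ) x) := by
    intro j
    have h1 : pd j (fun y => h (φ y)) =ᶠ[nhds x]
        fun y => (fderiv ℝ h (φ y)) (pd j φ y) := by
      refine evOn hs'o hxs' fun y hy => ?_
      have hcmp : fderiv ℝ (fun z => h (φ z)) y =
          (fderiv ℝ h (φ y)).comp (fderiv ℝ φ y) :=
        fderiv_comp y (diffAt hh hV hy.2) (diffAt hφ' hs'o hy)
      simp only [pd, hcmp, ContinuousLinearMap.comp_apply]
    rw [pd_congr_pt h1 j]
    have hc : DifferentiableAt ℝ (fun y => fderiv ℝ h (φ y)) x :=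
      (diffAt hDh hV hxV).comp x (diffAt hφ hs hx)
    have hu : DifferentiableAt ℝ (pd j φ) x := diffAt (pd_smoothOn hs hφ j) hs hx
    have hcx : fderiv ℝ (fun y => fderiv ℝ h (φ y)) x =
        (fderiv ℝ (fderiv ℝ h) (φ x)).comp (fderiv ℝ φ x) :=
      fderiv_comp x (diffAt hDh hV hxV) (diffAt hφ hs hx)
    have : pd j (fun y => (fderiv ℝ h (φ y)) (pd j φ y)) x =
        (fderiv ℝ (fun y => fderiv ℝ h (φ y)) x (ee j)) (pd j φ x)
          + (fderiv ℝ h (φ x)) (fderiv ℝ (pd j φ) x (ee j)) := by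
      show (fderiv ℝ (fun y => (fderiv ℝ h (φ y)) (pd j φ y)) x) (ee j) = _
      rw [fderiv_clm_apply hc hu]
      simp only [ContinuousLinearMap.add_apply, ContinuousLinearMap.comp_apply,
        ContinuousLinearMap.flip_apply]
      rw [add_comm]
    rw [this, hcx]
    rfl
  unfold lapF
  rw [Finset.sum_congr rfl fun j _ => key j, Finset.sum_add_distrib, ← map_sum]

end Chain

section Iota
open Complex

/-- The identification `ℝ² ≃ ℂ` as a continuous linear map. -/
noncomputable def iota : E 2 →L[ℝ] ℂ :=
  Complex.ofRealCLM.comp (EuclideanSpace.proj (0 : Fin 2)) +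
    Complex.I • Complex.ofRealCLM.comp (EuclideanSpace.proj (1 : Fin 2))

theorem iota_apply (y : E 2) : iota y = (y 0 : ℂ) + (y 1 : ℂ) * Complex.I := by
  simp [iota, mul_comm]

theorem iota_ee0 : iota (ee 0) = 1 := by
  simp [iota_apply, ee, EuclideanSpace.single_apply]

theorem iota_ee1 : iota (ee 1) = Complex.I := by
  simp [iota_apply, ee, EuclideanSpace.single_apply]

theorem iota_inj {v : E 2} (h : iota v = 0) : v = 0 := by
  rw [iota_apply] at h
  rw [Complex.ext_iff] at h
  simp at h
  ext i
  fin_cases i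
  · exact h.1
  · exact h.2

theorem decomp (u : E 2) : u = u 0 • ee 0 + u 1 • ee 1 := by
  ext i
  fin_cases i <;>
    simp [ee, EuclideanSpace.single_apply]

end Iota

section Master
variable {Gf : E 2 → ℂ} {s : Set (E 2)} {x : E 2}

theorem biC (hs : IsOpen s) (hx : x ∈ s) (hG : ContDiffOn ℝ (⊤ : ℕ∞) Gf s)
    (hre : lapF (lapF (fun y => (Gf y).re)) x = 0)
    (him : lapF (lapF (fun y => (Gf y).im)) x = 0) :
    lapF (lapF Gf) x = 0 := by
  have hlapG : ContDiffOn ℝ (⊤ : ℕ∞) (lapF Gf) s := lapF_smoothOn hs hG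
  have key : ∀ T : ℂ →L[ℝ] ℝ,
      lapF (lapF (fun y => T (Gf y))) x = T (lapF (lapF Gf) x) := by
    intro T
    have h1 : lapF (fun y => T (Gf y)) =ᶠ[nhds x] fun y => T (lapF Gf y) :=
      evOn hs hx fun y hy => lapF_clm hs hy hG T
    rw [lapF_congr h1, lapF_clm hs hx hlapG T]
  have hre' := key Complex.reCLM
  have him' := key Complex.imCLM
  simp only [Complex.reCLM_apply] at hre'
  simp only [Complex.imCLM_apply] at him'
  rw [hre] at hre'
  rw [him] at him'
  exact Complex.ext (by simpa using hre'.symm) (by simpa using him'.symm)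

end Master

section Tests
variable (c : ℂ)

/-- `z - c` composed with `iota`. -/
noncomputable def chi0 : E 2 → ℂ := fun y => iota y - c

theorem chi0_smooth : ContDiff ℝ (⊤ : ℕ∞) (chi0 c) := iota.contDiff.sub contDiff_const

theorem pd_chi0 (j : Fin 2) (y : E 2) : pd j (chi0 c) y = iota (ee j) := by
  have : pd j (chi0 c) = pd j (fun y => iota y) := pd_sub_const c j
  rw [this]
  simp only [pd]
  rw [show (fun y : E 2 => iota y) = (iota : E 2 → ℂ) from rfl, iota.fderiv]

theorem lap_chi0 (y : E 2) : lapF (chi0 c) y = 0 := by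
  unfold lapF
  refine Finset.sum_eq_zero fun j _ => ?_
  have : pd j (chi0 c) = fun _ => iota (ee j) := funext fun z => pd_chi0 c j z
  rw [this, pd_const]

theorem sum_sq_iota : ∑ j : Fin 2, iota (ee j) * iota (ee j) = 0 := by
  rw [Fin.sum_univ_two, iota_ee0, iota_ee1]
  simp [Complex.I_mul_I]

noncomputable def sqc : E 2 → ℂ := fun y => chi0 c y * chi0 c y

theorem sqc_smooth : ContDiff ℝ (⊤ : ℕ∞) (sqc c) := (chi0_smooth c).mul (chi0_smooth c)

theorem lap_sqc (y : E 2) : lapF (sqc c) y = 0 := by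
  unfold sqc
  rw [lapF_mul isOpen_univ (Set.mem_univ y) (chi0_smooth c).contDiffOn
    (chi0_smooth c).contDiffOn]
  have h1 : ∀ j : Fin 2, pd j (chi0 c) y = iota (ee j) := fun j => pd_chi0 c j y
  simp only [lap_chi0, h1, mul_zero, zero_add, add_zero]
  rw [sum_sq_iota, mul_zero]

theorem pd_sqc (j : Fin 2) (y : E 2) :
    pd j (sqc c) y = 2 * chi0 c y * iota (ee j) := by
  unfold sqc
  rw [pd_mul isOpen_univ (Set.mem_univ y) (chi0_smooth c).contDiffOn
    (chi0_smooth c).contDiffOn, pd_chi0]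
  ring

noncomputable def fourc : E 2 → ℂ := fun y => sqc c y * sqc c y

theorem fourc_smooth : ContDiff ℝ (⊤ : ℕ∞) (fourc c) := (sqc_smooth c).mul (sqc_smooth c)

theorem lap_fourc (y : E 2) : lapF (fourc c) y = 0 := by
  unfold fourc
  rw [lapF_mul isOpen_univ (Set.mem_univ y) (sqc_smooth c).contDiffOn
    (sqc_smooth c).contDiffOn]
  have h1 : ∀ j : Fin 2, pd j (sqc c) y = 2 * chi0 c y * iota (ee j) :=
    fun j => pd_sqc c j y
  simp only [lap_sqc, h1, mul_zero, zero_add, add_zero]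
  have : ∑ j : Fin 2, (2 * chi0 c y * iota (ee j)) * (2 * chi0 c y * iota (ee j))
      = (2 * chi0 c y) * (2 * chi0 c y) * ∑ j : Fin 2, iota (ee j) * iota (ee j) := by
    rw [Finset.mul_sum]
    exact Finset.sum_congr rfl fun j _ => by ring
  rw [this, sum_sq_iota, mul_zero, mul_zero]

end Tests

section Main
variable {U : Set (E 2)} {φ : E 2 → E 2}

theorem lap_eq_lapF (f : E 2 → ℝ) : lap f = lapF f := rfl

noncomputable def psi (φ : E 2 → E 2) : E 2 → ℂ := fun y => iota (φ y)
noncomputable def gg (φ : E 2 → E 2) (j : Fin 2) : E 2 → ℂ := pd j (psi φ)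
noncomputable def AA (φ : E 2 → E 2) : E 2 → ℂ := lapF (psi φ)
noncomputable def qq (φ : E 2 → E 2) : E 2 → ℂ :=
  fun y => gg φ 0 y * gg φ 0 y + gg φ 1 y * gg φ 1 y

theorem ghm_univ (hU : IsOpen U) (hφ : ContDiffOn ℝ (⊤ : ℕ∞) φ U) (hGHM : IsGHM φ U)
    (Gf : E 2 → ℂ) (hGf : ContDiff ℝ (⊤ : ℕ∞) Gf) (hlap : ∀ y, lapF Gf y = 0)
    {x : E 2} (hx : x ∈ U) :
    lapF (lapF (fun y => Gf (φ y))) x = 0 := by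
  have hGφ : ContDiffOn ℝ (⊤ : ℕ∞) (fun y => Gf (φ y)) U := hGf.comp_contDiffOn hφ
  have harm : ∀ T : ℂ →L[ℝ] ℝ, HarmonicOn (fun z => T (Gf z)) Set.univ := by
    intro T
    refine ⟨(T.contDiff.comp hGf).contDiffOn, fun z _ => ?_⟩
    show lapF (fun z => T (Gf z)) z = 0
    rw [lapF_clm isOpen_univ (Set.mem_univ z) hGf.contDiffOn T, hlap, map_zero]
  have hre := hGHM Set.univ isOpen_univ _ (harm Complex.reCLM)
  have him := hGHM Set.univ isOpen_univ _ (harm Complex.imCLM)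
  have hxm : x ∈ U ∩ φ ⁻¹' Set.univ := ⟨hx, Set.mem_univ _⟩
  have hre2 : lapF (lapF (fun y => (Gf (φ y)).re)) x = 0 := hre.2 x hxm
  have him2 : lapF (lapF (fun y => (Gf (φ y)).im)) x = 0 := him.2 x hxm
  exact biC hU hx hGφ hre2 him2

theorem q_zero (hU : IsOpen U) (hφ : ContDiffOn ℝ (⊤ : ℕ∞) φ U) (hGHM : IsGHM φ U) :
    ∀ x ∈ U, qq φ x = 0 := by
  intro x₀ hx₀
  have hψ : ContDiffOn ℝ (⊤ : ℕ∞) (psi φ) U := iota.contDiff.comp_contDiffOn hφ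
  have hgs : ∀ j, ContDiffOn ℝ (⊤ : ℕ∞) (gg φ j) U := fun j => pd_smoothOn hU hψ j
  have hAs : ContDiffOn ℝ (⊤ : ℕ∞) (AA φ) U := lapF_smoothOn hU hψ
  have hqs : ContDiffOn ℝ (⊤ : ℕ∞) (qq φ) U := ((hgs 0).mul (hgs 0)).add ((hgs 1).mul (hgs 1))
  set c := psi φ x₀ with hc
  set χ : E 2 → ℂ := fun y => psi φ y - c with hχ
  have hχs : ContDiffOn ℝ (⊤ : ℕ∞) χ U := hψ.sub contDiffOn_const
  set χ2 : E 2 → ℂ := fun y => χ y * χ y with hχ2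
  have hχ2s : ContDiffOn ℝ (⊤ : ℕ∞) χ2 U := hχs.mul hχs
  have hpdχ : ∀ (j : Fin 2) y, pd j χ y = gg φ j y := by
    intro j y
    have h := pd_sub_const (f := psi φ) c j
    calc pd j χ y = pd j (psi φ) y := by rw [hχ, h]
    _ = gg φ j y := rfl
  have hlapχ : ∀ y, lapF χ y = AA φ y := fun y => by
    rw [hχ]; exact lapF_sub_const c
  have hχx₀ : χ x₀ = 0 := by rw [hχ]; simp [hc]
  have hχ2x₀ : χ2 x₀ = 0 := by rw [hχ2]; simp only; rw [hχx₀]; ring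
  have hlapχ2 : ∀ y ∈ U, lapF χ2 y = 2 * (χ y * AA φ y) + 2 * qq φ y := by
    intro y hy
    rw [hχ2, lapF_mul hU hy hχs hχs, Fin.sum_univ_two, hpdχ 0 y, hpdχ 1 y, hlapχ]
    show _ = 2 * (χ y * AA φ y) + 2 * (gg φ 0 y * gg φ 0 y + gg φ 1 y * gg φ 1 y)
    ring
  have hpdχ2 : ∀ (j : Fin 2), ∀ y ∈ U, pd j χ2 y = 2 * (χ y * gg φ j y) := by
    intro j y hy
    rw [hχ2, pd_mul hU hy hχs hχs, hpdχ]
    ring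
  have h4 : lapF (lapF (fun y => fourc c (φ y))) x₀ = 0 :=
    ghm_univ hU hφ hGHM (fourc c) (fourc_smooth c) (lap_fourc c) hx₀
  have hfid : (fun y => fourc c (φ y)) = fun y => χ2 y * χ2 y := rfl
  rw [hfid] at h4
  have hev : lapF (fun y => χ2 y * χ2 y) =ᶠ[nhds x₀]
      fun y => 4 * (χ y * (χ2 y * AA φ y)) + 12 * (χ2 y * qq φ y) := by
    refine evOn hU hx₀ fun y hy => ?_
    rw [lapF_mul hU hy hχ2s hχ2s, hlapχ2 y hy, Fin.sum_univ_two,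
      hpdχ2 0 y hy, hpdχ2 1 y hy]
    have e1 : χ2 y = χ y * χ y := rfl
    have e2 : qq φ y = gg φ 0 y * gg φ 0 y + gg φ 1 y * gg φ 1 y := rfl
    rw [e1, e2]
    ring
  have t1s : ContDiffOn ℝ (⊤ : ℕ∞) (fun y => χ y * (χ2 y * AA φ y)) U := hχs.mul (hχ2s.mul hAs)
  have t2s : ContDiffOn ℝ (⊤ : ℕ∞) (fun y => χ2 y * qq φ y) U := hχ2s.mul hqs
  have hstep : lapF (lapF (fun y => χ2 y * χ2 y)) x₀ = 24 * (qq φ x₀ * qq φ x₀) := by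
    rw [lapF_congr hev,
      lapF_add hU hx₀ (contDiffOn_const.mul t1s) (contDiffOn_const.mul t2s),
      lapF_const_mul hU hx₀ t1s, lapF_const_mul hU hx₀ t2s]
    have hz1 : lapF (fun y => χ y * (χ2 y * AA φ y)) x₀ = 0 := by
      rw [lapF_mul hU hx₀ hχs (hχ2s.mul hAs), Fin.sum_univ_two]
      have hpd1 : ∀ j : Fin 2, pd j (fun y => χ2 y * AA φ y) x₀
          = χ2 x₀ * pd j (AA φ) x₀ + AA φ x₀ * pd j χ2 x₀ := fun j =>
        pd_mul hU hx₀ hχ2s hAs j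
      rw [hpd1 0, hpd1 1, hpdχ2 0 x₀ hx₀, hpdχ2 1 x₀ hx₀, hχx₀, hχ2x₀]
      ring
    have hz2 : lapF (fun y => χ2 y * qq φ y) x₀ = 2 * (qq φ x₀ * qq φ x₀) := by
      rw [lapF_mul hU hx₀ hχ2s hqs, Fin.sum_univ_two, hpdχ2 0 x₀ hx₀,
        hpdχ2 1 x₀ hx₀, hlapχ2 x₀ hx₀, hχx₀, hχ2x₀]
      ring
    rw [hz1, hz2]
    ring
  rw [hstep] at h4
  have h5 : qq φ x₀ * qq φ x₀ = 0 := by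
    have h24 : (24 : ℂ) ≠ 0 := by norm_num
    exact (mul_eq_zero.mp h4).resolve_left h24
  exact mul_self_eq_zero.mp h5

theorem A_zero (hU : IsOpen U) (hφ : ContDiffOn ℝ (⊤ : ℕ∞) φ U) (hGHM : IsGHM φ U) :
    ∀ x ∈ U, AA φ x = 0 := by
  intro x hx
  have hq0 := q_zero hU hφ hGHM
  have hψ : ContDiffOn ℝ (⊤ : ℕ∞) (psi φ) U := iota.contDiff.comp_contDiffOn hφ
  have hgs : ∀ j, ContDiffOn ℝ (⊤ : ℕ∞) (gg φ j) U := fun j => pd_smoothOn hU hψ j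
  have hAs : ContDiffOn ℝ (⊤ : ℕ∞) (AA φ) U := lapF_smoothOn hU hψ
  set c := psi φ x with hc
  set χ : E 2 → ℂ := fun y => psi φ y - c with hχ
  have hχs : ContDiffOn ℝ (⊤ : ℕ∞) χ U := hψ.sub contDiffOn_const
  have hpdχ : ∀ (j : Fin 2) y, pd j χ y = gg φ j y := by
    intro j y
    have h := pd_sub_const (f := psi φ) c j
    calc pd j χ y = pd j (psi φ) y := by rw [hχ, h]
    _ = gg φ j y := rfl
  have hlapχ : ∀ y, lapF χ y = AA φ y := fun y => by
    rw [hχ]; exact lapF_sub_const c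
  have hχx : χ x = 0 := by rw [hχ]; simp [hc]
  -- the k = 2 biharmonic identity
  have h2 : lapF (lapF (fun y => sqc c (φ y))) x = 0 :=
    ghm_univ hU hφ hGHM (sqc c) (sqc_smooth c) (lap_sqc c) hx
  have hfid : (fun y => sqc c (φ y)) = fun y => χ y * χ y := rfl
  rw [hfid] at h2
  have hev : lapF (fun y => χ y * χ y) =ᶠ[nhds x]
      fun y => 2 * (χ y * AA φ y) + 2 * qq φ y := by
    refine evOn hU hx fun y hy => ?_
    rw [lapF_mul hU hy hχs hχs, Fin.sum_univ_two, hpdχ 0 y, hpdχ 1 y, hlapχ]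
    have e2 : qq φ y = gg φ 0 y * gg φ 0 y + gg φ 1 y * gg φ 1 y := rfl
    rw [e2]
    ring
  have t1s : ContDiffOn ℝ (⊤ : ℕ∞) (fun y => χ y * AA φ y) U := hχs.mul hAs
  have hqev : qq φ =ᶠ[nhds x] fun _ => (0 : ℂ) := evOn hU hx hq0
  have hstep : lapF (lapF (fun y => χ y * χ y)) x
      = 2 * (AA φ x * AA φ x
          + 2 * (gg φ 0 x * pd 0 (AA φ) x + gg φ 1 x * pd 1 (AA φ) x)) := by
    rw [lapF_congr hev]
    have hqsm : ContDiffOn ℝ (⊤ : ℕ∞) (qq φ) U :=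
      ((hgs 0).mul (hgs 0)).add ((hgs 1).mul (hgs 1))
    rw [lapF_add hU hx (contDiffOn_const.mul t1s) (contDiffOn_const.mul hqsm),
      lapF_const_mul hU hx t1s, lapF_const_mul hU hx hqsm]
    have hzq : lapF (qq φ) x = 0 := by
      rw [lapF_congr hqev, lapF_const]
    have hz1 : lapF (fun y => χ y * AA φ y) x
        = AA φ x * AA φ x
          + 2 * (gg φ 0 x * pd 0 (AA φ) x + gg φ 1 x * pd 1 (AA φ) x) := by
      rw [lapF_mul hU hx hχs hAs, Fin.sum_univ_two, hpdχ 0 x, hpdχ 1 x,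
        hlapχ, hχx]
      ring
    rw [hzq, hz1]
    ring
  rw [hstep] at h2
  have hdagger : AA φ x * AA φ x
      + 2 * (gg φ 0 x * pd 0 (AA φ) x + gg φ 1 x * pd 1 (AA φ) x) = 0 := by
    have h2' : (2 : ℂ) ≠ 0 := by norm_num
    exact (mul_eq_zero.mp h2).resolve_left h2'
  by_cases hg0 : gg φ 0 x = 0
  · -- then gg φ 1 x = 0 as well
    have hqx : gg φ 0 x * gg φ 0 x + gg φ 1 x * gg φ 1 x = 0 := hq0 x hx
    have hg1 : gg φ 1 x = 0 := by
      rw [hg0] at hqx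
      simpa [mul_self_eq_zero] using hqx
    rw [hg0, hg1] at hdagger
    have : AA φ x * AA φ x = 0 := by linear_combination hdagger
    exact mul_self_eq_zero.mp this
  · -- gradient nonvanishing: use the differentiated conformality relation
    have hqev : qq φ =ᶠ[nhds x] fun _ => (0 : ℂ) := evOn hU hx hq0
    have hpdq : ∀ k : Fin 2, pd k (qq φ) x = 0 := by
      intro k
      rw [pd_congr_pt hqev k, pd_const]
    have hexp : ∀ k : Fin 2, pd k (qq φ) x
        = 2 * (gg φ 0 x * pd k (gg φ 0) x + gg φ 1 x * pd k (gg φ 1) x) := by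
      intro k
      have h1 : pd k (qq φ) x
          = pd k (fun y => gg φ 0 y * gg φ 0 y) x
            + pd k (fun y => gg φ 1 y * gg φ 1 y) x := by
        have := pd_add hU hx ((hgs 0).mul (hgs 0)) ((hgs 1).mul (hgs 1)) k
        exact this
      rw [h1, pd_mul hU hx (hgs 0) (hgs 0) k, pd_mul hU hx (hgs 1) (hgs 1) k]
      ring
    have e0 : gg φ 0 x * pd 0 (gg φ 0) x + gg φ 1 x * pd 0 (gg φ 1) x = 0 := by
      have h := (hexp 0).symm.trans (hpdq 0)
      linear_combination h / 2
    have e1 : gg φ 0 x * pd 1 (gg φ 0) x + gg φ 1 x * pd 1 (gg φ 1) x = 0 := by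
      have h := (hexp 1).symm.trans (hpdq 1)
      linear_combination h / 2
    have hsym : pd 1 (gg φ 0) x = pd 0 (gg φ 1) x := pd_comm hU hx hψ 0 1
    have hAx : AA φ x = pd 0 (gg φ 0) x + pd 1 (gg φ 1) x := by
      show lapF (psi φ) x = _
      unfold lapF
      rw [Fin.sum_univ_two]
      rfl
    have hqx : gg φ 0 x * gg φ 0 x + gg φ 1 x * gg φ 1 x = 0 := hq0 x hx
    set a := gg φ 0 x
    set b := gg φ 1 x
    set P := pd 0 (gg φ 0) x
    set Q := pd 1 (gg φ 0) x
    set R := pd 0 (gg φ 1) x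
    set S := pd 1 (gg φ 1) x
    have key : a * a * (P + S) = 0 := by
      linear_combination a * e0 - b * e1 + S * hqx + a * b * hsym
    have ha2 : a * a ≠ 0 := mul_ne_zero hg0 hg0
    have : P + S = 0 := by
      rcases mul_eq_zero.mp key with h | h
      · exact absurd h ha2
      · exact h
    rw [hAx]
    exact this

end Main
end S7

open S7 in

/-- a smooth generalized harmonic morphism `φ : U → ℝ²` on an open
`U ⊆ ℝ²` is a harmonic morphism. -/
theorem stmt_7 (U : Set (E 2)) (hU : IsOpen U)
    (φ : E 2 → E 2) (hφ : ContDiffOn ℝ (⊤ : ℕ∞) φ U) (hGHM : IsGHM φ U) :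
    IsHM φ U := by
  intro V hV f hf
  have hA0 := A_zero hU hφ hGHM
  have hsubV : U ∩ φ ⁻¹' V ⊆ φ ⁻¹' V := Set.inter_subset_right
  constructor
  · exact hf.1.comp (hφ.mono Set.inter_subset_left) hsubV
  · intro x hx
    obtain ⟨hxU, hxV⟩ := hx
    show lapF (fun y => f (φ y)) x = 0
    rw [lapF_comp hU hV hφ hf.1 hxU hxV]
    -- the vector Laplacian of φ vanishes
    have hlapφ : lapF φ x = 0 := by
      have h1 : lapF (fun y => iota (φ y)) x = iota (lapF φ x) :=
        lapF_clm hU hxU hφ iota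
      have h2 : AA φ x = 0 := hA0 x hxU
      have h3 : iota (lapF φ x) = 0 := by
        rw [← h1]
        exact h2
      exact iota_inj h3
    rw [hlapφ, map_zero, add_zero, Fin.sum_univ_two]
    -- conformality
    have hq0 := q_zero hU hφ hGHM x hxU
    have hgv : ∀ j : Fin 2, gg φ j x = iota (pd j φ x) := fun j =>
      pd_clm hU hxU hφ iota j
    set v0 := pd 0 φ x with hv0
    set v1 := pd 1 φ x with hv1
    have hqx : iota v0 * iota v0 + iota v1 * iota v1 = 0 := by
      rw [← hgv 0, ← hgv 1]
      exact hq0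
    rw [iota_apply, iota_apply] at hqx
    rw [Complex.ext_iff] at hqx
    simp only [Complex.add_re, Complex.add_im, Complex.mul_re, Complex.mul_im,
      Complex.ofReal_re, Complex.ofReal_im, Complex.I_re, Complex.I_im,
      Complex.zero_re, Complex.zero_im] at hqx
    obtain ⟨hre, him⟩ := hqx
    -- second derivative of f at φ x
    set D2 := fderiv ℝ (fderiv ℝ f) (φ x) with hD2
    have hharm : D2 (ee 0) (ee 0) + D2 (ee 1) (ee 1) = 0 := by
      have h0 : lapF f (φ x) = 0 := hf.2 (φ x) hxV
      unfold lapF at h0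
      rw [Fin.sum_univ_two, pd_pd_eq hV hxV hf.1 0 0, pd_pd_eq hV hxV hf.1 1 1] at h0
      exact h0
    have hsym : D2 (ee 0) (ee 1) = D2 (ee 1) (ee 0) := by
      have h01 := pd_pd_eq hV hxV hf.1 1 0
      have h10 := pd_pd_eq hV hxV hf.1 0 1
      have hc := pd_comm hV hxV hf.1 0 1
      rw [hD2, ← h01, ← h10]
      exact hc.symm
    rw [decomp v0, decomp v1]
    simp only [map_add, map_smul, ContinuousLinearMap.add_apply,
      ContinuousLinearMap.smul_apply, smul_eq_mul, ← hD2]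
    linear_combination (D2 (ee 0) (ee 0)) * hre
      + ((D2 (ee 0) (ee 1) + D2 (ee 1) (ee 0)) / 2) * him
      + (v0 1 * v0 1 + v1 1 * v1 1) * hharm
      + (v0 0 * v0 1 + v1 0 * v1 1 - v0 1 * v0 0 - v1 1 * v1 0) * hsym
end
end

section
/- Let Ω ⊆ ℝ² be an open set and u, v : Ω → ℝ smooth functions satisfying u_y = v_x on Ω together with the four equations: (1) u_{xx} + u_{yy} − u u_x − v u_y = 0; (2) v_{xx} + v_{yy} − u v_x − v v_y = 0; (3) u² − 2u_x − v² + 2v_y = 0; (4) u v − u_y − v_x = 0. Then on Ω: u_y = v_x = (1/2) u v, and moreover u v_y − v v_x = 0 and u u_y − v u_x = 0. -/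
set_option maxHeartbeats 1000000

noncomputable section

/-- Partial derivative in the `x`-direction of a function on `ℝ²`. -/
noncomputable def px (f : ℝ × ℝ → ℝ) (p : ℝ × ℝ) : ℝ := fderiv ℝ f p (1, 0)

/-- Partial derivative in the `y`-direction of a function on `ℝ²`. -/
noncomputable def py (f : ℝ × ℝ → ℝ) (p : ℝ × ℝ) : ℝ := fderiv ℝ f p (0, 1)

lemma fderiv_zero_of_zeroOn {Ω : Set (ℝ × ℝ)} (hΩ : IsOpen Ω) {f : ℝ × ℝ → ℝ}
    (hf : ∀ q ∈ Ω, f q = 0) {p : ℝ × ℝ} (hp : p ∈ Ω) : fderiv ℝ f p = 0 := by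
  have h : f =ᶠ[nhds p] (fun _ => (0:ℝ)) := Filter.eventually_of_mem (hΩ.mem_nhds hp) hf
  rw [h.fderiv_eq]
  exact fderiv_const_apply 0

lemma pd_pd {f : ℝ × ℝ → ℝ} {p : ℝ × ℝ} (hf : DifferentiableAt ℝ (fderiv ℝ f) p)
    (w e : ℝ × ℝ) :
    fderiv ℝ (fun q => fderiv ℝ f q w) p e = fderiv ℝ (fderiv ℝ f) p e w := by
  have := fderiv_clm_apply (c := fderiv ℝ f) (u := fun _ => w) hf (differentiableAt_const w)
  rw [this]
  simp

lemma mixed_symm {f : ℝ × ℝ → ℝ} {p : ℝ × ℝ} (hf : ContDiffAt ℝ (⊤ : ℕ∞) f p) :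
    px (py f) p = py (px f) p := by
  have hf' : DifferentiableAt ℝ (fderiv ℝ f) p :=
    (hf.fderiv_right (m := (⊤ : ℕ∞)) (by simp)).differentiableAt (by simp)
  have hs := hf.isSymmSndFDerivAt (by rw [minSmoothness_of_isRCLikeNormedField]; exact WithTop.coe_le_coe.mpr le_top)
  show fderiv ℝ (fun q => fderiv ℝ f q (0,1)) p (1,0)
      = fderiv ℝ (fun q => fderiv ℝ f q (1,0)) p (0,1)
  rw [pd_pd hf', pd_pd hf']
  exact hs _ _

/-- if smooth `u, v` on an open `Ω ⊆ ℝ²` satisfy `u_y = v_x` and the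
four equations (1)–(4), then `u_y = v_x = (1/2)uv`, `u v_y − v v_x = 0` and
`u u_y − v u_x = 0` on `Ω`. -/
theorem stmt_10 (Ω : Set (ℝ × ℝ)) (hΩ : IsOpen Ω)
    (u v : ℝ × ℝ → ℝ) (hu : ContDiffOn ℝ (⊤ : ℕ∞) u Ω) (hv : ContDiffOn ℝ (⊤ : ℕ∞) v Ω)
    (hsym : ∀ p ∈ Ω, py u p = px v p)
    (h1 : ∀ p ∈ Ω, px (px u) p + py (py u) p - u p * px u p - v p * py u p = 0)
    (h2 : ∀ p ∈ Ω, px (px v) p + py (py v) p - u p * px v p - v p * py v p = 0)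
    (h3 : ∀ p ∈ Ω, (u p) ^ 2 - 2 * px u p - (v p) ^ 2 + 2 * py v p = 0)
    (h4 : ∀ p ∈ Ω, u p * v p - py u p - px v p = 0) :
    ∀ p ∈ Ω,
      py u p = (1 / 2) * (u p * v p) ∧
      px v p = (1 / 2) * (u p * v p) ∧
      u p * py v p - v p * px v p = 0 ∧
      u p * py u p - v p * px u p = 0 := by
  intro p hp
  have hmem : Ω ∈ nhds p := hΩ.mem_nhds hp
  have hcu : ContDiffAt ℝ (⊤ : ℕ∞) u p := hu.contDiffAt hmem
  have hcv : ContDiffAt ℝ (⊤ : ℕ∞) v p := hv.contDiffAt hmem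
  have hcu' : ContDiffAt ℝ (⊤ : ℕ∞) (fderiv ℝ u) p := hcu.fderiv_right (by simp)
  have hcv' : ContDiffAt ℝ (⊤ : ℕ∞) (fderiv ℝ v) p := hcv.fderiv_right (by simp)
  have hud : DifferentiableAt ℝ u p := hcu.differentiableAt (by simp)
  have hvd : DifferentiableAt ℝ v p := hcv.differentiableAt (by simp)
  have hAd : DifferentiableAt ℝ (px u) p :=
    (hcu'.clm_apply contDiffAt_const).differentiableAt (by simp)
  have hBd : DifferentiableAt ℝ (py u) p :=
    (hcu'.clm_apply contDiffAt_const).differentiableAt (by simp)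
  have hCd : DifferentiableAt ℝ (px v) p :=
    (hcv'.clm_apply contDiffAt_const).differentiableAt (by simp)
  have hDd : DifferentiableAt ℝ (py v) p :=
    (hcv'.clm_apply contDiffAt_const).differentiableAt (by simp)
  -- derivative of the symmetry relation:  py u - px v = 0 on Ω
  have dS : fderiv ℝ (fun q => py u q - px v q) p = 0 :=
    fderiv_zero_of_zeroOn hΩ (fun q hq => by rw [hsym q hq]; ring) hp
  have HS : HasFDerivAt (fun q => py u q - px v q)
      (fderiv ℝ (py u) p - fderiv ℝ (px v) p) p := hBd.hasFDerivAt.sub hCd.hasFDerivAt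
  have eS := HS.fderiv.symm.trans dS
  have eSx : px (py u) p = px (px v) p := by
    have := congrArg (fun L : (ℝ×ℝ) →L[ℝ] ℝ => L (1,0)) eS
    simp only [ContinuousLinearMap.sub_apply, ContinuousLinearMap.zero_apply] at this
    have h := sub_eq_zero.mp this
    exact h
  have eSy : py (py u) p = py (px v) p := by
    have := congrArg (fun L : (ℝ×ℝ) →L[ℝ] ℝ => L (0,1)) eS
    simp only [ContinuousLinearMap.sub_apply, ContinuousLinearMap.zero_apply] at this
    exact sub_eq_zero.mp this
  -- derivative of eq. (4): u*v - py u - px v = 0 on Ω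
  have dF4 : fderiv ℝ (fun q => u q * v q - py u q - px v q) p = 0 :=
    fderiv_zero_of_zeroOn hΩ (fun q hq => h4 q hq) hp
  have HF4 : HasFDerivAt (fun q => u q * v q - py u q - px v q)
      ((u p • fderiv ℝ v p + v p • fderiv ℝ u p) - fderiv ℝ (py u) p - fderiv ℝ (px v) p) p :=
    ((hud.hasFDerivAt.mul hvd.hasFDerivAt).sub hBd.hasFDerivAt).sub hCd.hasFDerivAt
  have eF4 := HF4.fderiv.symm.trans dF4
  have e4x : u p * px v p + v p * px u p - px (py u) p - px (px v) p = 0 := by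
    have := congrArg (fun L : (ℝ×ℝ) →L[ℝ] ℝ => L (1,0)) eF4
    simpa [ContinuousLinearMap.sub_apply, ContinuousLinearMap.add_apply,
      ContinuousLinearMap.smul_apply, smul_eq_mul, px, py, sub_eq_zero] using this
  have e4y : u p * py v p + v p * py u p - py (py u) p - py (px v) p = 0 := by
    have := congrArg (fun L : (ℝ×ℝ) →L[ℝ] ℝ => L (0,1)) eF4
    simpa [ContinuousLinearMap.sub_apply, ContinuousLinearMap.add_apply,
      ContinuousLinearMap.smul_apply, smul_eq_mul, px, py, sub_eq_zero] using this
  -- derivative of eq. (3): u*u - 2 px u - v*v + 2 py v = 0 on Ω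
  have dF3 : fderiv ℝ (fun q => u q * u q - 2 * px u q - v q * v q + 2 * py v q) p = 0 :=
    fderiv_zero_of_zeroOn hΩ (fun q hq => by have := h3 q hq; nlinarith [this]) hp
  have HF3 : HasFDerivAt (fun q => u q * u q - 2 * px u q - v q * v q + 2 * py v q)
      ((((u p • fderiv ℝ u p + u p • fderiv ℝ u p) - (2:ℝ) • fderiv ℝ (px u) p)
        - (v p • fderiv ℝ v p + v p • fderiv ℝ v p)) + (2:ℝ) • fderiv ℝ (py v) p) p :=
    (((hud.hasFDerivAt.mul hud.hasFDerivAt).sub (hAd.hasFDerivAt.const_mul 2)).sub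
      (hvd.hasFDerivAt.mul hvd.hasFDerivAt)).add (hDd.hasFDerivAt.const_mul 2)
  have eF3 := HF3.fderiv.symm.trans dF3
  have e3x : 2 * (u p * px u p) - 2 * px (px u) p - 2 * (v p * px v p) + 2 * px (py v) p = 0 := by
    have := congrArg (fun L : (ℝ×ℝ) →L[ℝ] ℝ => L (1,0)) eF3
    simp only [ContinuousLinearMap.sub_apply, ContinuousLinearMap.add_apply,
      ContinuousLinearMap.smul_apply, smul_eq_mul, ContinuousLinearMap.zero_apply] at this
    show 2 * (u p * fderiv ℝ u p (1,0)) - 2 * fderiv ℝ (px u) p (1,0)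
      - 2 * (v p * fderiv ℝ v p (1,0)) + 2 * fderiv ℝ (py v) p (1,0) = 0
    linarith [this]
  have e3y : 2 * (u p * py u p) - 2 * py (px u) p - 2 * (v p * py v p) + 2 * py (py v) p = 0 := by
    have := congrArg (fun L : (ℝ×ℝ) →L[ℝ] ℝ => L (0,1)) eF3
    simp only [ContinuousLinearMap.sub_apply, ContinuousLinearMap.add_apply,
      ContinuousLinearMap.smul_apply, smul_eq_mul, ContinuousLinearMap.zero_apply] at this
    show 2 * (u p * fderiv ℝ u p (0,1)) - 2 * fderiv ℝ (px u) p (0,1)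
      - 2 * (v p * fderiv ℝ v p (0,1)) + 2 * fderiv ℝ (py v) p (0,1) = 0
    linarith [this]
  -- Schwarz symmetry for u and v
  have msu : px (py u) p = py (px u) p := mixed_symm hcu
  have msv : px (py v) p = py (px v) p := mixed_symm hcv
  -- now pure (linear) algebra
  have hb := hsym p hp
  have h4p := h4 p hp
  have h1p := h1 p hp
  have h2p := h2 p hp
  refine ⟨by linarith, by linarith, by linarith, by linarith⟩
end
end

section
/- Let C₁, C₂ be real constants and let Ω = {(x, y) ∈ ℝ² : C₁ x + y + C₂ ≠ 0}. Define u(x, y) = −2C₁/(C₁ x + y + C₂) and v(x, y) = −2/(C₁ x + y + C₂) on Ω. Then u_y = v_x on Ω and the pair (u, v) satisfies all four equations: (1) u_{xx} + u_{yy} − u u_x − v u_y = 0; (2) v_{xx} + v_{yy} − u v_x − v v_y = 0; (3) u² − 2u_x − v² + 2v_y = 0; (4) u v − u_y − v_x = 0. -/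
/-!
Both `u` and `v` have the form `k / ℓ` with `ℓ = C₁ x + y + C₂` affine, so by the chain rule each
`∂ₓ` contributes a factor `C₁` and each `∂_y` a factor `1` to the one-variable derivatives of
`t ↦ k / t`. Equations (1)–(4) then become rational identities in `ℓ`.
-/

noncomputable section

open Filter Topology

section AffineComposition

variable {C₁ C₂ : ℝ} {p : ℝ × ℝ} {g : ℝ → ℝ}

theorem hasFDerivAt_affine (C₁ C₂ : ℝ) (p : ℝ × ℝ) :
    HasFDerivAt (fun q : ℝ × ℝ => C₁ * q.1 + q.2 + C₂)
      (C₁ • ContinuousLinearMap.fst ℝ ℝ ℝ + ContinuousLinearMap.snd ℝ ℝ ℝ) p :=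
  ((hasFDerivAt_fst.const_mul C₁).add hasFDerivAt_snd).add_const C₂

theorem HasDerivAt.hasFDerivAt_comp_affine {g' : ℝ} (hg : HasDerivAt g g' (C₁ * p.1 + p.2 + C₂)) :
    HasFDerivAt (fun q => g (C₁ * q.1 + q.2 + C₂))
      (g' • (C₁ • ContinuousLinearMap.fst ℝ ℝ ℝ + ContinuousLinearMap.snd ℝ ℝ ℝ)) p :=
  hg.comp_hasFDerivAt p (hasFDerivAt_affine C₁ C₂ p)

theorem px_comp_affine {g' : ℝ} (hg : HasDerivAt g g' (C₁ * p.1 + p.2 + C₂)) :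
    px (fun q => g (C₁ * q.1 + q.2 + C₂)) p = C₁ * g' := by
  rw [px, hg.hasFDerivAt_comp_affine.fderiv]
  simp [mul_comm]

theorem py_comp_affine {g' : ℝ} (hg : HasDerivAt g g' (C₁ * p.1 + p.2 + C₂)) :
    py (fun q => g (C₁ * q.1 + q.2 + C₂)) p = g' := by
  rw [py, hg.hasFDerivAt_comp_affine.fderiv]
  simp

variable {g' : ℝ → ℝ} {g'' : ℝ}

theorem px_px_comp_affine (hg : ∀ᶠ t in 𝓝 (C₁ * p.1 + p.2 + C₂), HasDerivAt g (g' t) t)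
    (hg' : HasDerivAt g' g'' (C₁ * p.1 + p.2 + C₂)) :
    px (px fun q => g (C₁ * q.1 + q.2 + C₂)) p = C₁ ^ 2 * g'' := by
  have hev : px (fun q => g (C₁ * q.1 + q.2 + C₂)) =ᶠ[𝓝 p] fun q => C₁ * g' (C₁ * q.1 + q.2 + C₂) :=
    ((hasFDerivAt_affine C₁ C₂ p).continuousAt.eventually hg).mono fun q hq => px_comp_affine hq
  rw [px, hev.fderiv_eq, ← px, px_comp_affine (hg'.const_mul C₁)]
  ring

theorem py_py_comp_affine (hg : ∀ᶠ t in 𝓝 (C₁ * p.1 + p.2 + C₂), HasDerivAt g (g' t) t)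
    (hg' : HasDerivAt g' g'' (C₁ * p.1 + p.2 + C₂)) :
    py (py fun q => g (C₁ * q.1 + q.2 + C₂)) p = g'' := by
  have hev : py (fun q => g (C₁ * q.1 + q.2 + C₂)) =ᶠ[𝓝 p] fun q => g' (C₁ * q.1 + q.2 + C₂) :=
    ((hasFDerivAt_affine C₁ C₂ p).continuousAt.eventually hg).mono fun q hq => py_comp_affine hq
  rw [py, hev.fderiv_eq, ← py, py_comp_affine hg']

end AffineComposition

theorem hasDerivAt_const_div (k : ℝ) {t : ℝ} (ht : t ≠ 0) :
    HasDerivAt (fun s => k / s) (-k / t ^ 2) t :=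
  ((hasDerivAt_const t k).div (hasDerivAt_id t) ht).congr_deriv (by simp)

theorem hasDerivAt_const_div_sq (k : ℝ) {t : ℝ} (ht : t ≠ 0) :
    HasDerivAt (fun s => k / s ^ 2) (-2 * k / t ^ 3) t :=
  ((hasDerivAt_const t k).div (hasDerivAt_pow 2 t) (pow_ne_zero 2 ht)).congr_deriv
    (by norm_num; field_simp)

section ReciprocalOfAffine

variable {C₁ C₂ : ℝ} {p : ℝ × ℝ} (k : ℝ)

theorem px_const_div_affine (hp : C₁ * p.1 + p.2 + C₂ ≠ 0) :
    px (fun q => k / (C₁ * q.1 + q.2 + C₂)) p = C₁ * (-k / (C₁ * p.1 + p.2 + C₂) ^ 2) :=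
  px_comp_affine (hasDerivAt_const_div k hp)

theorem py_const_div_affine (hp : C₁ * p.1 + p.2 + C₂ ≠ 0) :
    py (fun q => k / (C₁ * q.1 + q.2 + C₂)) p = -k / (C₁ * p.1 + p.2 + C₂) ^ 2 :=
  py_comp_affine (hasDerivAt_const_div k hp)

theorem px_px_const_div_affine (hp : C₁ * p.1 + p.2 + C₂ ≠ 0) :
    px (px fun q => k / (C₁ * q.1 + q.2 + C₂)) p
      = C₁ ^ 2 * (2 * k / (C₁ * p.1 + p.2 + C₂) ^ 3) := by
  rw [px_px_comp_affine ((eventually_ne_nhds hp).mono fun t ht => hasDerivAt_const_div k ht)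
    (hasDerivAt_const_div_sq (-k) hp)]
  ring

theorem py_py_const_div_affine (hp : C₁ * p.1 + p.2 + C₂ ≠ 0) :
    py (py fun q => k / (C₁ * q.1 + q.2 + C₂)) p = 2 * k / (C₁ * p.1 + p.2 + C₂) ^ 3 := by
  rw [py_py_comp_affine ((eventually_ne_nhds hp).mono fun t ht => hasDerivAt_const_div k ht)
    (hasDerivAt_const_div_sq (-k) hp)]
  ring

end ReciprocalOfAffine

/-- the pair `u = −2C₁/(C₁x + y + C₂)`, `v = −2/(C₁x + y + C₂)` satisfies
`u_y = v_x` and the four generalized-harmonic-morphism equations (1)–(4) on the set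
where `C₁ x + y + C₂ ≠ 0`. -/
theorem stmt_13 (C₁ C₂ : ℝ) (u v : ℝ × ℝ → ℝ)
    (hu : ∀ p : ℝ × ℝ, u p = -2 * C₁ / (C₁ * p.1 + p.2 + C₂))
    (hv : ∀ p : ℝ × ℝ, v p = -2 / (C₁ * p.1 + p.2 + C₂)) :
    ∀ p ∈ {q : ℝ × ℝ | C₁ * q.1 + q.2 + C₂ ≠ 0},
      py u p = px v p ∧
      px (px u) p + py (py u) p - u p * px u p - v p * py u p = 0 ∧
      px (px v) p + py (py v) p - u p * px v p - v p * py v p = 0 ∧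
      (u p) ^ 2 - 2 * px u p - (v p) ^ 2 + 2 * py v p = 0 ∧
      u p * v p - py u p - px v p = 0 := by
  intro p hp
  obtain rfl : u = fun q => -2 * C₁ / (C₁ * q.1 + q.2 + C₂) := funext hu
  obtain rfl : v = fun q => -2 / (C₁ * q.1 + q.2 + C₂) := funext hv
  simp only [px_px_const_div_affine _ hp, py_py_const_div_affine _ hp, px_const_div_affine _ hp,
    py_const_div_affine _ hp]
  refine ⟨by ring, ?_, ?_, ?_, ?_⟩ <;> field_simp <;> ring
end
end

section
/- Let U ⊆ ℝ^m and V ⊆ ℝ^n be open sets, ψ : U → ℝ^k a smooth generalized harmonic morphism, and φ : V → ℝ^k a smooth harmonic morphism. Then their direct sum ψ ⊕ φ : U × V → ℝ^k, defined by (ψ ⊕ φ)(x, y) = ψ(x) + φ(y) on the open set U × V ⊆ ℝ^{m+n}, is a generalized harmonic morphism. -/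
open scoped BigOperators RealInnerProductSpace

noncomputable section

/-- First factor of the splitting `ℝ^{m+n} ≅ ℝ^m × ℝ^n`. -/
noncomputable def fstPart {m n : ℕ} (z : E (m + n)) : E m :=
  WithLp.toLp 2 (fun i : Fin m => z (Fin.castAdd n i))

/-- Second factor of the splitting `ℝ^{m+n} ≅ ℝ^m × ℝ^n`. -/
noncomputable def sndPart {m n : ℕ} (z : E (m + n)) : E n :=
  WithLp.toLp 2 (fun j : Fin n => z (Fin.natAdd m j))

namespace Kit

/-! ### Basic directional-derivative toolkit -/

noncomputable def D {N : ℕ} (v : E N) (f : E N → ℝ) : E N → ℝ :=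
  fun x => fderiv ℝ f x v

variable {N a b : ℕ}

theorem D_congr {s : Set (E N)} (hs : IsOpen s) {f g : E N → ℝ}
    (h : ∀ y ∈ s, f y = g y) {x : E N} (hx : x ∈ s) (v : E N) :
    D v f x = D v g x := by
  have : f =ᶠ[nhds x] g := Filter.eventuallyEq_of_mem (hs.mem_nhds hx) h
  simp only [D, this.fderiv_eq]

theorem D_smoothOn {s : Set (E N)} (hs : IsOpen s) {f : E N → ℝ}
    (hf : ContDiffOn ℝ (⊤ : ℕ∞) f s) (v : E N) : ContDiffOn ℝ (⊤ : ℕ∞) (D v f) s :=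
  (hf.fderiv_of_isOpen hs (by simp)).clm_apply contDiffOn_const

theorem D_diffAt {s : Set (E N)} (hs : IsOpen s) {f : E N → ℝ}
    (hf : ContDiffOn ℝ (⊤ : ℕ∞) f s) (v : E N) {x : E N} (hx : x ∈ s) :
    DifferentiableAt ℝ (D v f) x :=
  (((D_smoothOn hs hf v).contDiffAt (hs.mem_nhds hx)).differentiableAt (by simp))

theorem diffAt_of_smoothOn {s : Set (E N)} (hs : IsOpen s) {f : E N → ℝ}
    (hf : ContDiffOn ℝ (⊤ : ℕ∞) f s) {x : E N} (hx : x ∈ s) :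
    DifferentiableAt ℝ f x :=
  ((hf.contDiffAt (hs.mem_nhds hx)).differentiableAt (by simp))

theorem D2_congr {s : Set (E N)} (hs : IsOpen s) {f g : E N → ℝ}
    (h : ∀ y ∈ s, f y = g y) {x : E N} (hx : x ∈ s) (v : E N) :
    D v (D v f) x = D v (D v g) x :=
  D_congr hs (fun y hy => D_congr hs h hy v) hx v

theorem D2_zero (v : E N) (x : E N) : D v (D v (fun _ => (0:ℝ))) x = 0 := by
  have h1 : D v (fun _ : E N => (0:ℝ)) = fun _ : E N => (0:ℝ) := by
    funext y; simp [D, fderiv_const_apply]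
  rw [h1]; simp [D, fderiv_const_apply]

theorem D_aff (A : E a →L[ℝ] E b) (c : E b) {f : E b → ℝ} {x : E a}
    (hf : DifferentiableAt ℝ f (A x + c)) (v : E a) :
    D v (fun y => f (A y + c)) x = D (A v) f (A x + c) := by
  have hA : HasFDerivAt (fun y : E a => A y + c) (A : E a →L[ℝ] E b) x :=
    A.hasFDerivAt.add_const c
  have := (hf.hasFDerivAt.comp x hA).fderiv
  simp only [D]
  rw [show (fun y => f (A y + c)) = f ∘ (fun y : E a => A y + c) from rfl, this]
  rfl

theorem D2_aff (A : E a →L[ℝ] E b) (c : E b) {s : Set (E b)} (hs : IsOpen s)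
    {f : E b → ℝ} (hf : ContDiffOn ℝ (⊤ : ℕ∞) f s) {x : E a} (hx : A x + c ∈ s) (v : E a) :
    D v (D v (fun y => f (A y + c))) x = D (A v) (D (A v) f) (A x + c) := by
  have hcont : Continuous fun y : E a => A y + c := (A.continuous.add continuous_const)
  have hs' : IsOpen ((fun y : E a => A y + c) ⁻¹' s) := hs.preimage hcont
  have h1 : ∀ y ∈ (fun y : E a => A y + c) ⁻¹' s,
      D v (fun z => f (A z + c)) y = (fun z => D (A v) f (A z + c)) y := by
    intro y hy
    exact D_aff A c (diffAt_of_smoothOn hs hf hy) v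
  rw [D_congr hs' h1 hx v]
  exact D_aff A c (D_diffAt hs hf (A v) hx) v

theorem lap_eq (f : E N → ℝ) (x : E N) :
    lap f x = ∑ i : Fin N,
      D (EuclideanSpace.single i 1) (D (EuclideanSpace.single i 1) f) x := rfl

theorem lap_congr {s : Set (E N)} (hs : IsOpen s) {f g : E N → ℝ}
    (h : ∀ y ∈ s, f y = g y) {x : E N} (hx : x ∈ s) :
    lap f x = lap g x := by
  rw [lap_eq, lap_eq]
  exact Finset.sum_congr rfl fun i _ => D2_congr hs h hx _

theorem D_swap {s : Set (E N)} (hs : IsOpen s) {f : E N → ℝ}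
    (hf : ContDiffOn ℝ (⊤ : ℕ∞) f s) {x : E N} (hx : x ∈ s) (v w : E N) :
    D v (D w f) x = D w (D v f) x := by
  have hd : DifferentiableAt ℝ (fderiv ℝ f) x :=
    (((hf.fderiv_of_isOpen hs (m := (⊤ : ℕ∞)) (by simp)).contDiffAt (hs.mem_nhds hx)).differentiableAt (by simp))
  have key : ∀ u u' : E N, D u (D u' f) x = fderiv ℝ (fderiv ℝ f) x u u' := by
    intro u u'
    have : fderiv ℝ (fun y => fderiv ℝ f y u') x
        = (fderiv ℝ f x).comp (fderiv ℝ (fun _ : E N => u') x)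
          + (fderiv ℝ (fderiv ℝ f) x).flip u' := by
      exact fderiv_clm_apply hd (differentiableAt_const u')
    have e1 : D u (D u' f) x = (fderiv ℝ (fun y => fderiv ℝ f y u') x) u := rfl
    rw [e1, this]
    simp
  rw [key v w, key w v]
  have hsymm : IsSymmSndFDerivAt ℝ f x :=
    (hf.contDiffAt (hs.mem_nhds hx)).isSymmSndFDerivAt (by rw [minSmoothness_of_isRCLikeNormedField]; exact WithTop.coe_le_coe.mpr (le_top : (2 : ℕ∞) ≤ ⊤))
  exact hsymm v w

theorem D2_swap {s : Set (E N)} (hs : IsOpen s) {f : E N → ℝ}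
    (hf : ContDiffOn ℝ (⊤ : ℕ∞) f s) {x : E N} (hx : x ∈ s) (v w : E N) :
    D v (D v (D w (D w f))) x = D w (D w (D v (D v f))) x := by
  have h1 : ∀ y ∈ s, D v (D w (D w f)) y = D w (D v (D w f)) y :=
    fun y hy => D_swap hs (D_smoothOn hs hf w) hy v w
  rw [D_congr hs h1 hx v]
  rw [D_swap hs (D_smoothOn hs (D_smoothOn hs hf w) v) hx v w]
  have h2 : ∀ y ∈ s, D v (D v (D w f)) y = D w (D v (D v f)) y := by
    intro y hy
    have h3 : ∀ z ∈ s, D v (D w f) z = D w (D v f) z :=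
      fun z hz => D_swap hs hf hz v w
    rw [D_congr hs h3 hy v]
    exact D_swap hs (D_smoothOn hs hf v) hy v w
  exact D_congr hs h2 hx w

theorem D_sum {s : Set (E N)} (hs : IsOpen s) {ι : Type*} (t : Finset ι)
    {F : ι → E N → ℝ} (hF : ∀ i ∈ t, ContDiffOn ℝ (⊤ : ℕ∞) (F i) s)
    {x : E N} (hx : x ∈ s) (v : E N) :
    D v (fun z => ∑ i ∈ t, F i z) x = ∑ i ∈ t, D v (F i) x := by
  simp only [D]
  rw [fderiv_fun_sum fun i hi => diffAt_of_smoothOn hs (hF i hi) hx]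
  simp

theorem D2_sum {s : Set (E N)} (hs : IsOpen s) {ι : Type*} (t : Finset ι)
    {F : ι → E N → ℝ} (hF : ∀ i ∈ t, ContDiffOn ℝ (⊤ : ℕ∞) (F i) s)
    {x : E N} (hx : x ∈ s) (v : E N) :
    D v (D v (fun z => ∑ i ∈ t, F i z)) x = ∑ i ∈ t, D v (D v (F i)) x := by
  have h1 : ∀ y ∈ s, D v (fun z => ∑ i ∈ t, F i z) y = (fun z => ∑ i ∈ t, D v (F i) z) y :=
    fun y hy => D_sum hs t hF hy v
  rw [D_congr hs h1 hx v]
  exact D_sum hs t (fun i hi => D_smoothOn hs (hF i hi) v) hx v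

/-! ### Translation invariance of the Laplacian -/

theorem lap_translate {k : ℕ} {s : Set (E k)} (hs : IsOpen s) {f : E k → ℝ}
    (hf : ContDiffOn ℝ (⊤ : ℕ∞) f s) (c : E k) {x : E k} (hx : x + c ∈ s) :
    lap (fun w => f (w + c)) x = lap f (x + c) := by
  rw [lap_eq, lap_eq]
  refine Finset.sum_congr rfl fun i _ => ?_
  have h := D2_aff (ContinuousLinearMap.id ℝ (E k)) c hs hf
    (x := x) (by simpa using hx) (EuclideanSpace.single i 1)
  simpa using h

/-! ### The splitting `ℝ^{m+n} = ℝ^m × ℝ^n` -/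

variable {m n : ℕ}

noncomputable def glue (x : E m) (y : E n) : E (m + n) :=
  WithLp.toLp 2 (fun i => Fin.addCases (motive := fun _ => ℝ) (fun i => x i) (fun j => y j) i)

@[simp] theorem glue_castAdd (x : E m) (y : E n) (i : Fin m) :
    glue x y (Fin.castAdd n i) = x i := by simp [glue]

@[simp] theorem glue_natAdd (x : E m) (y : E n) (j : Fin n) :
    glue x y (Fin.natAdd m j) = y j := by
  simp only [glue]; rw [Fin.addCases_right]

@[simp] theorem fstPart_glue (x : E m) (y : E n) : fstPart (glue x y) = x := by
  ext i; simp [fstPart]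

@[simp] theorem sndPart_glue (x : E m) (y : E n) : sndPart (glue x y) = y := by
  ext j; simp [sndPart]

theorem glue_fst_snd (z : E (m + n)) : glue (fstPart z) (sndPart z) = z := by
  ext i
  induction i using Fin.addCases with
  | left i => simp [fstPart]
  | right j => simp [sndPart]

noncomputable def inlX : E m →L[ℝ] E (m + n) :=
  LinearMap.toContinuousLinearMap
    { toFun := fun x => glue x 0
      map_add' := by
        intro x y; ext i
        induction i using Fin.addCases with
        | left i => simp
        | right j => simp
      map_smul' := by
        intro c x; ext i
        induction i using Fin.addCases with
        | left i => simp
        | right j => simp }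

noncomputable def inlY : E n →L[ℝ] E (m + n) :=
  LinearMap.toContinuousLinearMap
    { toFun := fun y => glue 0 y
      map_add' := by
        intro x y; ext i
        induction i using Fin.addCases with
        | left i => simp
        | right j => simp
      map_smul' := by
        intro c x; ext i
        induction i using Fin.addCases with
        | left i => simp
        | right j => simp }

@[simp] theorem inlX_apply (x : E m) : (inlX (n := n) x) = glue x 0 := rfl
@[simp] theorem inlY_apply (y : E n) : (inlY (m := m) y) = glue 0 y := rfl

theorem inlX_add_inlY (x : E m) (y : E n) : inlX x + inlY y = glue x y := by
  ext i
  induction i using Fin.addCases with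
  | left i => simp
  | right j => simp

theorem inlX_single (i : Fin m) :
    (inlX (n := n) (EuclideanSpace.single i 1)) =
      EuclideanSpace.single (Fin.castAdd n i) (1:ℝ) := by
  ext a
  induction a using Fin.addCases with
  | left a =>
      have hiff : (Fin.castAdd n a = Fin.castAdd n i) ↔ a = i := by
        simp [Fin.ext_iff]
      simp [EuclideanSpace.single_apply, hiff]
  | right b =>
      have hne : Fin.natAdd m b ≠ Fin.castAdd n i := by
        intro h
        have h2 := congrArg Fin.val h
        simp only [Fin.coe_natAdd, Fin.coe_castAdd] at h2
        omega
      simp [EuclideanSpace.single_apply, hne]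

theorem inlY_single (j : Fin n) :
    (inlY (m := m) (EuclideanSpace.single j 1)) =
      EuclideanSpace.single (Fin.natAdd m j) (1:ℝ) := by
  ext a
  induction a using Fin.addCases with
  | left a =>
      have hne : Fin.castAdd n a ≠ Fin.natAdd m j := by
        intro h
        have h2 := congrArg Fin.val h
        simp only [Fin.coe_natAdd, Fin.coe_castAdd] at h2
        omega
      simp [EuclideanSpace.single_apply, hne]
  | right b =>
      have hiff : (Fin.natAdd m b = Fin.natAdd m j) ↔ b = j := by
        simp [Fin.ext_iff]
      simp [EuclideanSpace.single_apply, hiff]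

noncomputable def fstL : E (m + n) →L[ℝ] E m :=
  LinearMap.toContinuousLinearMap
    { toFun := fstPart
      map_add' := by intro x y; ext i; simp [fstPart]
      map_smul' := by intro c x; ext i; simp [fstPart] }

noncomputable def sndL : E (m + n) →L[ℝ] E n :=
  LinearMap.toContinuousLinearMap
    { toFun := sndPart
      map_add' := by intro x y; ext i; simp [sndPart]
      map_smul' := by intro c x; ext i; simp [sndPart] }

@[simp] theorem fstL_apply (z : E (m+n)) : fstL z = fstPart z := rfl
@[simp] theorem sndL_apply (z : E (m+n)) : sndL z = sndPart z := rfl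

theorem continuous_fstPart : Continuous (fstPart (m := m) (n := n)) := fstL.continuous
theorem continuous_sndPart : Continuous (sndPart (m := m) (n := n)) := sndL.continuous

theorem contDiff_fstPart : ContDiff ℝ (⊤ : ℕ∞) (fstPart (m := m) (n := n)) := fstL.contDiff
theorem contDiff_sndPart : ContDiff ℝ (⊤ : ℕ∞) (sndPart (m := m) (n := n)) := sndL.contDiff

/-! ### The split Laplacians -/

noncomputable def ex (i : Fin m) : E (m + n) :=
  EuclideanSpace.single (Fin.castAdd n i) 1

noncomputable def ey (j : Fin n) : E (m + n) :=
  EuclideanSpace.single (Fin.natAdd m j) 1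

noncomputable def lapX (F : E (m + n) → ℝ) (z : E (m + n)) : ℝ :=
  ∑ i : Fin m, D (ex i) (D (ex i) F) z

noncomputable def lapY (F : E (m + n) → ℝ) (z : E (m + n)) : ℝ :=
  ∑ j : Fin n, D (ey j) (D (ey j) F) z

theorem lap_split (F : E (m + n) → ℝ) (z : E (m + n)) :
    lap F z = lapX F z + lapY F z := by
  rw [lap_eq, Fin.sum_univ_add]
  rfl

theorem lapX_smoothOn {s : Set (E (m + n))} (hs : IsOpen s) {F : E (m + n) → ℝ}
    (hF : ContDiffOn ℝ (⊤ : ℕ∞) F s) : ContDiffOn ℝ (⊤ : ℕ∞) (lapX F) s := by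
  have : ContDiffOn ℝ (⊤ : ℕ∞) (fun z => ∑ i : Fin m, D (ex i) (D (ex i) F) z) s :=
    ContDiffOn.sum fun i _ => D_smoothOn hs (D_smoothOn hs hF _) _
  exact this

theorem lapX_congr {s : Set (E (m + n))} (hs : IsOpen s) {f g : E (m + n) → ℝ}
    (h : ∀ y ∈ s, f y = g y) {z : E (m + n)} (hz : z ∈ s) :
    lapX f z = lapX g z :=
  Finset.sum_congr rfl fun i _ => D2_congr hs h hz _

theorem lapY_congr {s : Set (E (m + n))} (hs : IsOpen s) {f g : E (m + n) → ℝ}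
    (h : ∀ y ∈ s, f y = g y) {z : E (m + n)} (hz : z ∈ s) :
    lapY f z = lapY g z :=
  Finset.sum_congr rfl fun j _ => D2_congr hs h hz _

/-- Slice lemma in the `x`-direction. -/
theorem sliceX {s : Set (E (m + n))} (hs : IsOpen s) {F : E (m + n) → ℝ}
    (hF : ContDiffOn ℝ (⊤ : ℕ∞) F s) {z : E (m + n)} (hz : z ∈ s) :
    lapX F z = lap (fun x => F (glue x (sndPart z))) (fstPart z) := by
  rw [lap_eq]
  refine Finset.sum_congr rfl fun i _ => ?_
  have hmem : (inlX (fstPart z) + inlY (sndPart z) : E (m + n)) ∈ s := by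
    rw [inlX_add_inlY, glue_fst_snd]; exact hz
  have h := D2_aff (inlX) (inlY (sndPart z)) hs hF (x := fstPart z) hmem
    (EuclideanSpace.single i 1)
  have hfn : (fun x : E m => F (inlX x + inlY (sndPart z)))
      = fun x => F (glue x (sndPart z)) := by
    funext x; rw [inlX_add_inlY]
  rw [hfn, inlX_single, inlX_add_inlY, glue_fst_snd] at h
  exact h.symm

/-- Slice lemma in the `y`-direction. -/
theorem sliceY {s : Set (E (m + n))} (hs : IsOpen s) {F : E (m + n) → ℝ}
    (hF : ContDiffOn ℝ (⊤ : ℕ∞) F s) {z : E (m + n)} (hz : z ∈ s) :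
    lapY F z = lap (fun y => F (glue (fstPart z) y)) (sndPart z) := by
  rw [lap_eq]
  refine Finset.sum_congr rfl fun j _ => ?_
  have heq : (inlY (sndPart z) + inlX (fstPart z) : E (m + n)) = z := by
    rw [add_comm (inlY (sndPart z)), inlX_add_inlY]; exact glue_fst_snd z
  have hmem : (inlY (sndPart z) + inlX (fstPart z) : E (m + n)) ∈ s := by
    rw [heq]; exact hz
  have h := D2_aff (inlY) (inlX (fstPart z)) hs hF (x := sndPart z) hmem
    (EuclideanSpace.single j 1)
  have hfn : (fun y : E n => F (inlY y + inlX (fstPart z)))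
      = fun y => F (glue (fstPart z) y) := by
    funext y; rw [add_comm, inlX_add_inlY]
  rw [hfn, inlY_single, heq] at h
  exact h.symm

theorem main {m n k : ℕ} (U : Set (E m)) (hU : IsOpen U)
    (V : Set (E n)) (hV : IsOpen V)
    (ψ : E m → E k) (hψs : ContDiffOn ℝ (⊤ : ℕ∞) ψ U) (hGHM : IsGHM ψ U)
    (φ : E n → E k) (hφs : ContDiffOn ℝ (⊤ : ℕ∞) φ V) (hHM : IsHM φ V) :
    IsGHM (fun z : E (m + n) => ψ (fstPart z) + φ (sndPart z))
      {z : E (m + n) | fstPart z ∈ U ∧ sndPart z ∈ V} := by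
  intro W hW f hf
  obtain ⟨hfs, hf0⟩ := hf
  set S' : Set (E (m + n)) := {z | fstPart z ∈ U ∧ sndPart z ∈ V} with hS'def
  set S : Set (E (m + n)) :=
    S' ∩ (fun z : E (m + n) => ψ (fstPart z) + φ (sndPart z)) ⁻¹' W with hSdef
  have hS'open : IsOpen S' := by
    have he : S' = fstPart ⁻¹' U ∩ sndPart ⁻¹' V := rfl
    rw [he]
    exact (hU.preimage continuous_fstPart).inter (hV.preimage continuous_sndPart)
  have hχs : ContDiffOn ℝ (⊤ : ℕ∞) (fun z : E (m + n) => ψ (fstPart z) + φ (sndPart z)) S' := by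
    have h1 : ContDiffOn ℝ (⊤ : ℕ∞) (ψ ∘ fstPart) S' :=
      hψs.comp contDiff_fstPart.contDiffOn (fun z hz => hz.1)
    have h2 : ContDiffOn ℝ (⊤ : ℕ∞) (φ ∘ sndPart) S' :=
      hφs.comp contDiff_sndPart.contDiffOn (fun z hz => hz.2)
    exact h1.add h2
  have hSopen : IsOpen S := hχs.continuousOn.isOpen_inter_preimage hS'open hW
  have hG : ContDiffOn ℝ (⊤ : ℕ∞)
      (f ∘ fun z : E (m + n) => ψ (fstPart z) + φ (sndPart z)) S :=
    hfs.comp (hχs.mono Set.inter_subset_left) (fun z hz => hz.2)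
  refine ⟨hG, ?_⟩
  -- the `y`-Laplacian of the composition vanishes on `S`
  have hlapY0 : ∀ z ∈ S,
      lapY (f ∘ fun z : E (m + n) => ψ (fstPart z) + φ (sndPart z)) z = 0 := by
    intro z hz
    have hslice := sliceY hSopen hG hz
    have hW'open : IsOpen {w : E k | w + ψ (fstPart z) ∈ W} :=
      hW.preimage (continuous_id.add continuous_const)
    have hharm : HarmonicOn (fun w => f (w + ψ (fstPart z)))
        {w : E k | w + ψ (fstPart z) ∈ W} := by
      constructor
      · exact hfs.comp ((contDiff_id.add contDiff_const).contDiffOn) (fun w hw => hw)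
      · intro w hw
        rw [lap_translate hW hfs _ hw]
        exact hf0 _ hw
    have hHMres := hHM _ hW'open _ hharm
    have hmem : sndPart z ∈ V ∩ φ ⁻¹' {w : E k | w + ψ (fstPart z) ∈ W} := by
      refine ⟨hz.1.2, ?_⟩
      show φ (sndPart z) + ψ (fstPart z) ∈ W
      rw [add_comm (φ (sndPart z))]
      exact hz.2
    have h0 := hHMres.2 _ hmem
    have hfun : (fun y => (f ∘ fun z : E (m + n) => ψ (fstPart z) + φ (sndPart z))
          (glue (fstPart z) y))
        = (fun w => f (w + ψ (fstPart z))) ∘ φ := by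
      funext y
      show f (ψ (fstPart (glue (fstPart z) y)) + φ (sndPart (glue (fstPart z) y)))
        = f (φ y + ψ (fstPart z))
      rw [fstPart_glue, sndPart_glue, add_comm (ψ (fstPart z))]
    rw [hslice, hfun]
    exact h0
  have hlap_eq : ∀ z ∈ S,
      lap (f ∘ fun z : E (m + n) => ψ (fstPart z) + φ (sndPart z)) z
        = lapX (f ∘ fun z : E (m + n) => ψ (fstPart z) + φ (sndPart z)) z := by
    intro z hz
    rw [lap_split, hlapY0 z hz, add_zero]
  intro z0 hz0
  have hlapXsm : ContDiffOn ℝ (⊤ : ℕ∞)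
      (lapX (f ∘ fun z : E (m + n) => ψ (fstPart z) + φ (sndPart z))) S :=
    lapX_smoothOn hSopen hG
  rw [lap_split]
  have hX : lapX (lap (f ∘ fun z : E (m + n) => ψ (fstPart z) + φ (sndPart z))) z0 = 0 := by
    rw [lapX_congr hSopen hlap_eq hz0]
    rw [sliceX hSopen hlapXsm hz0]
    have hcont : Continuous fun x : E m => glue x (sndPart z0) := by
      have he : (fun x : E m => glue x (sndPart z0))
          = fun x => inlX x + inlY (sndPart z0) := by
        funext x; rw [inlX_add_inlY]
      rw [he]; exact inlX.continuous.add continuous_const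
    have hU0open : IsOpen {x : E m | glue x (sndPart z0) ∈ S} := hSopen.preimage hcont
    have hx0 : fstPart z0 ∈ {x : E m | glue x (sndPart z0) ∈ S} := by
      show glue (fstPart z0) (sndPart z0) ∈ S
      rw [glue_fst_snd]; exact hz0
    have hstep2 : ∀ x ∈ {x : E m | glue x (sndPart z0) ∈ S},
        lapX (f ∘ fun z : E (m + n) => ψ (fstPart z) + φ (sndPart z)) (glue x (sndPart z0))
          = lap ((fun w => f (w + φ (sndPart z0))) ∘ ψ) x := by
      intro x hx
      rw [sliceX hSopen hG hx]
      have he1 : (fun x' => (f ∘ fun z : E (m + n) => ψ (fstPart z) + φ (sndPart z))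
            (glue x' (sndPart (glue x (sndPart z0)))))
          = (fun w => f (w + φ (sndPart z0))) ∘ ψ := by
        funext x'
        show f (ψ (fstPart (glue x' (sndPart (glue x (sndPart z0)))))
            + φ (sndPart (glue x' (sndPart (glue x (sndPart z0))))))
          = f (ψ x' + φ (sndPart z0))
        rw [sndPart_glue, fstPart_glue, sndPart_glue]
      rw [he1, fstPart_glue]
    rw [lap_congr hU0open hstep2 hx0]
    have hW2open : IsOpen {w : E k | w + φ (sndPart z0) ∈ W} :=
      hW.preimage (continuous_id.add continuous_const)
    have hharm : HarmonicOn (fun w => f (w + φ (sndPart z0)))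
        {w : E k | w + φ (sndPart z0) ∈ W} := by
      constructor
      · exact hfs.comp ((contDiff_id.add contDiff_const).contDiffOn) (fun w hw => hw)
      · intro w hw
        rw [lap_translate hW hfs _ hw]
        exact hf0 _ hw
    have hB := hGHM _ hW2open _ hharm
    exact hB.2 _ ⟨hz0.1.1, hz0.2⟩
  have hY : lapY (lap (f ∘ fun z : E (m + n) => ψ (fstPart z) + φ (sndPart z))) z0 = 0 := by
    rw [lapY_congr hSopen hlap_eq hz0]
    show (∑ j : Fin n, D (ey j) (D (ey j)
      (lapX (f ∘ fun z : E (m + n) => ψ (fstPart z) + φ (sndPart z)))) z0) = 0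
    have hcd : ∀ i : Fin m, ContDiffOn ℝ (⊤ : ℕ∞)
        (D (ex i) (D (ex i) (f ∘ fun z : E (m + n) => ψ (fstPart z) + φ (sndPart z)))) S :=
      fun i => D_smoothOn hSopen (D_smoothOn hSopen hG _) _
    have hcd' : ∀ j : Fin n, ContDiffOn ℝ (⊤ : ℕ∞)
        (D (ey j) (D (ey j) (f ∘ fun z : E (m + n) => ψ (fstPart z) + φ (sndPart z)))) S :=
      fun j => D_smoothOn hSopen (D_smoothOn hSopen hG _) _
    have hterm : ∀ j : Fin n,
        D (ey j) (D (ey j)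
          (lapX (f ∘ fun z : E (m + n) => ψ (fstPart z) + φ (sndPart z)))) z0
        = ∑ i : Fin m, D (ey j) (D (ey j) (D (ex i) (D (ex i)
            (f ∘ fun z : E (m + n) => ψ (fstPart z) + φ (sndPart z))))) z0 :=
      fun j => D2_sum hSopen Finset.univ (fun i _ => hcd i) hz0 _
    have hzero : ∀ i : Fin m,
        D (ex i) (D (ex i)
          (lapY (f ∘ fun z : E (m + n) => ψ (fstPart z) + φ (sndPart z)))) z0 = 0 := by
      intro i
      rw [D2_congr hSopen hlapY0 hz0]
      exact D2_zero _ _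
    have hterm' : ∀ i : Fin m,
        (∑ j : Fin n, D (ex i) (D (ex i) (D (ey j) (D (ey j)
            (f ∘ fun z : E (m + n) => ψ (fstPart z) + φ (sndPart z)))))  z0)
        = D (ex i) (D (ex i)
            (lapY (f ∘ fun z : E (m + n) => ψ (fstPart z) + φ (sndPart z)))) z0 :=
      fun i => (D2_sum hSopen Finset.univ (fun j _ => hcd' j) hz0 _).symm
    calc (∑ j : Fin n, D (ey j) (D (ey j)
          (lapX (f ∘ fun z : E (m + n) => ψ (fstPart z) + φ (sndPart z)))) z0)
        = ∑ j : Fin n, ∑ i : Fin m, D (ey j) (D (ey j) (D (ex i) (D (ex i)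
            (f ∘ fun z : E (m + n) => ψ (fstPart z) + φ (sndPart z))))) z0 :=
          Finset.sum_congr rfl fun j _ => hterm j
      _ = ∑ i : Fin m, ∑ j : Fin n, D (ey j) (D (ey j) (D (ex i) (D (ex i)
            (f ∘ fun z : E (m + n) => ψ (fstPart z) + φ (sndPart z))))) z0 :=
          Finset.sum_comm
      _ = ∑ i : Fin m, ∑ j : Fin n, D (ex i) (D (ex i) (D (ey j) (D (ey j)
            (f ∘ fun z : E (m + n) => ψ (fstPart z) + φ (sndPart z))))) z0 :=
          Finset.sum_congr rfl fun i _ => Finset.sum_congr rfl fun j _ =>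
            D2_swap hSopen hG hz0 _ _
      _ = ∑ i : Fin m, D (ex i) (D (ex i)
            (lapY (f ∘ fun z : E (m + n) => ψ (fstPart z) + φ (sndPart z)))) z0 :=
          Finset.sum_congr rfl fun i _ => hterm' i
      _ = 0 := by simp [hzero]
  rw [hX, hY, add_zero]

end Kit

/-- the direct sum `(ψ ⊕ φ)(x, y) = ψ(x) + φ(y)` of a generalized
harmonic morphism `ψ : U → ℝᵏ` and a harmonic morphism `φ : V → ℝᵏ` is a generalized
harmonic morphism on `U × V ⊆ ℝ^{m+n}`. -/
theorem stmt_16 {m n k : ℕ} (U : Set (E m)) (hU : IsOpen U)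
    (V : Set (E n)) (hV : IsOpen V)
    (ψ : E m → E k) (hψs : ContDiffOn ℝ (⊤ : ℕ∞) ψ U) (hGHM : IsGHM ψ U)
    (φ : E n → E k) (hφs : ContDiffOn ℝ (⊤ : ℕ∞) φ V) (hHM : IsHM φ V) :
    IsGHM (fun z : E (m + n) => ψ (fstPart z) + φ (sndPart z))
      {z : E (m + n) | fstPart z ∈ U ∧ sndPart z ∈ V} :=
  Kit.main U hU V hV ψ hψs hGHM φ hφs hHM
end
end

section
/- Let U ⊆ ℝ^m and V ⊆ ℝ^n be open sets and ψ : U → ℂ, φ : V → ℂ smooth maps. Let Δ_G denote the Euclidean Laplacian on the product U × V ⊆ ℝ^{m+n}, and Δ_g, Δ_h the Laplacians on U and V respectively. Then for the function F(x, y) = (ψ(x) + φ(y))² on U × V, one has Δ_G²F (x, y) = Δ_g²(ψ²)(x) + Δ_h²(φ²)(y) + 2[φ(y)·Δ_g²ψ(x) + ψ(x)·Δ_h²φ(y) + 2·Δ_gψ(x)·Δ_hφ(y)]. In particular, if ψ and ψ² are biharmonic on U and φ and φ² are harmonic on V, then (ψ ⊕ φ)² is biharmonic on U × V. -/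
open scoped BigOperators RealInnerProductSpace

noncomputable section

/-- The Laplacian on the product `U × V ⊆ ℝᵐ × ℝⁿ` with the product metric:
`Δ_G = Δ_g + Δ_h`, where `Δ_g` acts in the `x`-variables and `Δ_h` in the
`y`-variables. -/
noncomputable def lapG {m n : ℕ} (f : E m × E n → ℂ) (p : E m × E n) : ℂ :=
  lapC (fun x => f (x, p.2)) p.1 + lapC (fun y => f (p.1, y)) p.2

lemma lapC_congr {m : ℕ} {f g : E m → ℂ} {x : E m} (h : f =ᶠ[nhds x] g) :
    lapC f x = lapC g x := by
  unfold lapC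
  refine Finset.sum_congr rfl fun i _ => ?_
  have h1 : (fun y => fderiv ℝ f y (EuclideanSpace.single i 1)) =ᶠ[nhds x]
      (fun y => fderiv ℝ g y (EuclideanSpace.single i 1)) :=
    (h.fderiv (𝕜 := ℝ)).mono fun y hy => by simp only [hy]
  rw [h1.fderiv_eq]

lemma lapC_const {m : ℕ} (c : ℂ) (x : E m) : lapC (fun _ => c) x = 0 := by
  simp [lapC]

lemma contDiffOn_fderiv_apply {m : ℕ} {f : E m → ℂ} {s : Set (E m)} (hs : IsOpen s)
    (hf : ContDiffOn ℝ (⊤ : ℕ∞) f s) (v : E m) :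
    ContDiffOn ℝ (⊤ : ℕ∞) (fun y => fderiv ℝ f y v) s :=
  (hf.fderiv_of_isOpen hs (le_of_eq rfl)).clm_apply contDiffOn_const

lemma contDiffOn_lapC {m : ℕ} {f : E m → ℂ} {s : Set (E m)} (hs : IsOpen s)
    (hf : ContDiffOn ℝ (⊤ : ℕ∞) f s) : ContDiffOn ℝ (⊤ : ℕ∞) (lapC f) s := by
  unfold lapC
  exact ContDiffOn.sum fun i _ =>
    contDiffOn_fderiv_apply hs (contDiffOn_fderiv_apply hs hf _) _

lemma lapC_add {m : ℕ} {f g : E m → ℂ} {s : Set (E m)} (hs : IsOpen s)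
    (hf : ContDiffOn ℝ (⊤ : ℕ∞) f s) (hg : ContDiffOn ℝ (⊤ : ℕ∞) g s)
    {x : E m} (hx : x ∈ s) :
    lapC (fun y => f y + g y) x = lapC f x + lapC g x := by
  unfold lapC
  rw [← Finset.sum_add_distrib]
  refine Finset.sum_congr rfl fun i _ => ?_
  set v := EuclideanSpace.single (𝕜 := ℝ) i (1 : ℝ) with hv
  have h1 : (fun y => fderiv ℝ (fun z => f z + g z) y v) =ᶠ[nhds x]
      fun y => fderiv ℝ f y v + fderiv ℝ g y v := by
    filter_upwards [hs.mem_nhds hx] with y hy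
    have hfd : DifferentiableAt ℝ f y := (hf.contDiffAt (hs.mem_nhds hy)).differentiableAt (by simp)
    have hgd : DifferentiableAt ℝ g y := (hg.contDiffAt (hs.mem_nhds hy)).differentiableAt (by simp)
    rw [fderiv_fun_add hfd hgd]; rfl
  have hfd : DifferentiableAt ℝ (fun y => fderiv ℝ f y v) x :=
    ((contDiffOn_fderiv_apply hs hf v).contDiffAt (hs.mem_nhds hx)).differentiableAt (by simp)
  have hgd : DifferentiableAt ℝ (fun y => fderiv ℝ g y v) x :=
    ((contDiffOn_fderiv_apply hs hg v).contDiffAt (hs.mem_nhds hx)).differentiableAt (by simp)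
  rw [h1.fderiv_eq, fderiv_fun_add hfd hgd]; rfl

lemma lapC_const_mul {m : ℕ} {f : E m → ℂ} {s : Set (E m)} (hs : IsOpen s)
    (hf : ContDiffOn ℝ (⊤ : ℕ∞) f s) (c : ℂ) {x : E m} (hx : x ∈ s) :
    lapC (fun y => c * f y) x = c * lapC f x := by
  unfold lapC
  rw [Finset.mul_sum]
  refine Finset.sum_congr rfl fun i _ => ?_
  set v := EuclideanSpace.single (𝕜 := ℝ) i (1 : ℝ) with hv
  have h1 : (fun y => fderiv ℝ (fun z => c * f z) y v) =ᶠ[nhds x]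
      fun y => c * fderiv ℝ f y v := by
    filter_upwards [hs.mem_nhds hx] with y hy
    have hfd : DifferentiableAt ℝ f y := (hf.contDiffAt (hs.mem_nhds hy)).differentiableAt (by simp)
    rw [fderiv_const_mul hfd c]
    simp
  have hfd : DifferentiableAt ℝ (fun y => fderiv ℝ f y v) x :=
    ((contDiffOn_fderiv_apply hs hf v).contDiffAt (hs.mem_nhds hx)).differentiableAt (by simp)
  rw [h1.fderiv_eq, fderiv_const_mul hfd c]
  simp

lemma lapC_zero_on {m : ℕ} {f : E m → ℂ} {s : Set (E m)} (hs : IsOpen s)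
    (h0 : ∀ x ∈ s, f x = 0) {x : E m} (hx : x ∈ s) : lapC f x = 0 := by
  have : f =ᶠ[nhds x] fun _ => (0 : ℂ) := by
    filter_upwards [hs.mem_nhds hx] with y hy using h0 y hy
  rw [lapC_congr this, lapC_const]

lemma lapC_combo {m : ℕ} {s : Set (E m)} (hs : IsOpen s) {f g h : E m → ℂ}
    (hf : ContDiffOn ℝ (⊤ : ℕ∞) f s) (hg : ContDiffOn ℝ (⊤ : ℕ∞) g s)
    (hh : ContDiffOn ℝ (⊤ : ℕ∞) h s) (a b c : ℂ) {x : E m} (hx : x ∈ s) :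
    lapC (fun z => f z + (a * g z + (b * h z + c))) x =
      lapC f x + a * lapC g x + b * lapC h x := by
  rw [lapC_add hs hf (by
        exact (contDiffOn_const.mul hg).add ((contDiffOn_const.mul hh).add contDiffOn_const)) hx,
    lapC_add hs (contDiffOn_const.mul hg)
      ((contDiffOn_const.mul hh).add contDiffOn_const) hx,
    lapC_add hs (contDiffOn_const.mul hh) contDiffOn_const hx,
    lapC_const_mul hs hg a hx, lapC_const_mul hs hh b hx, lapC_const]
  ring

lemma lapC_sq_add_const {m : ℕ} {s : Set (E m)} (hs : IsOpen s) {f : E m → ℂ}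
    (hf : ContDiffOn ℝ (⊤ : ℕ∞) f s) (c : ℂ) {x : E m} (hx : x ∈ s) :
    lapC (fun z => (f z + c) ^ 2) x = lapC (fun z => f z ^ 2) x + 2 * c * lapC f x := by
  have e : (fun z => (f z + c) ^ 2)
      = fun z => (fun w => f w ^ 2) z + ((2 * c) * f z + ((0 : ℂ) * f z + c ^ 2)) :=
    funext fun z => by ring
  rw [e, lapC_combo hs (hf.pow 2) hf hf (2 * c) 0 (c ^ 2) hx]
  ring

/-- for `F(x,y) = (ψ(x) + φ(y))²` on `U × V` one has
`Δ_G²F = Δ_g²(ψ²) + Δ_h²(φ²) + 2[φ·Δ_g²ψ + ψ·Δ_h²φ + 2·Δ_gψ·Δ_hφ]`; in particular, if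
`ψ, ψ²` are biharmonic on `U` and `φ, φ²` are harmonic on `V`, then `(ψ ⊕ φ)²` is
biharmonic on `U × V`. -/
theorem stmt_17 {m n : ℕ} (U : Set (E m)) (hU : IsOpen U)
    (V : Set (E n)) (hV : IsOpen V)
    (ψ : E m → ℂ) (hψ : ContDiffOn ℝ (⊤ : ℕ∞) ψ U)
    (φ : E n → ℂ) (hφ : ContDiffOn ℝ (⊤ : ℕ∞) φ V) :
    (∀ p ∈ U ×ˢ V,
      lapG (lapG (fun q : E m × E n => (ψ q.1 + φ q.2) ^ 2)) p =
        lapC (lapC (fun x => (ψ x) ^ 2)) p.1 + lapC (lapC (fun y => (φ y) ^ 2)) p.2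
          + 2 * (φ p.2 * lapC (lapC ψ) p.1 + ψ p.1 * lapC (lapC φ) p.2
              + 2 * (lapC ψ p.1 * lapC φ p.2))) ∧
    ((∀ x ∈ U, lapC (lapC ψ) x = 0) →
      (∀ x ∈ U, lapC (lapC (fun x' => (ψ x') ^ 2)) x = 0) →
      (∀ y ∈ V, lapC φ y = 0) →
      (∀ y ∈ V, lapC (fun y' => (φ y') ^ 2) y = 0) →
      ∀ p ∈ U ×ˢ V,
        lapG (lapG (fun q : E m × E n => (ψ q.1 + φ q.2) ^ 2)) p = 0) := by
  
  have hψ' : ContDiffOn ℝ (⊤ : ℕ∞) ψ U := hψ.of_le (by simp)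
  have hφ' : ContDiffOn ℝ (⊤ : ℕ∞) φ V := hφ.of_le (by simp)
  have hA : ContDiffOn ℝ (⊤ : ℕ∞) (lapC (fun x => ψ x ^ 2)) U :=
    contDiffOn_lapC hU (hψ'.pow 2)
  have hB : ContDiffOn ℝ (⊤ : ℕ∞) (lapC (fun y => φ y ^ 2)) V :=
    contDiffOn_lapC hV (hφ'.pow 2)
  have hDψ : ContDiffOn ℝ (⊤ : ℕ∞) (lapC ψ) U := contDiffOn_lapC hU hψ'
  have hDφ : ContDiffOn ℝ (⊤ : ℕ∞) (lapC φ) V := contDiffOn_lapC hV hφ'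
  have hG : ∀ p : E m × E n, p.1 ∈ U → p.2 ∈ V →
      lapG (fun q : E m × E n => (ψ q.1 + φ q.2) ^ 2) p
        = lapC (fun x => ψ x ^ 2) p.1 + lapC (fun y => φ y ^ 2) p.2
          + 2 * φ p.2 * lapC ψ p.1 + 2 * ψ p.1 * lapC φ p.2 := by
    intro p h1 h2
    unfold lapG
    have e1 : lapC (fun x => (ψ x + φ p.2) ^ 2) p.1
        = lapC (fun x => ψ x ^ 2) p.1 + 2 * φ p.2 * lapC ψ p.1 :=
      lapC_sq_add_const hU hψ' (φ p.2) h1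
    have e2 : lapC (fun y => (ψ p.1 + φ y) ^ 2) p.2
        = lapC (fun y => φ y ^ 2) p.2 + 2 * ψ p.1 * lapC φ p.2 := by
      have e : (fun y => (ψ p.1 + φ y) ^ 2) = fun y => (φ y + ψ p.1) ^ 2 :=
        funext fun y => by ring
      rw [e]
      exact lapC_sq_add_const hV hφ' (ψ p.1) h2
    rw [e1, e2]; ring
  have main : ∀ p ∈ U ×ˢ V,
      lapG (lapG (fun q : E m × E n => (ψ q.1 + φ q.2) ^ 2)) p =
        lapC (lapC (fun x => (ψ x) ^ 2)) p.1 + lapC (lapC (fun y => (φ y) ^ 2)) p.2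
          + 2 * (φ p.2 * lapC (lapC ψ) p.1 + ψ p.1 * lapC (lapC φ) p.2
              + 2 * (lapC ψ p.1 * lapC φ p.2)) := by
    rintro p hp
    obtain ⟨h1, h2⟩ := hp
    have c1 : (fun x => lapG (fun q : E m × E n => (ψ q.1 + φ q.2) ^ 2) (x, p.2))
        =ᶠ[nhds p.1] fun x => (lapC (fun x' => ψ x' ^ 2)) x
          + ((2 * φ p.2) * (lapC ψ) x
            + ((2 * lapC φ p.2) * ψ x + lapC (fun y => φ y ^ 2) p.2)) := by
      filter_upwards [hU.mem_nhds h1] with x hx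
      rw [hG (x, p.2) hx h2]; ring
    have c2 : (fun y => lapG (fun q : E m × E n => (ψ q.1 + φ q.2) ^ 2) (p.1, y))
        =ᶠ[nhds p.2] fun y => (lapC (fun y' => φ y' ^ 2)) y
          + ((2 * ψ p.1) * (lapC φ) y
            + ((2 * lapC ψ p.1) * φ y + lapC (fun x => ψ x ^ 2) p.1)) := by
      filter_upwards [hV.mem_nhds h2] with y hy
      rw [hG (p.1, y) h1 hy]; ring
    show lapC _ p.1 + lapC _ p.2 = _
    rw [lapC_congr c1, lapC_congr c2,
      lapC_combo hU hA hDψ hψ' (2 * φ p.2) (2 * lapC φ p.2) _ h1,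
      lapC_combo hV hB hDφ hφ' (2 * ψ p.1) (2 * lapC ψ p.1) _ h2]
    ring
  refine ⟨main, fun z1 z2 z3 z4 p hp => ?_⟩
  obtain ⟨h1, h2⟩ := hp
  rw [main p ⟨h1, h2⟩, z1 p.1 h1, z2 p.1 h1, z3 p.2 h2,
    lapC_zero_on hV z3 h2, lapC_zero_on hV z4 h2]
  ring
end
end

section
/- Let U ⊆ ℝ^m be a nonempty connected open set and φ : U → ℝ^n a smooth map. Suppose that φ pulls back biharmonic functions to harmonic functions: for every open set V ⊆ ℝ^n and every biharmonic function f : V → ℝ, the composition f ∘ φ is harmonic on φ^{-1}(V). Then φ is constant. -/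
open scoped BigOperators RealInnerProductSpace

noncomputable section

/-! ### Auxiliary lemmas -/

lemma lap_const' {m : ℕ} (c : ℝ) (x : E m) : lap (fun _ => c) x = 0 := by
  simp [lap]

lemma lap_proj' {m : ℕ} (α : Fin m) (x : E m) : lap (fun y : E m => y α) x = 0 := by
  have h1 : ∀ y : E m, fderiv ℝ (fun y : E m => y α) y = EuclideanSpace.proj α := fun y =>
    (EuclideanSpace.proj (𝕜 := ℝ) α).fderiv
  simp only [lap, h1]
  simp

lemma fderiv_sq_proj' {m : ℕ} (α : Fin m) (y : E m) :
    fderiv ℝ (fun y : E m => y α * y α) y = (2 * y α) • (EuclideanSpace.proj α : E m →L[ℝ] ℝ) := by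
  have hp : HasFDerivAt (fun y : E m => y α) (EuclideanSpace.proj (𝕜 := ℝ) α) y :=
    (EuclideanSpace.proj (𝕜 := ℝ) α).hasFDerivAt
  rw [HasFDerivAt.fderiv (f := fun y : E m => y α * y α) (hp.mul hp)]
  ext v
  simp
  ring

lemma lap_sq_proj' {m : ℕ} (α : Fin m) (x : E m) :
    lap (fun y : E m => y α * y α) x = 2 := by
  have key : ∀ i : Fin m,
      fderiv ℝ (fun y => fderiv ℝ (fun y : E m => y α * y α) y (EuclideanSpace.single i 1)) x
        (EuclideanSpace.single i 1)
      = 2 * (EuclideanSpace.single (𝕜 := ℝ) i (1:ℝ) α)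
          * (EuclideanSpace.single (𝕜 := ℝ) i (1:ℝ) α) := by
    intro i
    have h1 : (fun y => fderiv ℝ (fun y : E m => y α * y α) y (EuclideanSpace.single i 1))
        = fun y : E m => (2 * EuclideanSpace.single (𝕜 := ℝ) i (1:ℝ) α) * y α := by
      funext y
      rw [fderiv_sq_proj']
      simp
    rw [h1]
    have hp : HasFDerivAt (fun y : E m => (2 * EuclideanSpace.single (𝕜 := ℝ) i (1:ℝ) α) * y α)
        ((2 * EuclideanSpace.single (𝕜 := ℝ) i (1:ℝ) α) • (EuclideanSpace.proj (𝕜 := ℝ) α)) x :=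
      ((EuclideanSpace.proj (𝕜 := ℝ) α).hasFDerivAt).const_mul _
    rw [hp.fderiv]
    simp [EuclideanSpace.single_apply]
    split <;> simp_all
  rw [lap, Finset.sum_congr rfl fun i _ => key i]
  simp [EuclideanSpace.single_apply]

lemma lap_mul_self' {m : ℕ} {g : E m → ℝ} {s : Set (E m)} (hs : IsOpen s)
    (hg : ContDiffOn ℝ (⊤ : ℕ∞) g s) {x : E m} (hx : x ∈ s) :
    lap (fun z => g z * g z) x
      = 2 * g x * lap g x
        + 2 * ∑ i : Fin m, (fderiv ℝ g x (EuclideanSpace.single i 1))^2 := by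
  have hgat : ∀ y ∈ s, ContDiffAt ℝ (⊤ : ℕ∞) g y := fun y hy => hg.contDiffAt (hs.mem_nhds hy)
  have hev : ∀ i : Fin m,
      (fun y => fderiv ℝ (fun z => g z * g z) y (EuclideanSpace.single i 1))
        =ᶠ[nhds x] (fun y => (2 * g y) * fderiv ℝ g y (EuclideanSpace.single i 1)) := by
    intro i
    filter_upwards [hs.mem_nhds hx] with y hy
    have hd : DifferentiableAt ℝ g y := (hgat y hy).differentiableAt (by simp)
    rw [fderiv_fun_mul hd hd]
    simp
    ring
  have key : ∀ i : Fin m,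
      fderiv ℝ (fun y => fderiv ℝ (fun z => g z * g z) y (EuclideanSpace.single i 1)) x
        (EuclideanSpace.single i 1)
      = 2 * g x * fderiv ℝ (fun y => fderiv ℝ g y (EuclideanSpace.single i 1)) x
          (EuclideanSpace.single i 1)
        + 2 * (fderiv ℝ g x (EuclideanSpace.single i 1))^2 := by
    intro i
    rw [(hev i).fderiv_eq]
    have hdg : DifferentiableAt ℝ (fun y => 2 * g y) x :=
      (((hgat x hx).differentiableAt (by simp)).const_mul 2)
    have hdD : DifferentiableAt ℝ (fun y => fderiv ℝ g y (EuclideanSpace.single i 1)) x := by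
      have h1 : ContDiffAt ℝ 1 (fderiv ℝ g) x := (hgat x hx).fderiv_right (by exact WithTop.coe_le_coe.2 le_top)
      exact (h1.differentiableAt one_ne_zero).clm_apply (differentiableAt_const _)
    rw [fderiv_fun_mul hdg hdD]
    have h2 : fderiv ℝ (fun y => 2 * g y) x = (2:ℝ) • fderiv ℝ g x :=
      fderiv_const_mul ((hgat x hx).differentiableAt (by simp)) 2
    rw [h2]
    simp
    ring
  rw [lap, Finset.sum_congr rfl fun i _ => key i, Finset.sum_add_distrib, lap,
    Finset.mul_sum, Finset.mul_sum]

lemma biharmonic_proj' {n : ℕ} (α : Fin n) :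
    BiharmonicOn (fun y : E n => y α) Set.univ := by
  refine ⟨(EuclideanSpace.proj (𝕜 := ℝ) α).contDiff.contDiffOn, fun x _ => ?_⟩
  have h : lap (fun y : E n => y α) = fun _ => (0:ℝ) := funext fun y => lap_proj' α y
  rw [h]
  exact lap_const' 0 x

lemma biharmonic_sq_proj' {n : ℕ} (α : Fin n) :
    BiharmonicOn (fun y : E n => y α * y α) Set.univ := by
  refine ⟨((EuclideanSpace.proj (𝕜 := ℝ) α).contDiff.mul
    (EuclideanSpace.proj (𝕜 := ℝ) α).contDiff).contDiffOn, fun x _ => ?_⟩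
  have h : lap (fun y : E n => y α * y α) = fun _ => (2:ℝ) := funext fun y => lap_sq_proj' α y
  rw [h]
  exact lap_const' 2 x

/-- a smooth map on a nonempty connected open set that pulls back every
biharmonic function to a harmonic function is constant. -/
theorem stmt_18 {m n : ℕ} (U : Set (E m)) (hU : IsOpen U)
    (hne : U.Nonempty) (hconn : IsConnected U)
    (φ : E m → E n) (hφ : ContDiffOn ℝ (⊤ : ℕ∞) φ U)
    (hpull : ∀ V : Set (E n), IsOpen V → ∀ f : E n → ℝ, BiharmonicOn f V →
      ∀ x ∈ U ∩ φ ⁻¹' V, lap (f ∘ φ) x = 0) :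
    ∀ x ∈ U, ∀ y ∈ U, φ x = φ y := by
  -- Step 1: the full derivative of φ vanishes on U.
  have hderiv : ∀ x ∈ U, fderiv ℝ φ x = 0 := by
    intro x hx
    have hdφ : DifferentiableAt ℝ φ x :=
      (hφ.contDiffAt (hU.mem_nhds hx)).differentiableAt (by simp)
    -- each component has vanishing derivative
    have hcomp : ∀ α : Fin n, fderiv ℝ (fun z => φ z α) x = 0 := by
      intro α
      set g : E m → ℝ := fun z => φ z α with hg_def
      have hgU : ContDiffOn ℝ (⊤ : ℕ∞) g U :=
        (EuclideanSpace.proj (𝕜 := ℝ) α).contDiff.comp_contDiffOn hφ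
      -- the pullback of the coordinate function is harmonic on U
      have hlapg : lap g x = 0 :=
        hpull Set.univ isOpen_univ (fun y => y α) (biharmonic_proj' α) x ⟨hx, trivial⟩
      -- the pullback of the squared coordinate is harmonic on U
      have hlapsq : lap (fun z => g z * g z) x = 0 :=
        hpull Set.univ isOpen_univ (fun y => y α * y α) (biharmonic_sq_proj' α) x ⟨hx, trivial⟩
      have hsum : ∑ i : Fin m, (fderiv ℝ g x (EuclideanSpace.single i 1))^2 = 0 := by
        have := lap_mul_self' hU hgU hx
        rw [hlapsq, hlapg] at this
        linarith
      have hzero : ∀ i : Fin m, fderiv ℝ g x (EuclideanSpace.single i 1) = 0 := by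
        intro i
        have h := (Finset.sum_eq_zero_iff_of_nonneg
          (fun i _ => sq_nonneg (fderiv ℝ g x (EuclideanSpace.single i 1)))).1 hsum i
          (Finset.mem_univ i)
        exact pow_eq_zero_iff (two_ne_zero) |>.1 h
      -- conclude by checking on the standard basis
      apply ContinuousLinearMap.coe_injective
      apply Module.Basis.ext (EuclideanSpace.basisFun (Fin m) ℝ).toBasis
      intro i
      simp only [OrthonormalBasis.coe_toBasis, EuclideanSpace.basisFun_apply,
        ContinuousLinearMap.coe_coe, LinearMap.zero_apply, ContinuousLinearMap.zero_apply]
      exact hzero i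
    -- assemble componentwise information
    ext v α
    have hα : HasFDerivAt (fun z => φ z α)
        ((EuclideanSpace.proj (𝕜 := ℝ) α).comp (fderiv ℝ φ x)) x :=
      (EuclideanSpace.proj (𝕜 := ℝ) α).hasFDerivAt.comp x hdφ.hasFDerivAt
    have := hα.fderiv
    rw [hcomp α] at this
    have h0 : ((EuclideanSpace.proj (𝕜 := ℝ) α).comp (fderiv ℝ φ x)) v = 0 := by
      rw [← this]; rfl
    simpa using h0
  -- Step 2: φ is locally constant on U.
  have hloc : ∀ x ∈ U, ∃ ε > 0, Metric.ball x ε ⊆ U ∧ ∀ y ∈ Metric.ball x ε, φ y = φ x := by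
    intro x hx
    obtain ⟨ε, hε, hball⟩ := Metric.isOpen_iff.1 hU x hx
    refine ⟨ε, hε, hball, fun y hy => ?_⟩
    have hconv : Convex ℝ (Metric.ball x ε) := convex_ball x ε
    refine hconv.is_const_of_fderivWithin_eq_zero
      ((hφ.mono hball).differentiableOn (by simp)) (fun z hz => ?_) hy (Metric.mem_ball_self hε)
    rw [fderivWithin_of_isOpen Metric.isOpen_ball hz]
    exact hderiv z (hball hz)
  -- Step 3: use connectedness.
  haveI : PreconnectedSpace ↥U := Subtype.preconnectedSpace hconn.isPreconnected
  have hψ : IsLocallyConstant (fun p : ↥U => φ p) := by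
    rw [IsLocallyConstant.iff_exists_open]
    rintro ⟨x, hx⟩
    obtain ⟨ε, hε, hball, hconst⟩ := hloc x hx
    refine ⟨Subtype.val ⁻¹' Metric.ball x ε,
      Metric.isOpen_ball.preimage continuous_subtype_val, by simpa using hε, ?_⟩
    rintro ⟨y, hy⟩ hyb
    exact hconst y hyb
  intro x hx y hy
  exact hψ.apply_eq_of_preconnectedSpace ⟨x, hx⟩ ⟨y, hy⟩
end
end

section
/- Let M = {x ∈ ℝ⁴ : (x₁, x₂, x₃) ≠ (0,0,0)} and define φ = (φ^1, φ^2) : M → ℝ² by φ(x₁, x₂, x₃, x₄) = (√(x₁² + x₂² + x₃²), x₄). Then: (a) |∇φ^1| = |∇φ^2| = 1 and ⟨∇φ^1, ∇φ^2⟩ = 0 at every point of M (φ is a Riemannian submersion); (b) Δφ^1 = 2/√(x₁² + x₂² + x₃²) (so φ is not harmonic), Δ²φ^1 = 0, and Δφ^2 = 0; (c) the map (φ^1 + iφ^2)² = (x₁² + x₂² + x₃² − x₄²) + i·2x₄√(x₁² + x₂² + x₃²) : M → ℂ is biharmonic; and consequently (d) φ is a generalized harmonic morphism which is not a harmonic morphism.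 -/
open scoped BigOperators RealInnerProductSpace

noncomputable section

namespace Aux

open Filter

variable {F : Type*} [NormedAddCommGroup F] [NormedSpace ℝ F]

def qq (y : E 4) : ℝ := y 0 ^ 2 + y 1 ^ 2 + y 2 ^ 2
def rr (y : E 4) : ℝ := Real.sqrt (qq y)
def Φ (y : E 4) : ℝ × ℝ := (rr y, y 3)

lemma qq_nonneg (y : E 4) : 0 ≤ qq y := by unfold qq; positivity

lemma continuous_qq : Continuous qq := by
  unfold qq; fun_prop

lemma continuous_rr : Continuous rr := Real.continuous_sqrt.comp continuous_qq

lemma continuous_Φ : Continuous Φ := continuous_rr.prodMk (EuclideanSpace.proj (3 : Fin 4)).continuous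

def Ω : Set (E 4) := {y | qq y ≠ 0}

lemma isOpen_Ω : IsOpen Ω := isOpen_ne_fun continuous_qq continuous_const

lemma qq_pos {y : E 4} (hy : y ∈ Ω) : 0 < qq y := (qq_nonneg y).lt_of_ne (Ne.symm hy)

lemma rr_pos {y : E 4} (hy : y ∈ Ω) : 0 < rr y := Real.sqrt_pos.mpr (qq_pos hy)

lemma rr_ne {y : E 4} (hy : y ∈ Ω) : rr y ≠ 0 := (rr_pos hy).ne'

lemma rr_sq {y : E 4} : rr y ^ 2 = qq y := Real.sq_sqrt (qq_nonneg y)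

/-- the projection CLM -/
abbrev pj (i : Fin 4) : E 4 →L[ℝ] ℝ := EuclideanSpace.proj i

def el (m : ℕ) (i : Fin m) : E m := EuclideanSpace.single i 1

/-- derivative of `rr` -/
def Dr (x : E 4) : E 4 →L[ℝ] ℝ :=
  (rr x)⁻¹ • ((x 0) • pj 0 + (x 1) • pj 1 + (x 2) • pj 2)

lemma Dr_apply (x : E 4) (v : E 4) :
    Dr x v = (rr x)⁻¹ * (x 0 * v 0 + x 1 * v 1 + x 2 * v 2) := by
  simp [Dr, mul_add]

lemma hasFDerivAt_qq (x : E 4) :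
    HasFDerivAt qq ((2 * x 0) • pj 0 + (2 * x 1) • pj 1 + (2 * x 2) • pj 2) x := by
  have h : ∀ i : Fin 4, HasFDerivAt (fun y : E 4 => y i ^ 2) ((2 * x i) • pj i) x := by
    intro i
    have := ((pj i).hasFDerivAt (x := x)).mul ((pj i).hasFDerivAt (x := x))
    have h2 : (x i) • pj i + (x i) • pj i = (2 * x i) • pj i := by
      ext v; simp; ring
    simp only [PiLp.proj_apply] at this
    rw [← h2]
    have e : (fun y : E 4 => y i ^ 2) = ⇑(pj i) * ⇑(pj i) := by funext y; simp [sq]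
    rw [e]; exact this
  exact ((h 0).add (h 1)).add (h 2)

lemma hasFDerivAt_rr {x : E 4} (hx : x ∈ Ω) : HasFDerivAt rr (Dr x) x := by
  have h := (Real.hasDerivAt_sqrt (qq_pos hx).ne').comp_hasFDerivAt x (hasFDerivAt_qq x)
  refine h.congr_fderiv ?_
  symm
  ext v
  have hr : rr x ≠ 0 := rr_ne hx
  simp [Dr, mul_add]
  rw [show √(qq x) = rr x from rfl]
  ring

def DΦ (x : E 4) : E 4 →L[ℝ] ℝ × ℝ := (Dr x).prod (pj 3)

lemma hasFDerivAt_Φ {x : E 4} (hx : x ∈ Ω) : HasFDerivAt Φ (DΦ x) x :=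
  (hasFDerivAt_rr hx).prodMk ((pj 3).hasFDerivAt)

def pd1 (g : ℝ × ℝ → F) (p : ℝ × ℝ) : F := fderiv ℝ g p (1, 0)
def pd2 (g : ℝ × ℝ → F) (p : ℝ × ℝ) : F := fderiv ℝ g p (0, 1)

lemma pair_eq (a b : ℝ) : (a, b) = a • ((1 : ℝ), (0 : ℝ)) + b • ((0 : ℝ), (1 : ℝ)) := by
  simp [Prod.ext_iff]

lemma fderiv_pair_apply (g : ℝ × ℝ → F) (p : ℝ × ℝ) (a b : ℝ) :
    fderiv ℝ g p (a, b) = a • pd1 g p + b • pd2 g p := by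
  rw [pair_eq a b, map_add, map_smul, map_smul]; rfl

/-- good pair: `g` is smooth on the open set `W`. -/
def Good (g : ℝ × ℝ → F) (W : Set (ℝ × ℝ)) : Prop := IsOpen W ∧ ContDiffOn ℝ (⊤ : ℕ∞) g W

lemma Good.isOpen {g : ℝ × ℝ → F} {W} (h : Good g W) : IsOpen W := h.1

lemma Good.contDiffAt {g : ℝ × ℝ → F} {W} (h : Good g W) {p : ℝ × ℝ} (hp : p ∈ W) :
    ContDiffAt ℝ (⊤ : ℕ∞) g p := h.2.contDiffAt (h.1.mem_nhds hp)

lemma Good.differentiableAt {g : ℝ × ℝ → F} {W} (h : Good g W) {p : ℝ × ℝ} (hp : p ∈ W) :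
    DifferentiableAt ℝ g p := (h.contDiffAt hp).differentiableAt (by simp)

lemma Good.fderiv {g : ℝ × ℝ → F} {W} (h : Good g W) :
    Good (fderiv ℝ g) W := ⟨h.1, h.2.fderiv_of_isOpen h.1 (by simp)⟩

lemma Good.pd1 {g : ℝ × ℝ → F} {W} (h : Good g W) : Good (pd1 g) W :=
  ⟨h.1, (h.fderiv.2.clm_apply contDiffOn_const)⟩

lemma Good.pd2 {g : ℝ × ℝ → F} {W} (h : Good g W) : Good (pd2 g) W :=
  ⟨h.1, (h.fderiv.2.clm_apply contDiffOn_const)⟩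

lemma hasFDerivAt_comp {g : ℝ × ℝ → F} {x : E 4} (hx : x ∈ Ω)
    (hg : DifferentiableAt ℝ g (Φ x)) :
    HasFDerivAt (fun y => g (Φ y)) ((fderiv ℝ g (Φ x)).comp (DΦ x)) x :=
  (hg.hasFDerivAt).comp x (hasFDerivAt_Φ hx)

lemma fderiv_comp_el {g : ℝ × ℝ → F} {x : E 4} (hx : x ∈ Ω)
    (hg : DifferentiableAt ℝ g (Φ x)) (i : Fin 4) :
    fderiv ℝ (fun y => g (Φ y)) x (el 4 i)
      = (Dr x (el 4 i)) • pd1 g (Φ x) + ((el 4 i) 3) • pd2 g (Φ x) := by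
  rw [(hasFDerivAt_comp hx hg).fderiv]
  have : (DΦ x) (el 4 i) = (Dr x (el 4 i), (el 4 i) 3) := rfl
  rw [ContinuousLinearMap.comp_apply, this, fderiv_pair_apply]

lemma el_apply (m : ℕ) (i j : Fin m) : el m i j = if j = i then 1 else 0 :=
  EuclideanSpace.single_apply i 1 j

lemma Dr_el_ne3 {x : E 4} (i : Fin 4) (hi : i ≠ 3) :
    Dr x (el 4 i) = x i / rr x := by
  rw [Dr_apply]
  fin_cases i <;> simp_all [el_apply, div_eq_inv_mul]

lemma Dr_el3 {x : E 4} : Dr x (el 4 3) = 0 := by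
  rw [Dr_apply]; simp [el_apply]

lemma el3_apply (i : Fin 4) : el 4 i 3 = if (3 : Fin 4) = i then 1 else 0 := el_apply 4 i 3

lemma fderiv_comp_el_ne3 {g : ℝ × ℝ → F} {x : E 4} (hx : x ∈ Ω)
    (hg : DifferentiableAt ℝ g (Φ x)) (i : Fin 4) (hi : i ≠ 3) :
    fderiv ℝ (fun y => g (Φ y)) x (el 4 i) = (x i * (rr x)⁻¹) • pd1 g (Φ x) := by
  rw [fderiv_comp_el hx hg, Dr_el_ne3 i hi, el3_apply, if_neg (Ne.symm hi), div_eq_mul_inv]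
  simp

lemma fderiv_comp_el3 {g : ℝ × ℝ → F} {x : E 4} (hx : x ∈ Ω)
    (hg : DifferentiableAt ℝ g (Φ x)) :
    fderiv ℝ (fun y => g (Φ y)) x (el 4 3) = pd2 g (Φ x) := by
  rw [fderiv_comp_el hx hg, Dr_el3, el3_apply, if_pos rfl]
  simp

def S (W : Set (ℝ × ℝ)) : Set (E 4) := Ω ∩ Φ ⁻¹' W

lemma isOpen_S {W : Set (ℝ × ℝ)} (hW : IsOpen W) : IsOpen (S W) :=
  isOpen_Ω.inter (hW.preimage continuous_Φ)

lemma second_partial_ne3 {g : ℝ × ℝ → F} {W} (h : Good g W) {x : E 4}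
    (hx : x ∈ Ω) (hxW : Φ x ∈ W) (i : Fin 4) (hi : i ≠ 3) :
    fderiv ℝ (fun y => fderiv ℝ (fun z => g (Φ z)) y (el 4 i)) x (el 4 i)
      = ((x i * (rr x)⁻¹) ^ 2) • pd1 (pd1 g) (Φ x)
        + ((rr x)⁻¹ - (x i) ^ 2 * ((rr x) ^ 3)⁻¹) • pd1 g (Φ x) := by
  have hxS : x ∈ S W := ⟨hx, hxW⟩
  have hEv : (fun y => fderiv ℝ (fun z => g (Φ z)) y (el 4 i))
      =ᶠ[nhds x] (fun y => (y i * (rr y)⁻¹) • pd1 g (Φ y)) := by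
    filter_upwards [(isOpen_S h.isOpen).mem_nhds hxS] with y hy
    exact fderiv_comp_el_ne3 hy.1 (h.differentiableAt hy.2) i hi
  rw [hEv.fderiv_eq]
  have hA : HasFDerivAt (fun y => pd1 g (Φ y)) ((fderiv ℝ (pd1 g) (Φ x)).comp (DΦ x)) x :=
    hasFDerivAt_comp hx (h.pd1.differentiableAt hxW)
  have hinv : HasFDerivAt (fun y : E 4 => (rr y)⁻¹) ((-((rr x) ^ 2)⁻¹) • Dr x) x :=
    (hasDerivAt_inv (rr_ne hx)).comp_hasFDerivAt x (hasFDerivAt_rr hx)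
  have hc : HasFDerivAt (fun y : E 4 => y i * (rr y)⁻¹)
      ((x i) • ((-((rr x) ^ 2)⁻¹) • Dr x) + (rr x)⁻¹ • (pj i : E 4 →L[ℝ] ℝ)) x := by
    have := ((pj i).hasFDerivAt (x := x)).fun_mul hinv
    simpa using this
  rw [(hc.fun_smul hA).fderiv]
  have hDr : Dr x (el 4 i) = x i * (rr x)⁻¹ := by
    rw [Dr_el_ne3 i hi, div_eq_mul_inv]
  have hpj : (pj i : E 4 →L[ℝ] ℝ) (el 4 i) = 1 := by simp [el_apply]
  have hcomp : (fderiv ℝ (pd1 g) (Φ x)).comp (DΦ x) (el 4 i)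
      = (x i * (rr x)⁻¹) • pd1 (pd1 g) (Φ x) := by
    have h3 : (DΦ x) (el 4 i) = (Dr x (el 4 i), (el 4 i) 3) := rfl
    rw [ContinuousLinearMap.comp_apply, h3, fderiv_pair_apply, hDr, el3_apply,
      if_neg (Ne.symm hi)]
    simp [pd1]
  simp only [ContinuousLinearMap.add_apply, ContinuousLinearMap.smul_apply,
    ContinuousLinearMap.smulRight_apply, ContinuousLinearMap.coe_smul', Pi.smul_apply,
    hcomp, hDr, hpj]
  have hr := rr_ne hx
  match_scalars <;> simp only [smul_eq_mul, mul_one] <;> field_simp <;> ring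

lemma second_partial_3 {g : ℝ × ℝ → F} {W} (h : Good g W) {x : E 4}
    (hx : x ∈ Ω) (hxW : Φ x ∈ W) :
    fderiv ℝ (fun y => fderiv ℝ (fun z => g (Φ z)) y (el 4 3)) x (el 4 3)
      = pd2 (pd2 g) (Φ x) := by
  have hxS : x ∈ S W := ⟨hx, hxW⟩
  have hEv : (fun y => fderiv ℝ (fun z => g (Φ z)) y (el 4 3))
      =ᶠ[nhds x] (fun y => pd2 g (Φ y)) := by
    filter_upwards [(isOpen_S h.isOpen).mem_nhds hxS] with y hy
    exact fderiv_comp_el3 hy.1 (h.differentiableAt hy.2)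
  rw [hEv.fderiv_eq]
  exact fderiv_comp_el3 hx (h.pd2.differentiableAt hxW)

def lapF (f : E 4 → F) (x : E 4) : F :=
  ∑ i : Fin 4, fderiv ℝ (fun y => fderiv ℝ f y (el 4 i)) x (el 4 i)

theorem lapF_comp {g : ℝ × ℝ → F} {W} (h : Good g W) {x : E 4}
    (hx : x ∈ Ω) (hxW : Φ x ∈ W) :
    lapF (fun z => g (Φ z)) x
      = pd1 (pd1 g) (Φ x) + pd2 (pd2 g) (Φ x) + (2 * (rr x)⁻¹) • pd1 g (Φ x) := by
  rw [lapF, Fin.sum_univ_four]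
  rw [second_partial_ne3 h hx hxW 0 (by decide), second_partial_ne3 h hx hxW 1 (by decide),
    second_partial_ne3 h hx hxW 2 (by decide), second_partial_3 h hx hxW]
  have hq : x 0 ^ 2 + x 1 ^ 2 + x 2 ^ 2 = rr x ^ 2 := by rw [rr_sq]; rfl
  have hr := rr_ne hx
  match_scalars
  · field_simp
    linear_combination hq
  · field_simp
    linear_combination (-1 : ℝ) * hq
  · ring

lemma lapF_congr {f g : E 4 → F} {U : Set (E 4)} (hU : IsOpen U) {x : E 4} (hx : x ∈ U)
    (hfg : Set.EqOn f g U) : lapF f x = lapF g x := by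
  unfold lapF
  refine Finset.sum_congr rfl fun i _ => ?_
  have hEv : (fun y => fderiv ℝ f y (el 4 i)) =ᶠ[nhds x] (fun y => fderiv ℝ g y (el 4 i)) := by
    filter_upwards [hU.mem_nhds hx] with y hy
    rw [(hfg.eventuallyEq_of_mem (hU.mem_nhds hy)).fderiv_eq]
  rw [hEv.fderiv_eq]

lemma pd1_congr {A B : ℝ × ℝ → F} {U : Set (ℝ × ℝ)} (hU : IsOpen U) {p : ℝ × ℝ}
    (hp : p ∈ U) (hAB : Set.EqOn A B U) : pd1 A p = pd1 B p := by
  unfold pd1; rw [(hAB.eventuallyEq_of_mem (hU.mem_nhds hp)).fderiv_eq]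

lemma pd2_congr {A B : ℝ × ℝ → F} {U : Set (ℝ × ℝ)} (hU : IsOpen U) {p : ℝ × ℝ}
    (hp : p ∈ U) (hAB : Set.EqOn A B U) : pd2 A p = pd2 B p := by
  unfold pd2; rw [(hAB.eventuallyEq_of_mem (hU.mem_nhds hp)).fderiv_eq]

/-- symmetry of second derivatives -/
lemma pd_symm {A : ℝ × ℝ → F} {p : ℝ × ℝ} (hA : ContDiffAt ℝ 2 A p) :
    pd2 (pd1 A) p = pd1 (pd2 A) p := by
  have hdiff : ∀ᶠ y in nhds p, DifferentiableAt ℝ A y := by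
    obtain ⟨u, hu, hcd⟩ := hA.contDiffOn (m := 1) (by norm_num) (by simp)
    filter_upwards [eventually_mem_nhds_iff.mpr hu] with y hy
    exact (hcd.contDiffAt hy).differentiableAt one_ne_zero
  have hf' : ∀ᶠ y in nhds p, HasFDerivAt A (fderiv ℝ A y) y :=
    hdiff.mono fun y hy => hy.hasFDerivAt
  have hdf : DifferentiableAt ℝ (fderiv ℝ A) p :=
    (hA.fderiv_right (m := 1) le_rfl).differentiableAt one_ne_zero
  have hx : HasFDerivAt (fderiv ℝ A) (fderiv ℝ (fderiv ℝ A) p) p := hdf.hasFDerivAt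
  have hsymm := second_derivative_symmetric_of_eventually hf' hx (1, 0) (0, 1)
  have h1 : pd2 (pd1 A) p = fderiv ℝ (fderiv ℝ A) p (0, 1) (1, 0) := by
    unfold pd2 pd1
    rw [fderiv_clm_apply hdf (differentiableAt_const _)]
    simp
  have h2 : pd1 (pd2 A) p = fderiv ℝ (fderiv ℝ A) p (1, 0) (0, 1) := by
    unfold pd2 pd1
    rw [fderiv_clm_apply hdf (differentiableAt_const _)]
    simp
  rw [h1, h2, ← hsymm]

lemma pd1_smul {c : ℝ × ℝ → ℝ} {A : ℝ × ℝ → F} {q : ℝ × ℝ} {Lc : ℝ × ℝ →L[ℝ] ℝ}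
    (hc : HasFDerivAt c Lc q) (hA : DifferentiableAt ℝ A q) :
    pd1 (fun z => c z • A z) q = Lc (1, 0) • A q + c q • pd1 A q := by
  rw [Aux.pd1, (hc.fun_smul hA.hasFDerivAt).fderiv]
  simp [Aux.pd1, add_comm]

lemma pd2_smul {c : ℝ × ℝ → ℝ} {A : ℝ × ℝ → F} {q : ℝ × ℝ} {Lc : ℝ × ℝ →L[ℝ] ℝ}
    (hc : HasFDerivAt c Lc q) (hA : DifferentiableAt ℝ A q) :
    pd2 (fun z => c z • A z) q = Lc (0, 1) • A q + c q • pd2 A q := by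
  rw [Aux.pd2, (hc.fun_smul hA.hasFDerivAt).fderiv]
  simp [Aux.pd2, add_comm]

lemma pd1_add {X Y : ℝ × ℝ → F} {p : ℝ × ℝ} (hX : DifferentiableAt ℝ X p)
    (hY : DifferentiableAt ℝ Y p) :
    pd1 (fun q => X q + Y q) p = pd1 X p + pd1 Y p := by
  unfold Aux.pd1; rw [fderiv_fun_add hX hY]; rfl

lemma hasFDerivAt_c1 (a : ℝ) {q : ℝ × ℝ} (hq : q.1 ≠ 0) :
    HasFDerivAt (fun z : ℝ × ℝ => a * z.1⁻¹)
      ((-a * ((q.1 ^ 2)⁻¹)) • ContinuousLinearMap.fst ℝ ℝ ℝ) q := by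
  have h1 : HasDerivAt (fun s : ℝ => s⁻¹) (-(q.1 ^ 2)⁻¹) q.1 := hasDerivAt_inv hq
  have h2 := (h1.comp_hasFDerivAt q
    (hasFDerivAt_fst : HasFDerivAt _ (ContinuousLinearMap.fst ℝ ℝ ℝ) q)).const_mul a
  rw [smul_smul] at h2
  have h3 : a * -(q.1 ^ 2)⁻¹ = -a * (q.1 ^ 2)⁻¹ := by ring
  rw [h3] at h2
  exact h2

lemma hasFDerivAt_c2 (a : ℝ) {q : ℝ × ℝ} (hq : q.1 ≠ 0) :
    HasFDerivAt (fun z : ℝ × ℝ => a * (z.1 ^ 2)⁻¹)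
      ((-2 * a * ((q.1 ^ 3)⁻¹)) • ContinuousLinearMap.fst ℝ ℝ ℝ) q := by
  have h0 : HasDerivAt (fun s : ℝ => s ^ 2) (2 * q.1) q.1 := by
    simpa using hasDerivAt_pow 2 q.1
  have h1 : HasDerivAt (fun s : ℝ => (s ^ 2)⁻¹) (-(2 * q.1) / (q.1 ^ 2) ^ 2) q.1 :=
    h0.inv (pow_ne_zero 2 hq)
  have h2 := (h1.comp_hasFDerivAt q
    (hasFDerivAt_fst : HasFDerivAt _ (ContinuousLinearMap.fst ℝ ℝ ℝ) q)).const_mul a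
  rw [smul_smul] at h2
  have h3 : a * (-(2 * q.1) / (q.1 ^ 2) ^ 2) = -2 * a * (q.1 ^ 3)⁻¹ := by
    field_simp
  rw [h3] at h2
  exact h2

theorem lapF_comp_sq {g : ℝ × ℝ → F} {W} (h : Good g W)
    (hharm : ∀ q ∈ W, pd1 (pd1 g) q + pd2 (pd2 g) q = 0)
    {x : E 4} (hx : x ∈ Ω) (hxW : Φ x ∈ W) :
    lapF (fun y => lapF (fun z => g (Φ z)) y) x = 0 := by
  have hW'open : IsOpen (W ∩ {q : ℝ × ℝ | 0 < q.1}) :=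
    h.isOpen.inter (isOpen_lt continuous_const continuous_fst)
  set W' : Set (ℝ × ℝ) := W ∩ {q : ℝ × ℝ | 0 < q.1} with hW'def
  have hpW' : Φ x ∈ W' := ⟨hxW, rr_pos hx⟩
  have hGoodA : Good (pd1 g) W := h.pd1
  have hGoodH : Good (fun q : ℝ × ℝ => (2 * (q.1)⁻¹) • pd1 g q) W' := by
    refine ⟨hW'open, ContDiffOn.smul ?_ (hGoodA.2.mono Set.inter_subset_left)⟩
    exact contDiffOn_const.mul (contDiff_fst.contDiffOn.inv fun q hq => hq.2.ne')
  -- Step 1: on `S W'` the Laplacian of `g ∘ Φ` is `H ∘ Φ`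
  have hEq : Set.EqOn (fun y => lapF (fun z => g (Φ z)) y)
      (fun y => (2 * ((Φ y).1)⁻¹) • pd1 g (Φ y)) (S W') := by
    intro y hy
    have h1 := lapF_comp h hy.1 hy.2.1
    have h2 := hharm (Φ y) hy.2.1
    simp only
    rw [h1, h2, zero_add]
    rfl
  rw [lapF_congr (isOpen_S hW'open) ⟨hx, hpW'⟩ hEq, lapF_comp hGoodH hx hpW']
  -- notation
  have hp1 : (Φ x).1 = rr x := rfl
  have hppos : 0 < (Φ x).1 := rr_pos hx
  have hpne : (Φ x).1 ≠ 0 := hppos.ne'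
  -- pd1 H and pd2 H on W'
  have hpd1H : Set.EqOn (pd1 (fun q : ℝ × ℝ => (2 * (q.1)⁻¹) • pd1 g q))
      (fun q => (-2 * (q.1 ^ 2)⁻¹) • pd1 g q + (2 * q.1⁻¹) • pd1 (pd1 g) q) W' := by
    intro q hq
    rw [pd1_smul (hasFDerivAt_c1 2 hq.2.ne') (hGoodA.differentiableAt hq.1)]
    simp
  have hpd2H : Set.EqOn (pd2 (fun q : ℝ × ℝ => (2 * (q.1)⁻¹) • pd1 g q))
      (fun q => (2 * q.1⁻¹) • pd2 (pd1 g) q) W' := by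
    intro q hq
    rw [pd2_smul (hasFDerivAt_c1 2 hq.2.ne') (hGoodA.differentiableAt hq.1)]
    simp
  -- second derivatives of H at p
  have hA' : DifferentiableAt ℝ (pd1 g) (Φ x) := hGoodA.differentiableAt hxW
  have hA1' : DifferentiableAt ℝ (pd1 (pd1 g)) (Φ x) := hGoodA.pd1.differentiableAt hxW
  have hA2' : DifferentiableAt ℝ (pd2 (pd1 g)) (Φ x) := hGoodA.pd2.differentiableAt hxW
  have hpd11H : pd1 (pd1 (fun q : ℝ × ℝ => (2 * (q.1)⁻¹) • pd1 g q)) (Φ x)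
      = ((-2 * ((Φ x).1 ^ 2)⁻¹) • pd1 (pd1 g) (Φ x)
          + (-2 * -2 * (((Φ x).1 ^ 3)⁻¹)) • pd1 g (Φ x))
        + ((2 * (Φ x).1⁻¹) • pd1 (pd1 (pd1 g)) (Φ x)
          + (-2 * ((Φ x).1 ^ 2)⁻¹) • pd1 (pd1 g) (Φ x)) := by
    rw [pd1_congr hW'open hpW' hpd1H]
    have hterm1 := (hasFDerivAt_c2 (-2) hpne).fun_smul hA'.hasFDerivAt
    have hterm2 := (hasFDerivAt_c1 2 hpne).fun_smul hA1'.hasFDerivAt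
    rw [Aux.pd1, (hterm1.fun_add hterm2).fderiv]
    simp [Aux.pd1]
    try module
  have hpd22H : pd2 (pd2 (fun q : ℝ × ℝ => (2 * (q.1)⁻¹) • pd1 g q)) (Φ x)
      = (2 * (Φ x).1⁻¹) • pd2 (pd2 (pd1 g)) (Φ x) := by
    rw [pd2_congr hW'open hpW' hpd2H]
    rw [pd2_smul (hasFDerivAt_c1 2 hpne) hA2']
    simp
  have hpd1Hp := hpd1H hpW'
  rw [hpd11H, hpd22H, hpd1Hp]
  -- collect scalars
  have hcollect : ∀ (a b c d : F),
      ((-2 * ((Φ x).1 ^ 2)⁻¹) • b + (-2 * -2 * (((Φ x).1 ^ 3)⁻¹)) • a)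
        + ((2 * (Φ x).1⁻¹) • c + (-2 * ((Φ x).1 ^ 2)⁻¹) • b)
        + (2 * (Φ x).1⁻¹) • d
        + (2 * (rr x)⁻¹) • ((-2 * ((Φ x).1 ^ 2)⁻¹) • a + (2 * (Φ x).1⁻¹) • b)
      = (2 * (Φ x).1⁻¹) • (c + d) := by
    intro a b c d
    rw [← hp1]
    match_scalars <;> field_simp <;> ring
  rw [hcollect]
  -- the harmonic factor vanishes, using symmetry of second derivatives
  have hsymmOn : Set.EqOn (pd2 (pd1 g)) (pd1 (pd2 g)) W := fun q hq =>
    pd_symm ((h.contDiffAt hq).of_le (WithTop.coe_le_coe.mpr le_top))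
  have hswap : pd2 (pd2 (pd1 g)) (Φ x) = pd1 (pd2 (pd2 g)) (Φ x) := by
    rw [pd2_congr h.isOpen hxW hsymmOn]
    exact pd_symm ((h.pd2.contDiffAt hxW).of_le (WithTop.coe_le_coe.mpr le_top))
  rw [hswap]
  have hzero : pd1 (pd1 (pd1 g)) (Φ x) + pd1 (pd2 (pd2 g)) (Φ x) = 0 := by
    rw [← pd1_add (hGoodA.pd1.differentiableAt hxW) (h.pd2.pd2.differentiableAt hxW)]
    have : pd1 (fun q => pd1 (pd1 g) q + pd2 (pd2 g) q) (Φ x)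
        = pd1 (fun _ => (0 : F)) (Φ x) := pd1_congr h.isOpen hxW fun q hq => hharm q hq
    rw [this, Aux.pd1, fderiv_fun_const]
    simp
  rw [hzero, smul_zero]

/-! ### concrete `g`'s -/

lemma pd1_fst : pd1 (fun q : ℝ × ℝ => q.1) = fun _ => (1 : ℝ) := by
  funext p
  rw [Aux.pd1, (hasFDerivAt_fst (p := p)).fderiv]
  rfl

lemma pd2_fst : pd2 (fun q : ℝ × ℝ => q.1) = fun _ => (0 : ℝ) := by
  funext p
  rw [Aux.pd2, (hasFDerivAt_fst (p := p)).fderiv]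
  rfl

lemma pd1_snd : pd1 (fun q : ℝ × ℝ => q.2) = fun _ => (0 : ℝ) := by
  funext p
  rw [Aux.pd1, (hasFDerivAt_snd (p := p)).fderiv]
  rfl

lemma pd2_snd : pd2 (fun q : ℝ × ℝ => q.2) = fun _ => (1 : ℝ) := by
  funext p
  rw [Aux.pd2, (hasFDerivAt_snd (p := p)).fderiv]
  rfl

lemma pd1_const (c : F) : pd1 (fun _ : ℝ × ℝ => c) = fun _ => (0 : F) := by
  funext p; rw [Aux.pd1, fderiv_fun_const]; rfl

lemma pd2_const (c : F) : pd2 (fun _ : ℝ × ℝ => c) = fun _ => (0 : F) := by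
  funext p; rw [Aux.pd2, fderiv_fun_const]; rfl

lemma good_fst : Good (fun q : ℝ × ℝ => q.1) Set.univ :=
  ⟨isOpen_univ, contDiff_fst.contDiffOn⟩

lemma good_snd : Good (fun q : ℝ × ℝ => q.2) Set.univ :=
  ⟨isOpen_univ, contDiff_snd.contDiffOn⟩

lemma harm_fst : ∀ q ∈ (Set.univ : Set (ℝ × ℝ)),
    pd1 (pd1 (fun q : ℝ × ℝ => q.1)) q + pd2 (pd2 (fun q : ℝ × ℝ => q.1)) q = 0 := by
  intro q _
  rw [pd1_fst, pd2_fst, pd1_const, pd2_const]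
  simp

lemma harm_snd : ∀ q ∈ (Set.univ : Set (ℝ × ℝ)),
    pd1 (pd1 (fun q : ℝ × ℝ => q.2)) q + pd2 (pd2 (fun q : ℝ × ℝ => q.2)) q = 0 := by
  intro q _
  rw [pd1_snd, pd2_snd, pd1_const, pd2_const]
  simp

lemma lapF_rr {x : E 4} (hx : x ∈ Ω) : lapF rr x = 2 * (rr x)⁻¹ := by
  have h := lapF_comp (g := fun q : ℝ × ℝ => q.1) good_fst hx (Set.mem_univ _)
  have he : lapF rr x = lapF (fun z => (Φ z).1) x := rfl
  rw [he, h, pd1_fst, pd2_fst, pd1_const, pd2_const]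
  simp

lemma lapF_lapF_rr {x : E 4} (hx : x ∈ Ω) : lapF (fun y => lapF rr y) x = 0 :=
  lapF_comp_sq good_fst harm_fst hx (Set.mem_univ _)

lemma lapF_x3 {x : E 4} (hx : x ∈ Ω) : lapF (fun y : E 4 => y 3) x = 0 := by
  have h := lapF_comp (g := fun q : ℝ × ℝ => q.2) good_snd hx (Set.mem_univ _)
  have he : lapF (fun y : E 4 => y 3) x = lapF (fun z => (Φ z).2) x := rfl
  rw [he, h, pd1_snd, pd2_snd, pd1_const, pd2_const]
  simp

lemma lapF_lapF_x3 {x : E 4} (hx : x ∈ Ω) :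
    lapF (fun y => lapF (fun z : E 4 => z 3) y) x = 0 :=
  lapF_comp_sq good_snd harm_snd hx (Set.mem_univ _)

/-! ### the complex square -/

def TC : ℝ × ℝ →L[ℝ] ℂ :=
  Complex.ofRealCLM.comp (ContinuousLinearMap.fst ℝ ℝ ℝ)
    + (ContinuousLinearMap.snd ℝ ℝ ℝ).smulRight Complex.I

lemma TC_apply (p : ℝ × ℝ) : TC p = (p.1 : ℂ) + p.2 • Complex.I := rfl

lemma TC_10 : TC (1, 0) = 1 := by simp [TC_apply]

lemma TC_01 : TC (0, 1) = Complex.I := by simp [TC_apply]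

lemma hasFDerivAt_gc (p : ℝ × ℝ) :
    HasFDerivAt (fun q => TC q * TC q) (TC p • TC + TC p • TC) p :=
  TC.hasFDerivAt.mul TC.hasFDerivAt

lemma pd1_gc : pd1 (fun q => TC q * TC q) = fun p => 2 * TC p := by
  funext p
  rw [Aux.pd1, (hasFDerivAt_gc p).fderiv]
  simp [TC_10]
  ring

lemma pd2_gc : pd2 (fun q => TC q * TC q) = fun p => (2 * Complex.I) * TC p := by
  funext p
  rw [Aux.pd2, (hasFDerivAt_gc p).fderiv]
  simp [TC_01]
  ring

lemma good_gc : Good (fun q => TC q * TC q) Set.univ :=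
  ⟨isOpen_univ, (TC.contDiff.mul TC.contDiff).contDiffOn⟩

lemma harm_gc : ∀ q ∈ (Set.univ : Set (ℝ × ℝ)),
    pd1 (pd1 (fun q => TC q * TC q)) q + pd2 (pd2 (fun q => TC q * TC q)) q = 0 := by
  intro q _
  rw [pd1_gc, pd2_gc]
  have h1 : pd1 (fun p => 2 * TC p) q = 2 * TC (1, 0) := by
    rw [Aux.pd1, (TC.hasFDerivAt.const_mul (2 : ℂ)).fderiv]; rfl
  have h2 : pd2 (fun p => (2 * Complex.I) * TC p) q = (2 * Complex.I) * TC (0, 1) := by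
    rw [Aux.pd2, (TC.hasFDerivAt.const_mul ((2 : ℂ) * Complex.I)).fderiv]; rfl
  rw [h1, h2, TC_10, TC_01]
  simp [Complex.I_mul_I]
  ring_nf
  simp [Complex.I_sq]

lemma lapF_lapF_gc {x : E 4} (hx : x ∈ Ω) :
    lapF (fun y => lapF (fun z => TC (Φ z) * TC (Φ z)) y) x = 0 :=
  lapF_comp_sq good_gc harm_gc hx (Set.mem_univ _)

/-! ### transfer from `E 2` -/

def T2 : ℝ × ℝ →L[ℝ] E 2 :=
  (ContinuousLinearMap.fst ℝ ℝ ℝ).smulRight (el 2 0)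
    + (ContinuousLinearMap.snd ℝ ℝ ℝ).smulRight (el 2 1)

lemma T2_apply_coord (p : ℝ × ℝ) (i : Fin 2) :
    T2 p i = p.1 • el 2 0 i + p.2 • el 2 1 i := rfl

lemma T2_10 : T2 ((1 : ℝ), (0 : ℝ)) = EuclideanSpace.single (0 : Fin 2) (1 : ℝ) := by
  ext i
  rw [T2_apply_coord]
  simp [el]

lemma T2_01 : T2 ((0 : ℝ), (1 : ℝ)) = EuclideanSpace.single (1 : Fin 2) (1 : ℝ) := by
  ext i
  rw [T2_apply_coord]
  simp [el]

lemma T2_coord0 (p : ℝ × ℝ) : T2 p 0 = p.1 := by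
  rw [T2_apply_coord]; simp [el_apply]

lemma T2_coord1 (p : ℝ × ℝ) : T2 p 1 = p.2 := by
  rw [T2_apply_coord]; simp [el_apply]

section Transfer

variable {f : E 2 → ℝ} {V : Set (E 2)} (hV : IsOpen V) (hf : ContDiffOn ℝ (⊤ : ℕ∞) f V)

lemma good_transfer (hV : IsOpen V) (hf : ContDiffOn ℝ (⊤ : ℕ∞) f V) :
    Good (f ∘ T2) (T2 ⁻¹' V) :=
  ⟨hV.preimage T2.continuous, hf.comp (T2.contDiff.contDiffOn) (Set.mapsTo_preimage _ _)⟩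

lemma pd_transfer (hV : IsOpen V) (hf : ContDiffOn ℝ (⊤ : ℕ∞) f V)
    (hharm : ∀ z ∈ V, (∑ i : Fin 2,
      fderiv ℝ (fun y => fderiv ℝ f y (EuclideanSpace.single i 1)) z
        (EuclideanSpace.single i 1)) = 0) :
    ∀ q ∈ T2 ⁻¹' V, pd1 (pd1 (f ∘ T2)) q + pd2 (pd2 (f ∘ T2)) q = 0 := by
  intro q hq
  have hW : IsOpen (T2 ⁻¹' V) := hV.preimage T2.continuous
  have hdf : ∀ z ∈ V, DifferentiableAt ℝ f z := fun z hz =>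
    (hf.contDiffAt (hV.mem_nhds hz)).differentiableAt (by simp)
  set B0 : E 2 → ℝ := fun z => fderiv ℝ f z (EuclideanSpace.single (0 : Fin 2) 1) with hB0
  set B1 : E 2 → ℝ := fun z => fderiv ℝ f z (EuclideanSpace.single (1 : Fin 2) 1) with hB1
  have hBdiff : ∀ (v : E 2), ∀ z ∈ V,
      DifferentiableAt ℝ (fun w => fderiv ℝ f w v) z := by
    intro v z hz
    have h1 : ContDiffAt ℝ (⊤ : ℕ∞) (fderiv ℝ f) z := by
      have := (hf.fderiv_of_isOpen hV (by simp : ((⊤ : ℕ∞) : WithTop ℕ∞) + 1 ≤ ((⊤ : ℕ∞) : WithTop ℕ∞)))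
      exact this.contDiffAt (hV.mem_nhds hz)
    exact (h1.clm_apply contDiffAt_const).differentiableAt (by simp)
  have hpd1 : Set.EqOn (pd1 (f ∘ T2)) (B0 ∘ T2) (T2 ⁻¹' V) := by
    intro w hw
    show fderiv ℝ (f ∘ T2) w (1, 0) = B0 (T2 w)
    rw [fderiv_comp w (hdf _ hw) T2.differentiableAt, T2.fderiv,
      ContinuousLinearMap.comp_apply, T2_10]
  have hpd2 : Set.EqOn (pd2 (f ∘ T2)) (B1 ∘ T2) (T2 ⁻¹' V) := by
    intro w hw
    show fderiv ℝ (f ∘ T2) w (0, 1) = B1 (T2 w)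
    rw [fderiv_comp w (hdf _ hw) T2.differentiableAt, T2.fderiv,
      ContinuousLinearMap.comp_apply, T2_01]
  have h11 : pd1 (pd1 (f ∘ T2)) q
      = fderiv ℝ B0 (T2 q) (EuclideanSpace.single (0 : Fin 2) 1) := by
    rw [pd1_congr hW hq hpd1, Aux.pd1,
      fderiv_comp q (hBdiff _ _ hq) T2.differentiableAt, T2.fderiv,
      ContinuousLinearMap.comp_apply, T2_10]
  have h22 : pd2 (pd2 (f ∘ T2)) q
      = fderiv ℝ B1 (T2 q) (EuclideanSpace.single (1 : Fin 2) 1) := by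
    rw [pd2_congr hW hq hpd2, Aux.pd2,
      fderiv_comp q (hBdiff _ _ hq) T2.differentiableAt, T2.fderiv,
      ContinuousLinearMap.comp_apply, T2_01]
  rw [h11, h22]
  have := hharm (T2 q) hq
  rwa [Fin.sum_univ_two] at this

end Transfer

/-! ### gradients -/

def Grr (x : E 4) : E 4 := (rr x)⁻¹ • (x 0 • el 4 0 + x 1 • el 4 1 + x 2 • el 4 2)

lemma Grr_coord (x : E 4) (i : Fin 4) :
    Grr x i = (rr x)⁻¹ * (x 0 * el 4 0 i + x 1 * el 4 1 i + x 2 * el 4 2 i) := by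
  simp [Grr, mul_add]

lemma Grr_0 (x : E 4) : Grr x 0 = (rr x)⁻¹ * x 0 := by rw [Grr_coord]; simp [el_apply]
lemma Grr_1 (x : E 4) : Grr x 1 = (rr x)⁻¹ * x 1 := by rw [Grr_coord]; simp [el_apply]
lemma Grr_2 (x : E 4) : Grr x 2 = (rr x)⁻¹ * x 2 := by rw [Grr_coord]; simp [el_apply]
lemma Grr_3 (x : E 4) : Grr x 3 = 0 := by rw [Grr_coord]; simp [el_apply]

lemma hasGradientAt_rr {x : E 4} (hx : x ∈ Ω) : HasGradientAt rr (Grr x) x := by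
  rw [hasGradientAt_iff_hasFDerivAt]
  have heq : InnerProductSpace.toDual ℝ (E 4) (Grr x) = Dr x := by
    refine ContinuousLinearMap.ext fun v => ?_
    rw [InnerProductSpace.toDual_apply_apply, Dr_apply]
    simp only [PiLp.inner_apply, RCLike.inner_apply, conj_trivial]
    rw [Fin.sum_univ_four, Grr_0, Grr_1, Grr_2, Grr_3]
    ring
  rw [heq]
  exact hasFDerivAt_rr hx

lemma norm_Grr {x : E 4} (hx : x ∈ Ω) : ‖Grr x‖ = 1 := by
  rw [EuclideanSpace.norm_eq]
  rw [Fin.sum_univ_four, Grr_0, Grr_1, Grr_2, Grr_3]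
  have hq : x 0 ^ 2 + x 1 ^ 2 + x 2 ^ 2 = rr x ^ 2 := by rw [rr_sq]; rfl
  have hr := rr_ne hx
  have : ‖(rr x)⁻¹ * x 0‖ ^ 2 + ‖(rr x)⁻¹ * x 1‖ ^ 2 + ‖(rr x)⁻¹ * x 2‖ ^ 2 + ‖(0:ℝ)‖ ^ 2
      = 1 := by
    simp only [Real.norm_eq_abs, sq_abs, norm_zero]
    field_simp
    linear_combination hq
  rw [this, Real.sqrt_one]

lemma hasGradientAt_x3 (x : E 4) : HasGradientAt (fun y : E 4 => y 3) (el 4 3) x := by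
  rw [hasGradientAt_iff_hasFDerivAt]
  have heq : InnerProductSpace.toDual ℝ (E 4) (el 4 3) = (pj 3 : E 4 →L[ℝ] ℝ) := by
    refine ContinuousLinearMap.ext fun v => ?_
    rw [InnerProductSpace.toDual_apply_apply]
    simp only [PiLp.inner_apply, RCLike.inner_apply, conj_trivial]
    rw [Fin.sum_univ_four]
    simp [el_apply]
  rw [heq]
  exact (pj 3).hasFDerivAt

lemma norm_el3 : ‖el 4 3‖ = 1 := by
  rw [el, EuclideanSpace.norm_single, norm_one]

lemma inner_Grr_el3 (x : E 4) : ⟪Grr x, el 4 3⟫ = 0 := by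
  simp only [PiLp.inner_apply, RCLike.inner_apply, conj_trivial]
  rw [Fin.sum_univ_four, Grr_3]
  simp [el_apply]

/-! ### membership and smoothness glue -/

lemma mem_Omega_iff (x : E 4) : x ∈ Ω ↔ ¬(x 0 = 0 ∧ x 1 = 0 ∧ x 2 = 0) := by
  constructor
  · rintro hx ⟨h0, h1, h2⟩
    exact hx (by simp [qq, h0, h1, h2])
  · intro hx hq
    have hq' : qq x = 0 := hq
    have h0 : x 0 = 0 := by
      have : x 0 ^ 2 = 0 := by
        unfold qq at hq'; nlinarith [sq_nonneg (x 0), sq_nonneg (x 1), sq_nonneg (x 2)]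
      exact pow_eq_zero_iff (by norm_num) |>.mp this
    have h1 : x 1 = 0 := by
      have : x 1 ^ 2 = 0 := by
        unfold qq at hq'; nlinarith [sq_nonneg (x 0), sq_nonneg (x 1), sq_nonneg (x 2)]
      exact pow_eq_zero_iff (by norm_num) |>.mp this
    have h2 : x 2 = 0 := by
      have : x 2 ^ 2 = 0 := by
        unfold qq at hq'; nlinarith [sq_nonneg (x 0), sq_nonneg (x 1), sq_nonneg (x 2)]
      exact pow_eq_zero_iff (by norm_num) |>.mp this
    exact hx ⟨h0, h1, h2⟩

lemma contDiff_qq : ContDiff ℝ (⊤ : ℕ∞) qq := by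
  have h : ∀ i : Fin 4, ContDiff ℝ (⊤ : ℕ∞) (fun y : E 4 => y i ^ 2) := fun i =>
    (pj i).contDiff.pow 2
  exact ((h 0).add (h 1)).add (h 2)

lemma contDiffOn_rr : ContDiffOn ℝ (⊤ : ℕ∞) rr Ω := by
  intro y hy
  exact ((Real.contDiffAt_sqrt (qq_pos hy).ne').comp y contDiff_qq.contDiffAt).contDiffWithinAt

lemma contDiffOn_Φ : ContDiffOn ℝ (⊤ : ℕ∞) Φ Ω :=
  contDiffOn_rr.prodMk ((pj 3).contDiff.contDiffOn)

end Aux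

/-- the map `φ(x) = (√(x₁²+x₂²+x₃²), x₄)` on
`M = ℝ⁴ \ ({0} × ℝ)` is a Riemannian submersion, a non-harmonic biharmonic map whose
square `(φ¹ + iφ²)²` is also biharmonic, hence a generalized harmonic morphism which
is not a harmonic morphism. -/
theorem stmt_19 (M : Set (E 4))
    (hM : M = {x : E 4 | ¬(x 0 = 0 ∧ x 1 = 0 ∧ x 2 = 0)})
    (φ : E 4 → E 2)
    (hφ0 : ∀ x : E 4, φ x 0 = Real.sqrt ((x 0) ^ 2 + (x 1) ^ 2 + (x 2) ^ 2))
    (hφ1 : ∀ x : E 4, φ x 1 = x 3) :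
    -- (a) φ is a Riemannian submersion
    (∀ x ∈ M,
      ‖gradient (fun y => φ y 0) x‖ = 1 ∧
      ‖gradient (fun y => φ y 1) x‖ = 1 ∧
      ⟪gradient (fun y => φ y 0) x, gradient (fun y => φ y 1) x⟫ = 0) ∧
    -- (b) φ is a non-harmonic biharmonic map
    (∀ x ∈ M,
      lap (fun y => φ y 0) x = 2 / Real.sqrt ((x 0) ^ 2 + (x 1) ^ 2 + (x 2) ^ 2) ∧
      lap (fun y => φ y 0) x ≠ 0 ∧
      lap (lap (fun y => φ y 0)) x = 0 ∧
      lap (fun y => φ y 1) x = 0 ∧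
      lap (lap (fun y => φ y 1)) x = 0) ∧
    -- (c) the square map (φ¹ + iφ²)² is biharmonic
    (∀ x ∈ M,
      lapC (lapC (fun y => ((φ y 0 : ℂ) + Complex.I * (φ y 1 : ℂ)) ^ 2)) x = 0) ∧
    -- (d) φ is a generalized harmonic morphism that is not a harmonic morphism
    (IsGHM φ M ∧ ¬ IsHM φ M) := by
  have hMΩ : M = Aux.Ω := by
    rw [hM]; ext x; simp only [Set.mem_setOf_eq]
    exact (Aux.mem_Omega_iff x).symm
  have hφ0' : (fun y => φ y 0) = Aux.rr := funext fun y => (hφ0 y).trans rfl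
  have hφ1' : (fun y => φ y 1) = (fun y : E 4 => y 3) := funext hφ1
  have hφT : ∀ y, φ y = Aux.T2 (Aux.Φ y) := by
    intro y
    ext i
    fin_cases i
    · show φ y 0 = Aux.T2 (Aux.Φ y) 0
      rw [Aux.T2_coord0]; exact hφ0 y
    · show φ y 1 = Aux.T2 (Aux.Φ y) 1
      rw [Aux.T2_coord1]; exact hφ1 y
  refine ⟨?_, ?_, ?_, ?_, ?_⟩
  · -- (a)
    intro x hx
    have hxΩ : x ∈ Aux.Ω := hMΩ ▸ hx
    refine ⟨?_, ?_, ?_⟩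
    · rw [hφ0', (Aux.hasGradientAt_rr hxΩ).gradient]
      exact Aux.norm_Grr hxΩ
    · rw [hφ1', (Aux.hasGradientAt_x3 x).gradient]
      exact Aux.norm_el3
    · rw [hφ0', hφ1', (Aux.hasGradientAt_rr hxΩ).gradient,
        (Aux.hasGradientAt_x3 x).gradient]
      exact Aux.inner_Grr_el3 x
  · -- (b)
    intro x hx
    have hxΩ : x ∈ Aux.Ω := hMΩ ▸ hx
    have hlapr : lap Aux.rr x = 2 * (Aux.rr x)⁻¹ := Aux.lapF_rr hxΩ
    have hrpos : (0:ℝ) < Aux.rr x := Aux.rr_pos hxΩ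
    refine ⟨?_, ?_, ?_, ?_, ?_⟩
    · rw [hφ0', hlapr, div_eq_mul_inv]; rfl
    · rw [hφ0', hlapr]
      positivity
    · rw [hφ0']
      exact Aux.lapF_lapF_rr hxΩ
    · rw [hφ1']
      exact Aux.lapF_x3 hxΩ
    · rw [hφ1']
      exact Aux.lapF_lapF_x3 hxΩ
  · -- (c)
    intro x hx
    have hxΩ : x ∈ Aux.Ω := hMΩ ▸ hx
    have hfun : (fun y => ((φ y 0 : ℂ) + Complex.I * (φ y 1 : ℂ)) ^ 2)
        = fun y => Aux.TC (Aux.Φ y) * Aux.TC (Aux.Φ y) := by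
      funext y
      rw [hφ0 y, hφ1 y, Aux.TC_apply]
      have h1 : Real.sqrt ((y 0) ^ 2 + (y 1) ^ 2 + (y 2) ^ 2) = (Aux.Φ y).1 := rfl
      have h2 : y 3 = (Aux.Φ y).2 := rfl
      rw [h1, h2, Complex.real_smul, pow_two]
      ring
    rw [hfun]
    exact Aux.lapF_lapF_gc hxΩ
  · -- IsGHM
    intro V hV f hf
    obtain ⟨hfs, hfl⟩ := hf
    have hGood := Aux.good_transfer hV hfs
    have hharm := Aux.pd_transfer hV hfs (fun z hz => hfl z hz)
    have hsub : M ∩ φ ⁻¹' V ⊆ Aux.Ω := by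
      rw [hMΩ]; exact Set.inter_subset_left
    have hmem : ∀ x ∈ M ∩ φ ⁻¹' V, Aux.Φ x ∈ Aux.T2 ⁻¹' V := by
      intro x hx
      have : Aux.T2 (Aux.Φ x) ∈ V := by rw [← hφT x]; exact hx.2
      exact this
    have hcomp : f ∘ φ = fun y => (f ∘ Aux.T2) (Aux.Φ y) :=
      funext fun y => by simp only [Function.comp_apply]; rw [hφT y]
    constructor
    · rw [hcomp]
      exact hGood.2.comp (Aux.contDiffOn_Φ.mono hsub) (fun x hx => hmem x hx)
    · intro x hx
      rw [hcomp]
      exact Aux.lapF_comp_sq hGood hharm (hsub hx) (hmem x hx)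
  · -- not IsHM
    intro hHM
    have hf : HarmonicOn (fun z : E 2 => z 0) Set.univ := by
      constructor
      · exact (EuclideanSpace.proj (0 : Fin 2) : E 2 →L[ℝ] ℝ).contDiff.contDiffOn
      · intro z _
        have hconst : ∀ v : E 2,
            (fun y : E 2 => fderiv ℝ (fun z : E 2 => z 0) y v) = fun _ => v 0 := by
          intro v
          funext y
          have hfd : HasFDerivAt (fun z : E 2 => z 0)
              (EuclideanSpace.proj (0 : Fin 2) : E 2 →L[ℝ] ℝ) y :=
            (EuclideanSpace.proj (0 : Fin 2) : E 2 →L[ℝ] ℝ).hasFDerivAt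
          rw [hfd.fderiv]
          rfl
        show (∑ i : Fin 2, fderiv ℝ
            (fun y => fderiv ℝ (fun z : E 2 => z 0) y (EuclideanSpace.single i 1)) z
            (EuclideanSpace.single i 1)) = 0
        rw [Fin.sum_univ_two, hconst, hconst, fderiv_fun_const]
        simp
    obtain ⟨-, hlap⟩ := hHM Set.univ isOpen_univ (fun z : E 2 => z 0) hf
    set x₀ : E 4 := EuclideanSpace.single (0 : Fin 4) 1 with hx₀def
    have hx₀0 : x₀ 0 = 1 := by rw [hx₀def]; simp [EuclideanSpace.single_apply]
    have hx₀M : x₀ ∈ M := by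
      rw [hM]
      intro h
      rw [hx₀0] at h
      exact one_ne_zero h.1
    have hx₀Ω : x₀ ∈ Aux.Ω := hMΩ ▸ hx₀M
    have h2 := hlap x₀ ⟨hx₀M, Set.mem_univ _⟩
    have h3 : (fun z : E 2 => z 0) ∘ φ = Aux.rr := funext fun y => (hφ0 y).trans rfl
    rw [h3] at h2
    have h4 : lap Aux.rr x₀ = 2 * (Aux.rr x₀)⁻¹ := Aux.lapF_rr hx₀Ω
    rw [h4] at h2
    have hrr1 : Aux.rr x₀ = 1 := by
      have hq1 : Aux.qq x₀ = 1 := by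
        unfold Aux.qq
        rw [hx₀def]
        simp [EuclideanSpace.single_apply]
      unfold Aux.rr
      rw [hq1, Real.sqrt_one]
    rw [hrr1] at h2
    norm_num at h2
end
end
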